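/- arXiv:2010.00701 — 4 statements merged into one kernel-verified Lean document; each statement's English description precedes it below -/
import Mathlib

section
/- Let X be a real random variable with E|X| < ∞. For every ε > 0 and δ > 0 there exists p₀ > 0 (depending only on the distribution of X, ε and δ) with the following property: for every n ≥ 1, every probability space, every family X₁,…,Xₙ of real random variables on it each having the same distribution as X, and every set S ⊆ {1,…,n} × {1,…,n} of pairs with #S ≤ p₀·n² such that Xᵢ and Xⱼ are independent whenever (i,j) ∉ S, the average X̄ = (1/n) Σᵢ Xᵢ satisfies P(|X̄ − E X| ≥ ε) ≤ δ. -/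
open MeasureTheory ProbabilityTheory Filter Finset

/-!
Truncate at a level `M`: `Yᵢ = f (Yᵢ) + (Yᵢ - f (Yᵢ))` with `f` the truncation at `M`. The
truncated parts have variance at most `M²` and are uncorrelated off `S`, so the variance of their
sum is at most `#S M² ≤ p₀ n² M²` and Chebyshev's inequality controls their average. The remainders
have mean absolute value `E |X - f X|`, which is small for large `M` by dominated convergence, so
Markov's inequality controls their average uniformly in `n` and in the dependence structure.
-/

lemma tendsto_integral_abs_sub_truncation {α : Type*} [MeasurableSpace α] {μ : Measure α}
    {f : α → ℝ} (hf : Integrable f μ) :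
    Tendsto (fun A ↦ ∫ x, |f x - truncation f A x| ∂μ) atTop (nhds 0) := by
  have hbound : ∀ A x, |f x - truncation f A x| ≤ |f x| := fun A x ↦ by
    by_cases hx : f x ∈ Set.Ioc (-A) A <;> simp [truncation, hx]
  simpa using tendsto_integral_filter_of_dominated_convergence (f := 0) (fun x ↦ |f x|)
    (Eventually.of_forall fun A ↦ (hf.1.sub hf.1.truncation).norm)
    (Eventually.of_forall fun A ↦ ae_of_all _ fun x ↦ by simpa using hbound A x) hf.abs
    (ae_of_all _ fun x ↦ (tendsto_const_nhds (x := 0)).congr' <| (eventually_gt_atTop |f x|).mono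
      fun A hA ↦ by simp [truncation_eq_self hA])

section Moments

variable {Ω ι : Type*} [MeasurableSpace Ω] {P : Measure Ω} [Fintype ι]

lemma measureReal_abs_sum_ge_le {R : ι → Ω → ℝ} (hR : ∀ i, Integrable (R i) P) {c : ℝ}
    (hc : 0 < c) : P.real {ω | c ≤ |∑ i, R i ω|} ≤ (∑ i, ∫ ω, |R i ω| ∂P) / c := by
  have hsum : Integrable (fun ω ↦ ∑ i, R i ω) P := integrable_finsetSum _ fun i _ ↦ hR i
  rw [le_div_iff₀' hc]
  calc c * P.real {ω | c ≤ |∑ i, R i ω|}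
      ≤ ∫ ω, |∑ i, R i ω| ∂P :=
        mul_meas_ge_le_integral_of_nonneg (ae_of_all _ fun _ ↦ abs_nonneg _) hsum.abs c
    _ ≤ ∫ ω, ∑ i, |R i ω| ∂P := integral_mono hsum.abs
        (integrable_finsetSum _ fun i _ ↦ (hR i).abs) fun ω ↦ abs_sum_le_sum_abs _ _
    _ = ∑ i, ∫ ω, |R i ω| ∂P := integral_finsetSum _ fun i _ ↦ (hR i).abs

variable [IsFiniteMeasure P]

lemma abs_covariance_le_of_variance_le {X Y : Ω → ℝ} (hX : MemLp X 2 P) (hY : MemLp Y 2 P)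
    {v : ℝ} (hXv : Var[X; P] ≤ v) (hYv : Var[Y; P] ≤ v) : |cov[X, Y; P]| ≤ v := by
  have hX' : MemLp (fun ω ↦ X ω - P[X]) 2 P := hX.sub (memLp_const _)
  have hY' : MemLp (fun ω ↦ Y ω - P[Y]) 2 P := hY.sub (memLp_const _)
  calc |cov[X, Y; P]| ≤ ∫ ω, |(X ω - P[X]) * (Y ω - P[Y])| ∂P := abs_integral_le_integral_abs
    _ ≤ ∫ ω, ((X ω - P[X]) ^ 2 + (Y ω - P[Y]) ^ 2) / 2 ∂P := by
        refine integral_mono_of_nonneg (ae_of_all _ fun _ ↦ abs_nonneg _)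
          ((hX'.integrable_sq.add hY'.integrable_sq).div_const 2) (ae_of_all _ fun ω ↦ ?_)
        dsimp only
        rw [abs_mul]
        nlinarith [two_mul_le_add_sq |X ω - P[X]| |Y ω - P[Y]|, sq_abs (X ω - P[X]),
          sq_abs (Y ω - P[Y])]
    _ = (Var[X; P] + Var[Y; P]) / 2 := by
        rw [integral_div, integral_add hX'.integrable_sq hY'.integrable_sq,
          variance_eq_integral hX.aemeasurable, variance_eq_integral hY.aemeasurable]
    _ ≤ v := by linarith

variable {X : ι → Ω → ℝ} {v : ℝ} {S : Finset (ι × ι)}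

lemma variance_sum_le_card_mul (hX : ∀ i, MemLp (X i) 2 P)
    (hv : ∀ i, Var[X i; P] ≤ v) (hS : ∀ i j, (i, j) ∉ S → X i ⟂ᵢ[P] X j) :
    Var[fun ω ↦ ∑ i, X i ω; P] ≤ #S * v := by
  have hcov : ∀ p ∉ S, cov[X p.1, X p.2; P] = 0 := fun p hp ↦
    (hS p.1 p.2 hp).covariance_eq_zero (hX _) (hX _)
  rw [variance_fun_sum hX, ← Fintype.sum_prod_type',
    ← sum_subset (subset_univ S) fun p _ hp ↦ hcov p hp]
  calc ∑ p ∈ S, cov[X p.1, X p.2; P]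
      ≤ ∑ _p ∈ S, v := sum_le_sum fun p _ ↦
        (le_abs_self _).trans (abs_covariance_le_of_variance_le (hX _) (hX _) (hv _) (hv _))
    _ = #S * v := by rw [sum_const, nsmul_eq_mul]

lemma measureReal_abs_sum_sub_ge_le (hX : ∀ i, MemLp (X i) 2 P)
    (hv : ∀ i, Var[X i; P] ≤ v) (hS : ∀ i j, (i, j) ∉ S → X i ⟂ᵢ[P] X j) {c : ℝ} (hc : 0 < c) :
    P.real {ω | c ≤ |∑ i, X i ω - ∑ i, P[X i]|} ≤ #S * v / c ^ 2 := by
  have hsum : MemLp (fun ω ↦ ∑ i, X i ω) 2 P := memLp_finsetSum _ fun i _ ↦ hX i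
  have hchebyshev := meas_ge_le_variance_div_sq hsum hc
  rw [integral_finsetSum _ fun i _ ↦ (hX i).integrable one_le_two] at hchebyshev
  refine (ENNReal.toReal_le_of_le_ofReal
    (div_nonneg (variance_nonneg _ _) (sq_nonneg c)) hchebyshev).trans ?_
  gcongr
  exact variance_sum_le_card_mul hX hv hS

end Moments

section IdenticallyDistributed

variable {Ω : Type*} [MeasurableSpace Ω] {P : Measure Ω} {μ : Measure ℝ} {n : ℕ}
  {Y : Fin n → Ω → ℝ}

lemma measureReal_abs_sum_comp_ge_le (hY : ∀ i, HasLaw (Y i) μ P) {g : ℝ → ℝ}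
    (hg : Integrable g μ) {c : ℝ} (hc : 0 < c) :
    P.real {ω | c ≤ |∑ i, g (Y i ω)|} ≤ n * (∫ x, |g x| ∂μ) / c := by
  have hgY : ∀ i, Integrable (g ∘ Y i) P := fun i ↦
    ((hY i).map_eq ▸ hg).comp_aemeasurable (hY i).aemeasurable
  have habs : ∀ i, ∫ ω, |g (Y i ω)| ∂P = ∫ x, |g x| ∂μ := fun i ↦
    (hY i).integral_comp (f := fun x ↦ |g x|) hg.abs.1
  simpa [habs] using measureReal_abs_sum_ge_le hgY hc

variable [IsProbabilityMeasure P] {S : Finset (Fin n × Fin n)}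

lemma measureReal_abs_sum_comp_sub_ge_le (hY : ∀ i, HasLaw (Y i) μ P)
    (hS : ∀ i j, (i, j) ∉ S → Y i ⟂ᵢ[P] Y j) {f : ℝ → ℝ} (hf : Measurable f) {M : ℝ}
    (hfM : ∀ x, |f x| ≤ M) {c : ℝ} (hc : 0 < c) :
    P.real {ω | c ≤ |∑ i, f (Y i ω) - n * ∫ x, f x ∂μ|} ≤ #S * M ^ 2 / c ^ 2 := by
  have hfY : ∀ i, AEMeasurable (f ∘ Y i) P := fun i ↦ hf.comp_aemeasurable (hY i).aemeasurable
  have hmemLp : ∀ i, MemLp (f ∘ Y i) 2 P := fun i ↦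
    MemLp.of_bound (hfY i).aestronglyMeasurable M (ae_of_all _ fun ω ↦ hfM _)
  have hvar : ∀ i, Var[f ∘ Y i; P] ≤ M ^ 2 := fun i ↦ by
    convert variance_le_sq_of_bounded (X := f ∘ Y i)
      (ae_of_all _ fun ω ↦ abs_le.1 (hfM (Y i ω))) (hfY i) using 1
    ring
  have hmean : ∀ i, ∫ ω, f (Y i ω) ∂P = ∫ x, f x ∂μ := fun i ↦
    (hY i).integral_comp hf.aestronglyMeasurable
  simpa [hmean] using measureReal_abs_sum_sub_ge_le hmemLp hvar
    (fun i j hij ↦ (hS i j hij).comp hf hf) hc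

theorem measureReal_abs_average_sub_ge_le (hμ : Integrable id μ) (hn : 1 ≤ n)
    (hY : ∀ i, HasLaw (Y i) μ P) (hS : ∀ i j, (i, j) ∉ S → Y i ⟂ᵢ[P] Y j) {f : ℝ → ℝ}
    (hf : Measurable f) {M : ℝ} (hfM : ∀ x, |f x| ≤ M) {ε : ℝ} (hε : 0 < ε)
    (hfε : ∫ x, |x - f x| ∂μ ≤ ε / 4) :
    P.real {ω | ε ≤ |(n : ℝ)⁻¹ * ∑ i, Y i ω - ∫ x, x ∂μ|}
      ≤ 4 * #S * M ^ 2 / (n * ε) ^ 2 + 4 * (∫ x, |x - f x| ∂μ) / ε := by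
  have : IsProbabilityMeasure μ := (hY ⟨0, hn⟩).isProbabilityMeasure_iff.1 ‹_›
  have hn₀ : (0 : ℝ) < n := by exact_mod_cast hn
  have hfμ : Integrable f μ := .of_bound hf.aestronglyMeasurable M (ae_of_all _ hfM)
  have hrμ : Integrable (fun x ↦ x - f x) μ := hμ.sub hfμ
  have hbias : |∫ x, f x ∂μ - ∫ x, x ∂μ| ≤ ε / 4 := by
    rw [abs_sub_comm, ← integral_sub (f := fun x ↦ x) hμ hfμ]
    exact abs_integral_le_integral_abs.trans hfε
  set A := {ω | n * ε / 2 ≤ |∑ i, f (Y i ω) - n * ∫ x, f x ∂μ|}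
  set B := {ω | n * ε / 4 ≤ |∑ i, (Y i ω - f (Y i ω))|}
  have hsub : {ω | ε ≤ |(n : ℝ)⁻¹ * ∑ i, Y i ω - ∫ x, x ∂μ|} ⊆ A ∪ B := by
    intro ω hω
    by_contra hAB
    simp only [A, B, Set.mem_union, Set.mem_ofPred_eq, not_or, not_le] at hω hAB
    set a := ∑ i, f (Y i ω) - n * ∫ x, f x ∂μ
    set b := ∑ i, (Y i ω - f (Y i ω))
    have hsplit : (n : ℝ)⁻¹ * ∑ i, Y i ω - ∫ x, x ∂μ
        = (n : ℝ)⁻¹ * (a + b) + (∫ x, f x ∂μ - ∫ x, x ∂μ) := by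
      simp only [a, b, sum_sub_distrib]
      field_simp
      ring
    have hfluct : |(n : ℝ)⁻¹ * (a + b)| < 3 * ε / 4 := by
      rw [abs_mul, abs_inv, Nat.abs_cast, inv_mul_lt_iff₀ hn₀]
      linarith [abs_add_le a b]
    linarith [abs_add_le ((n : ℝ)⁻¹ * (a + b)) (∫ x, f x ∂μ - ∫ x, x ∂μ), hsplit ▸ hω]
  calc P.real {ω | ε ≤ |(n : ℝ)⁻¹ * ∑ i, Y i ω - ∫ x, x ∂μ|}
      ≤ P.real A + P.real B := (measureReal_mono hsub).trans (measureReal_union_le A B)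
    _ ≤ #S * M ^ 2 / (n * ε / 2) ^ 2 + n * (∫ x, |x - f x| ∂μ) / (n * ε / 4) :=
        add_le_add (measureReal_abs_sum_comp_sub_ge_le hY hS hf hfM (by positivity))
          (measureReal_abs_sum_comp_ge_le hY hrμ (by positivity))
    _ = 4 * #S * M ^ 2 / (n * ε) ^ 2 + 4 * (∫ x, |x - f x| ∂μ) / ε := by
        field_simp
        ring

end IdenticallyDistributed

theorem wlln_mostly_independent_general
    {Ω₀ : Type*} [MeasurableSpace Ω₀] (P₀ : Measure Ω₀)
    (X : Ω₀ → ℝ) (hXint : Integrable X P₀)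
    (ε δ : ℝ) (hε : 0 < ε) (hδ : 0 < δ) :
    ∃ p₀ : ℝ, 0 < p₀ ∧
      ∀ (n : ℕ), 1 ≤ n →
      ∀ (Ω : Type*) (_ : MeasurableSpace Ω) (P : Measure Ω), IsProbabilityMeasure P →
      ∀ (Y : Fin n → Ω → ℝ), (∀ i, Measurable (Y i)) →
      (∀ i, P.map (Y i) = P₀.map X) →
      ∀ S : Finset (Fin n × Fin n), (S.card : ℝ) ≤ p₀ * (n : ℝ) ^ 2 →
      (∀ i j, (i, j) ∉ S → IndepFun (Y i) (Y j) P) →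
      (P {ω | ε ≤ |(n : ℝ)⁻¹ * (∑ i, Y i ω) - ∫ x, X x ∂P₀|}).toReal ≤ δ := by
  set μ := P₀.map X
  have hμ : Integrable id μ :=
    (integrable_map_measure aestronglyMeasurable_id hXint.aemeasurable).2 hXint
  have hmean : ∫ x, X x ∂P₀ = ∫ x, x ∂μ := HasLaw.integral_eq ⟨hXint.aemeasurable, rfl⟩
  obtain ⟨M, hη, hM⟩ :
      ∃ M : ℝ, ∫ x, |x - truncation id M x| ∂μ < min (ε / 4) (ε * δ / 8) ∧ 0 < M :=
    (((tendsto_integral_abs_sub_truncation hμ).eventually_lt_const (by positivity)).and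
      (eventually_gt_atTop 0)).exists
  refine ⟨δ * ε ^ 2 / (8 * M ^ 2), by positivity, ?_⟩
  intro n hn Ω _ P _ Y hY hmap S hS hindep
  have hbound := measureReal_abs_average_sub_ge_le hμ hn
    (fun i ↦ ⟨(hY i).aemeasurable, hmap i⟩) hindep (f := truncation id M)
    (measurable_id.indicator measurableSet_Ioc)
    (fun x ↦ (abs_truncation_le_bound id M x).trans_eq (abs_of_pos hM))
    hε (hη.le.trans (min_le_left _ _))
  have hdep : 4 * #S * M ^ 2 / (n * ε) ^ 2 ≤ δ / 2 := by
    rw [div_le_iff₀ (by positivity)]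
    calc 4 * #S * M ^ 2 ≤ 4 * (δ * ε ^ 2 / (8 * M ^ 2) * n ^ 2) * M ^ 2 := by gcongr
      _ = δ / 2 * (n * ε) ^ 2 := by field_simp; ring
  have htail : 4 * (∫ x, |x - truncation id M x| ∂μ) / ε ≤ δ / 2 := by
    rw [div_le_iff₀ hε]
    linarith [min_le_right (ε / 4) (ε * δ / 8)]
  rw [hmean]
  exact hbound.trans (by linarith)

/-- **Weak law of large numbers for identically distributed, mostly independent random
variables** (Theorem B.1 of "Minimal area of Finsler disks with minimizing geodesics").

Let `X` be a real random variable with `E|X| < ∞`.  For every `ε > 0` and `δ > 0` there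
exists `p₀ > 0` (depending only on the distribution of `X`, `ε` and `δ`) such that: for
every `n ≥ 1`, every probability space `(Ω, P)`, every family `Y 0, …, Y (n-1)` of real
random variables on it each having the same distribution as `X`, and every set
`S ⊆ Fin n × Fin n` of pairs with `#S ≤ p₀·n²` such that `Y i` and `Y j` are independent
whenever `(i, j) ∉ S`, the average `X̄ = (1/n) ∑ i, Y i` satisfies
`P(|X̄ − E X| ≥ ε) ≤ δ`. -/
theorem wlln_mostly_independent
    {Ω₀ : Type*} [MeasurableSpace Ω₀] (P₀ : Measure Ω₀) [IsProbabilityMeasure P₀]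
    (X : Ω₀ → ℝ) (hXm : Measurable X) (hXint : Integrable X P₀)
    (ε δ : ℝ) (hε : 0 < ε) (hδ : 0 < δ) :
    ∃ p₀ : ℝ, 0 < p₀ ∧
      ∀ (n : ℕ), 1 ≤ n →
      ∀ (Ω : Type*) (_ : MeasurableSpace Ω) (P : Measure Ω), IsProbabilityMeasure P →
      ∀ (Y : Fin n → Ω → ℝ), (∀ i, Measurable (Y i)) →
      (∀ i, P.map (Y i) = P₀.map X) →
      ∀ S : Finset (Fin n × Fin n), (S.card : ℝ) ≤ p₀ * (n : ℝ) ^ 2 →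
      (∀ i j, (i, j) ∉ S → IndepFun (Y i) (Y j) P) →
      (P {ω | ε ≤ |(n : ℝ)⁻¹ * (∑ i, Y i ω) - ∫ x, X x ∂P₀|}).toReal ≤ δ :=
  wlln_mostly_independent_general P₀ X hXint ε δ hε hδ
end

section
/- Let X be a real random variable with E(X²) < ∞ and E(X) = 0. Let X₁,…,Xₙ be real random variables on a probability space, each with the same distribution as X, and let S ⊆ {1,…,n} × {1,…,n} be a set of pairs such that Xᵢ and Xⱼ are independent whenever (i,j) ∉ S. Set p = #S / n² and X̄ = (1/n) Σᵢ Xᵢ. Then E(X̄²) ≤ p · E(X²), and consequently, for every ε > 0, P(|X̄| ≥ ε) ≤ p · E(X²) / ε². -/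
open MeasureTheory ProbabilityTheory

/-- **Second-moment case of the weak law of large numbers for identically distributed,
mostly independent random variables** (from the proof of Theorem B.1 of
"Minimal area of Finsler disks with minimizing geodesics").

Let `X` be a real random variable with `E(X²) < ∞` and `E(X) = 0`.
Let `Y 0, …, Y (n-1)` be real random variables on a probability space `(Ω, P)`,
each with the same distribution as `X`, and let `S` be a set of pairs of indices such
that `Y i` and `Y j` are independent whenever `(i, j) ∉ S`.  Set `p = #S / n²` and let
`X̄ = (1/n) ∑ i, Y i` be the average.  Then `E(X̄²) ≤ p · E(X²)` and, for every `ε > 0`,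
`P(|X̄| ≥ ε) ≤ p · E(X²) / ε²`. -/
theorem second_moment_wlln_mostly_independent
    {Ω₀ : Type*} [MeasurableSpace Ω₀] (P₀ : Measure Ω₀) [IsProbabilityMeasure P₀]
    (X : Ω₀ → ℝ) (hXm : Measurable X)
    (hX2 : Integrable (fun ω => (X ω) ^ 2) P₀)
    (hX0 : (∫ ω, X ω ∂P₀) = 0)
    {Ω : Type*} [MeasurableSpace Ω] (P : Measure Ω) [IsProbabilityMeasure P]
    (n : ℕ) (hn : 0 < n)
    (Y : Fin n → Ω → ℝ) (hYm : ∀ i, Measurable (Y i))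
    (hYdist : ∀ i, P.map (Y i) = P₀.map X)
    (S : Finset (Fin n × Fin n))
    (hindep : ∀ i j, (i, j) ∉ S → IndepFun (Y i) (Y j) P) :
    (∫ ω, ((n : ℝ)⁻¹ * ∑ i, Y i ω) ^ 2 ∂P) ≤
        ((S.card : ℝ) / (n : ℝ) ^ 2) * ∫ ω, (X ω) ^ 2 ∂P₀ ∧
      ∀ ε : ℝ, 0 < ε →
        (P {ω | ε ≤ |(n : ℝ)⁻¹ * ∑ i, Y i ω|}).toReal ≤
          ((S.card : ℝ) / (n : ℝ) ^ 2) * (∫ ω, (X ω) ^ 2 ∂P₀) / ε ^ 2 := by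
  set M : ℝ := ∫ ω, (X ω) ^ 2 ∂P₀ with hM
  have hM0 : 0 ≤ M := integral_nonneg fun ω => sq_nonneg _
  -- squares are integrable with integral M
  have hsq_map : Integrable (fun x : ℝ => x ^ 2) (P₀.map X) := by
    rw [integrable_map_measure (by fun_prop) hXm.aemeasurable]
    exact hX2
  have hYsq : ∀ i, Integrable (fun ω => (Y i ω) ^ 2) P := fun i => by
    have := hsq_map
    rw [← hYdist i, integrable_map_measure (by fun_prop) (hYm i).aemeasurable] at this
    exact this
  have hYsq_int : ∀ i, (∫ ω, (Y i ω) ^ 2 ∂P) = M := fun i => by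
    rw [hM, ← integral_map hXm.aemeasurable (f := fun x : ℝ => x ^ 2) (by fun_prop),
      ← hYdist i, integral_map (hYm i).aemeasurable (by fun_prop)]

  have hYint : ∀ i, Integrable (Y i) P := fun i => by
    refine ((integrable_const (1 : ℝ)).add (hYsq i)).mono (hYm i).aestronglyMeasurable
      (Filter.Eventually.of_forall fun ω => ?_)
    have h1 : |Y i ω| ≤ 1 + (Y i ω) ^ 2 := by nlinarith [abs_nonneg (Y i ω), sq_abs (Y i ω)]
    have h2 : (0 : ℝ) ≤ 1 + (Y i ω) ^ 2 := by positivity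
    simpa [Real.norm_eq_abs, abs_of_nonneg h2] using h1
  have hY0 : ∀ i, (∫ ω, Y i ω ∂P) = 0 := fun i => by
    rw [← integral_map (hYm i).aemeasurable (f := fun x : ℝ => x)
        measurable_id.aestronglyMeasurable, hYdist i,
      integral_map (f := fun x : ℝ => x) hXm.aemeasurable measurable_id.aestronglyMeasurable]
    exact hX0
  -- product integrability
  have hprod : ∀ i j, Integrable (fun ω => Y i ω * Y j ω) P := fun i j => by
    refine ((hYsq i).add (hYsq j)).mono ((hYm i).mul (hYm j)).aestronglyMeasurable
      (Filter.Eventually.of_forall fun ω => ?_)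
    have h1 : |Y i ω| * |Y j ω| ≤ (Y i ω) ^ 2 + (Y j ω) ^ 2 := by
      nlinarith [sq_abs (Y i ω), sq_abs (Y j ω), abs_nonneg (Y i ω), abs_nonneg (Y j ω),
        sq_nonneg (|Y i ω| - |Y j ω|)]
    have h2 : (0 : ℝ) ≤ (Y i ω) ^ 2 + (Y j ω) ^ 2 := by positivity
    simpa [Real.norm_eq_abs, abs_mul, abs_of_nonneg h2] using h1
  have hprod_le : ∀ i j, (∫ ω, Y i ω * Y j ω ∂P) ≤ M := fun i j => by
    have : (∫ ω, Y i ω * Y j ω ∂P) ≤ ∫ ω, ((Y i ω) ^ 2 + (Y j ω) ^ 2) / 2 ∂P := by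
      refine integral_mono (hprod i j) (((hYsq i).add (hYsq j)).div_const 2) fun ω => ?_
      nlinarith [sq_nonneg (Y i ω - Y j ω)]
    rw [integral_div, integral_add (hYsq i) (hYsq j), hYsq_int, hYsq_int] at this
    linarith
  -- expand the square of the sum
  have hexp : (∫ ω, (∑ i, Y i ω) ^ 2 ∂P) =
      ∑ p : Fin n × Fin n, ∫ ω, Y p.1 ω * Y p.2 ω ∂P := by
    rw [← integral_finset_sum _ (fun p _ => hprod p.1 p.2)]
    refine integral_congr_ae (Filter.Eventually.of_forall fun ω => ?_)
    show (∑ i, Y i ω) ^ 2 = ∑ p : Fin n × Fin n, Y p.1 ω * Y p.2 ω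
    rw [sq, Finset.sum_mul_sum, ← Finset.sum_product']
    rfl
  have hsum_le : (∫ ω, (∑ i, Y i ω) ^ 2 ∂P) ≤ S.card * M := by
    rw [hexp, ← Finset.sum_filter_add_sum_filter_not Finset.univ (· ∈ S)]
    have h1 : ∑ p ∈ Finset.univ.filter (· ∈ S), (∫ ω, Y p.1 ω * Y p.2 ω ∂P) ≤
        (Finset.univ.filter (· ∈ S)).card * M := by
      calc _ ≤ ∑ _p ∈ Finset.univ.filter (· ∈ S), M :=
            Finset.sum_le_sum fun p _ => hprod_le p.1 p.2
        _ = _ := by rw [Finset.sum_const, nsmul_eq_mul]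
    have h2 : ∑ p ∈ Finset.univ.filter (¬ · ∈ S), (∫ ω, Y p.1 ω * Y p.2 ω ∂P) = 0 := by
      refine Finset.sum_eq_zero fun p hp => ?_
      have hpS : p ∉ S := by simpa using (Finset.mem_filter.mp hp).2
      have h := (hindep p.1 p.2 hpS).integral_fun_mul_eq_mul_integral (hYm p.1).aestronglyMeasurable
        (hYm p.2).aestronglyMeasurable
      rw [hY0, hY0, mul_zero] at h
      exact h
    have hcard : (Finset.univ.filter (· ∈ S)).card ≤ S.card := by
      apply Finset.card_le_card
      intro p hp
      simpa using (Finset.mem_filter.mp hp).2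
    have : ((Finset.univ.filter (· ∈ S)).card : ℝ) * M ≤ (S.card : ℝ) * M := by
      exact mul_le_mul_of_nonneg_right (by exact_mod_cast hcard) hM0
    linarith
  have hn' : (0 : ℝ) < (n : ℝ) ^ 2 := by positivity
  have key : (∫ ω, ((n : ℝ)⁻¹ * ∑ i, Y i ω) ^ 2 ∂P) ≤ ((S.card : ℝ) / (n : ℝ) ^ 2) * M := by
    have : (∫ ω, ((n : ℝ)⁻¹ * ∑ i, Y i ω) ^ 2 ∂P) =
        ((n : ℝ) ^ 2)⁻¹ * ∫ ω, (∑ i, Y i ω) ^ 2 ∂P := by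
      rw [← integral_const_mul]
      refine integral_congr_ae (Filter.Eventually.of_forall fun ω => ?_)
      show ((n : ℝ)⁻¹ * ∑ i, Y i ω) ^ 2 = ((n : ℝ) ^ 2)⁻¹ * (∑ i, Y i ω) ^ 2
      rw [mul_pow]
      ring
    rw [this, div_eq_mul_inv, mul_comm ((S.card : ℝ)) _, mul_assoc]
    exact mul_le_mul_of_nonneg_left hsum_le (by positivity)
  refine ⟨key, fun ε hε => ?_⟩
  have hXbar_int : Integrable (fun ω => ((n : ℝ)⁻¹ * ∑ i, Y i ω) ^ 2) P := by
    have : Integrable (fun ω => (∑ i, Y i ω) ^ 2) P := by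
      have := integrable_finset_sum (μ := P) Finset.univ (fun (p : Fin n × Fin n) _ => hprod p.1 p.2)
      refine this.congr (Filter.Eventually.of_forall fun ω => ?_)
      show ∑ p : Fin n × Fin n, Y p.1 ω * Y p.2 ω = (∑ i, Y i ω) ^ 2
      rw [sq, Finset.sum_mul_sum, ← Finset.sum_product']
      rfl
    refine (this.const_mul (((n : ℝ)⁻¹) ^ 2)).congr (Filter.Eventually.of_forall fun ω => ?_)
    show ((n : ℝ)⁻¹) ^ 2 * (∑ i, Y i ω) ^ 2 = ((n : ℝ)⁻¹ * ∑ i, Y i ω) ^ 2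
    ring
  have markov := mul_meas_ge_le_integral_of_nonneg
    (Filter.Eventually.of_forall fun ω => sq_nonneg ((n : ℝ)⁻¹ * ∑ i, Y i ω)) hXbar_int (ε ^ 2)
  have hset : {ω | ε ≤ |(n : ℝ)⁻¹ * ∑ i, Y i ω|} = {ω | ε ^ 2 ≤ ((n : ℝ)⁻¹ * ∑ i, Y i ω) ^ 2} := by
    ext ω
    simp only [Set.mem_setOf_eq]
    constructor
    · intro h
      calc ε ^ 2 ≤ |(n : ℝ)⁻¹ * ∑ i, Y i ω| ^ 2 := by
            apply pow_le_pow_left₀ hε.le h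
        _ = _ := sq_abs _
    · intro h
      by_contra hc
      push_neg at hc
      have := pow_lt_pow_left₀ hc (abs_nonneg _) (by norm_num : 2 ≠ 0)
      rw [sq_abs] at this
      linarith
  rw [hset]
  have hε2 : (0 : ℝ) < ε ^ 2 := by positivity
  calc (P {ω | ε ^ 2 ≤ ((n : ℝ)⁻¹ * ∑ i, Y i ω) ^ 2}).toReal
      ≤ (∫ ω, ((n : ℝ)⁻¹ * ∑ i, Y i ω) ^ 2 ∂P) / ε ^ 2 := by
        rw [le_div_iff₀ hε2, mul_comm]
        exact markov
    _ ≤ ((S.card : ℝ) / (n : ℝ) ^ 2) * M / ε ^ 2 := by gcongr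
end

section
/- For every positive integer r, the family of the 3r arcs of the circle ℝ/3rℤ given by the intervals [kr − s, kr + s] for k ∈ {0, 1, 2} and s ∈ {1/2, 3/2, …, r − 1/2} is an r-disk family, and its area equals exactly (3/2)·r². -/
noncomputable section

/-- An arc of the circle `ℝ/cℤ`: the image of a closed interval `[a, b] ⊆ ℝ` with
`0 < b - a < c`. -/
structure Arc (c : ℝ) where
  /-- initial representative -/
  a : ℝ
  /-- terminal representative -/
  b : ℝ
  width_pos : 0 < b - a
  width_lt : b - a < c

namespace Arc

variable {c : ℝ}

/-- The underlying subset of the circle `ℝ/cℤ`. -/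
def toSet (α : Arc c) : Set (AddCircle c) :=
  (fun x : ℝ => (x : AddCircle c)) '' Set.Icc α.a α.b

/-- The interior of an arc: the image of the open interval `(a, b)`. -/
def interiorSet (α : Arc c) : Set (AddCircle c) :=
  (fun x : ℝ => (x : AddCircle c)) '' Set.Ioo α.a α.b

/-- The width `b - a` of an arc. -/
def width (α : Arc c) : ℝ := α.b - α.a

/-- The initial endpoint of an arc. -/
def init (α : Arc c) : AddCircle c := (α.a : AddCircle c)

/-- The terminal endpoint of an arc. -/
def term (α : Arc c) : AddCircle c := (α.b : AddCircle c)

/-- The two endpoints of an arc. -/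
def endpoints (α : Arc c) : Set (AddCircle c) := {α.init, α.term}

/-- Two arcs are *adjacent* if they intersect in exactly one point, which is a common
endpoint. -/
def Adjacent (α β : Arc c) : Prop :=
  ∃ p, α.toSet ∩ β.toSet = {p} ∧ p ∈ α.endpoints ∧ p ∈ β.endpoints

/-- Two arcs *share an endpoint* if some endpoint of one is an endpoint of the other. -/
def SharesEndpoint (α β : Arc c) : Prop := (α.endpoints ∩ β.endpoints).Nonempty

/-- Two arcs with no common endpoint *cross* if exactly one of the two endpoints of one
of them lies in the other. -/
def Crosses (α β : Arc c) : Prop :=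
  ¬ SharesEndpoint α β ∧
    (Xor' (β.init ∈ α.toSet) (β.term ∈ α.toSet) ∨
      Xor' (α.init ∈ β.toSet) (α.term ∈ β.toSet))

end Arc

/-- A finite family of arcs of the circle `ℝ/cℤ` (of circumference `c > 0`) is an
*`r`-disk family* if:
(i) no two arcs of the family have union equal to the whole circle;
(ii) every point of the circle that is not an endpoint of any arc of the family lies in
exactly `r` arcs of the family;
(iii) every point of the circle that is an endpoint of some arc of the family is the
terminal endpoint of exactly one arc and the initial endpoint of exactly one arc of the
family, and these two arcs intersect only in that point. -/
def IsDiskFamily (r : ℕ) {c : ℝ} (I : Finset (Arc c)) : Prop :=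
  0 < c ∧
  (∀ α ∈ I, ∀ β ∈ I, α.toSet ∪ β.toSet ≠ Set.univ) ∧
  (∀ p : AddCircle c, (∀ α ∈ I, p ∉ α.endpoints) →
    Nat.card {α : Arc c // α ∈ I ∧ p ∈ α.toSet} = r) ∧
  (∀ p : AddCircle c, (∃ α ∈ I, p ∈ α.endpoints) →
    Nat.card {α : Arc c // α ∈ I ∧ α.term = p} = 1 ∧
    Nat.card {α : Arc c // α ∈ I ∧ α.init = p} = 1 ∧
    (∀ α ∈ I, ∀ β ∈ I, α.term = p → β.init = p → α.toSet ∩ β.toSet = {p}))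

/-- The *area* of a family of arcs: the number of unordered pairs of arcs that cross,
plus one half of the number of unordered pairs of arcs that share an endpoint.
(It is computed here from the corresponding counts of ordered pairs.) -/
def diskArea {c : ℝ} (I : Finset (Arc c)) : ℝ :=
  (Nat.card {p : Arc c × Arc c // p.1 ∈ I ∧ p.2 ∈ I ∧ p.1.Crosses p.2} : ℝ) / 2 +
    (Nat.card {p : Arc c × Arc c //
      p.1 ∈ I ∧ p.2 ∈ I ∧ p.1 ≠ p.2 ∧ p.1.SharesEndpoint p.2} : ℝ) / 4

/-- An `r`-disk family is *area-minimal* if no `r`-disk family (on a circle of any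
circumference) has strictly smaller area. -/
def IsAreaMinimal (r : ℕ) {c : ℝ} (I : Finset (Arc c)) : Prop :=
  IsDiskFamily r I ∧
    ∀ (c' : ℝ) (J : Finset (Arc c')), IsDiskFamily r J → diskArea I ≤ diskArea J

open scoped Classical

/-- The arc `[k·r - (i + 1/2), k·r + (i + 1/2)]` of the circle `ℝ/3rℤ`. -/
def extremalArc (r : ℕ) (k : ℕ) (i : Fin r) : Arc (3 * (r : ℝ)) where
  a := (k : ℝ) * (r : ℝ) - ((i : ℝ) + 1 / 2)
  b := (k : ℝ) * (r : ℝ) + ((i : ℝ) + 1 / 2)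
  width_pos := by
    have : (0 : ℝ) ≤ (i : ℝ) := Nat.cast_nonneg _
    ring_nf
    linarith
  width_lt := by
    have h : ((i : ℕ) : ℝ) < (r : ℝ) := by exact_mod_cast i.isLt
    have hr1 : (1 : ℝ) ≤ (r : ℝ) := by exact_mod_cast i.pos
    ring_nf
    linarith

/-- The family of the `3r` arcs `[k·r - s, k·r + s]` of the circle `ℝ/3rℤ`, for
`k ∈ {0, 1, 2}` and `s ∈ {1/2, 3/2, …, r - 1/2}`. -/
def extremalFamily (r : ℕ) : Finset (Arc (3 * (r : ℝ))) :=
  (Finset.univ : Finset (Fin 3 × Fin r)).image fun ki => extremalArc r ki.1 ki.2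

namespace EA
open Finset
variable {r : ℕ}

lemma coe_eq {c : ℝ} (u v : ℝ) : ((u : AddCircle c) = v) ↔ ∃ n : ℤ, u = v + n * c := by
  constructor
  · intro h
    rw [QuotientAddGroup.eq_iff_sub_mem] at h
    obtain ⟨n, hn⟩ := AddSubgroup.mem_zmultiples_iff.mp h
    rw [zsmul_eq_mul] at hn
    exact ⟨n, by linarith⟩
  · rintro ⟨n, rfl⟩
    rw [QuotientAddGroup.eq_iff_sub_mem]
    exact AddSubgroup.mem_zmultiples_iff.mpr ⟨n, by rw [zsmul_eq_mul]; ring⟩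

lemma rpos (hr : 0 < r) : (0:ℝ) < (r:ℝ) := by exact_mod_cast hr

lemma M_lt {M N : ℤ} (hr : 0 < r) (h : (M:ℝ)*(r:ℝ) < (N:ℝ)*(r:ℝ)) : M < N := by
  have := lt_of_mul_lt_mul_right h (rpos hr).le
  exact_mod_cast this

lemma s_lt (i : Fin r) : (i:ℝ) + 1/2 < (r:ℝ) := by
  have : ((i:ℕ):ℝ) + 1 ≤ (r:ℝ) := by exact_mod_cast i.isLt
  linarith

lemma s_pos (i : Fin r) : (0:ℝ) < (i:ℝ) + 1/2 := by positivity

lemma mem_toSet_iff {c : ℝ} (α : Arc c) (x : ℝ) :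
    ((x : AddCircle c) ∈ α.toSet) ↔ ∃ n : ℤ, α.a ≤ x + n * c ∧ x + n * c ≤ α.b := by
  unfold Arc.toSet
  simp only [Set.mem_image, Set.mem_Icc]
  constructor
  · rintro ⟨y, ⟨h1, h2⟩, hy⟩
    obtain ⟨n, rfl⟩ := (coe_eq y x).mp hy
    exact ⟨n, h1, h2⟩
  · rintro ⟨n, h1, h2⟩
    exact ⟨x + n*c, ⟨h1, h2⟩, ((coe_eq (x + n*c) x).mpr ⟨n, by ring⟩)⟩

lemma mem_ext (k : Fin 3) (i : Fin r) (x : ℝ) :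
    ((x : AddCircle (3*(r:ℝ))) ∈ (extremalArc r ↑k i).toSet) ↔
      ∃ n : ℤ, |x + (n:ℝ) * (3*(r:ℝ)) - ((k:ℕ):ℝ)*(r:ℝ)| ≤ (i:ℝ) + 1/2 := by
  rw [mem_toSet_iff]
  apply exists_congr; intro n
  rw [abs_le]
  show (((k:ℕ):ℝ) * (r:ℝ) - ((i:ℝ)+1/2) ≤ _ ∧ _ ≤ ((k:ℕ):ℝ) * (r:ℝ) + ((i:ℝ)+1/2)) ↔ _
  constructor <;> (rintro ⟨h1,h2⟩; constructor <;> linarith)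


lemma fin3_add_one_val (k : Fin 3) : (k + 1).val = (k.val + 1) % 3 := by
  simp [Fin.val_add]

lemma ext_term (k : Fin 3) (i : Fin r) :
    (extremalArc r ↑k i).term = ((( (k:ℕ):ℝ)*(r:ℝ) + ((i:ℝ) + 1/2) : ℝ) : AddCircle (3*(r:ℝ))) := rfl

lemma ext_init (k : Fin 3) (i : Fin r) :
    (extremalArc r ↑k i).init = ((( (k:ℕ):ℝ)*(r:ℝ) - ((i:ℝ) + 1/2) : ℝ) : AddCircle (3*(r:ℝ))) := rfl

lemma term_eq_term (hr : 0 < r) {k k' : Fin 3} {i i' : Fin r} :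
    (extremalArc r ↑k i).term = (extremalArc r ↑k' i').term ↔ (k = k' ∧ i = i') := by
  rw [ext_term, ext_term, coe_eq]
  constructor
  · rintro ⟨n, hn⟩
    set M : ℤ := (k:ℕ) - (k':ℕ) - 3*n with hMdef
    have hM : (M:ℝ)*(r:ℝ) = ((i':ℝ)+1/2) - ((i:ℝ)+1/2) := by
      push_cast [hMdef]; linear_combination hn
    have h1 : (-1 : ℤ) < M := M_lt hr (by push_cast; nlinarith [s_pos i, s_pos i', s_lt i, s_lt i'])
    have h2 : M < 1 := M_lt hr (by push_cast; nlinarith [s_pos i, s_pos i', s_lt i, s_lt i'])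
    have hM0 : M = 0 := by omega
    have hi : ((i:ℕ):ℝ) = ((i':ℕ):ℝ) := by rw [hM0] at hM; push_cast at hM; linarith
    have hi' : i = i' := Fin.ext (by exact_mod_cast hi)
    have hk : (k:ℕ) = (k':ℕ) := by
      have hk3 := k.isLt; have hk3' := k'.isLt
      omega
    exact ⟨Fin.ext hk, hi'⟩
  · rintro ⟨rfl, rfl⟩; exact ⟨0, by push_cast; ring⟩

lemma init_eq_init (hr : 0 < r) {k k' : Fin 3} {i i' : Fin r} :
    (extremalArc r ↑k i).init = (extremalArc r ↑k' i').init ↔ (k = k' ∧ i = i') := by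
  rw [ext_init, ext_init, coe_eq]
  constructor
  · rintro ⟨n, hn⟩
    set M : ℤ := (k:ℕ) - (k':ℕ) - 3*n with hMdef
    have hM : (M:ℝ)*(r:ℝ) = ((i:ℝ)+1/2) - ((i':ℝ)+1/2) := by
      push_cast [hMdef]; linear_combination hn
    have h1 : (-1 : ℤ) < M := M_lt hr (by push_cast; nlinarith [s_pos i, s_pos i', s_lt i, s_lt i'])
    have h2 : M < 1 := M_lt hr (by push_cast; nlinarith [s_pos i, s_pos i', s_lt i, s_lt i'])
    have hM0 : M = 0 := by omega
    have hi : ((i:ℕ):ℝ) = ((i':ℕ):ℝ) := by rw [hM0] at hM; push_cast at hM; linarith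
    have hi' : i = i' := Fin.ext (by exact_mod_cast hi)
    have hk : (k:ℕ) = (k':ℕ) := by
      have hk3 := k.isLt; have hk3' := k'.isLt
      omega
    exact ⟨Fin.ext hk, hi'⟩
  · rintro ⟨rfl, rfl⟩; exact ⟨0, by push_cast; ring⟩

lemma init_eq_term (hr : 0 < r) {k k' : Fin 3} {i i' : Fin r} :
    (extremalArc r ↑k i).init = (extremalArc r ↑k' i').term ↔
      (k = k' + 1 ∧ (i:ℕ) + (i':ℕ) + 1 = r) := by
  rw [ext_init, ext_term, coe_eq]
  constructor
  · rintro ⟨n, hn⟩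
    set M : ℤ := (k:ℕ) - (k':ℕ) - 3*n with hMdef
    have hM : (M:ℝ)*(r:ℝ) = ((i:ℝ)+1/2) + ((i':ℝ)+1/2) := by
      push_cast [hMdef]; linear_combination hn
    have h1 : (0 : ℤ) < M := M_lt hr (by push_cast; nlinarith [s_pos i, s_pos i'])
    have h2 : M < 2 := M_lt hr (by push_cast; nlinarith [s_lt i, s_lt i'])
    have hM1 : M = 1 := by omega
    have hsum : ((i:ℕ):ℝ) + ((i':ℕ):ℝ) + 1 = (r:ℝ) := by
      rw [hM1] at hM; push_cast at hM; linarith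
    have hsumn : (i:ℕ) + (i':ℕ) + 1 = r := by exact_mod_cast hsum
    have hk3 := k.isLt; have hk3' := k'.isLt
    refine ⟨Fin.ext ?_, hsumn⟩
    rw [fin3_add_one_val]
    omega
  · rintro ⟨hk, hsum⟩
    have hsr : ((i:ℕ):ℝ) + ((i':ℕ):ℝ) + 1 = (r:ℝ) := by exact_mod_cast hsum
    have hkv : (k:ℕ) = ((k':ℕ) + 1) % 3 := by rw [hk, fin3_add_one_val]
    have hk3' := k'.isLt
    by_cases hc : (k':ℕ) ≤ 1
    · refine ⟨0, ?_⟩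
      have : (k:ℕ) = (k':ℕ) + 1 := by omega
      rw [this]; push_cast; linarith
    · refine ⟨-1, ?_⟩
      have h2' : (k':ℕ) = 2 := by omega
      have h0 : (k:ℕ) = 0 := by omega
      rw [h0, h2']; push_cast; linarith

lemma term_mem (hr : 0 < r) (k k' : Fin 3) (i i' : Fin r) :
    (extremalArc r ↑k' i').term ∈ (extremalArc r ↑k i).toSet ↔
      ((k = k' ∧ (i':ℕ) ≤ (i:ℕ)) ∨ (k = k' + 1 ∧ r ≤ (i:ℕ) + (i':ℕ) + 1)) := by
  rw [ext_term, mem_ext]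
  have hk3 := k.isLt; have hk3' := k'.isLt
  constructor
  · rintro ⟨n, hn⟩
    set M : ℤ := (k':ℕ) - (k:ℕ) + 3*n with hMdef
    have hM : ((k':ℕ):ℝ)*(r:ℝ) + ((i':ℝ)+1/2) + (n:ℝ)*(3*(r:ℝ)) - ((k:ℕ):ℝ)*(r:ℝ)
        = (M:ℝ)*(r:ℝ) + ((i':ℝ)+1/2) := by push_cast [hMdef]; ring
    rw [hM, abs_le] at hn
    have h1 : (-2 : ℤ) < M := M_lt hr (by push_cast; nlinarith [s_pos i, s_pos i', s_lt i, s_lt i'])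
    have h2 : M < 1 := M_lt hr (by push_cast; nlinarith [s_pos i, s_pos i', s_lt i, s_lt i'])
    rcases (by omega : M = 0 ∨ M = -1) with hM0 | hM0
    · left
      rw [hM0] at hn hMdef
      push_cast at hn
      refine ⟨Fin.ext (by omega), ?_⟩
      have : ((i':ℕ):ℝ) ≤ ((i:ℕ):ℝ) := by linarith [hn.2]
      exact_mod_cast this
    · right
      rw [hM0] at hn hMdef
      push_cast at hn
      refine ⟨Fin.ext (by rw [fin3_add_one_val]; omega), ?_⟩
      have : (r:ℝ) ≤ ((i:ℕ):ℝ) + ((i':ℕ):ℝ) + 1 := by linarith [hn.1]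
      exact_mod_cast this
  · rintro (⟨rfl, hle⟩ | ⟨hk, hle⟩)
    · refine ⟨0, ?_⟩
      have : ((i':ℕ):ℝ) ≤ ((i:ℕ):ℝ) := by exact_mod_cast hle
      rw [abs_le]; push_cast
      constructor <;> nlinarith [s_pos i']
    · have hle' : (r:ℝ) ≤ ((i:ℕ):ℝ) + ((i':ℕ):ℝ) + 1 := by exact_mod_cast hle
      have hkv : (k:ℕ) = ((k':ℕ) + 1) % 3 := by rw [hk, fin3_add_one_val]
      by_cases hc : (k':ℕ) ≤ 1
      · refine ⟨0, ?_⟩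
        have hkk : (k:ℕ) = (k':ℕ) + 1 := by omega
        rw [hkk, abs_le]; push_cast
        constructor <;> nlinarith [s_lt i', s_lt i]
      · refine ⟨-1, ?_⟩
        have h2' : (k':ℕ) = 2 := by omega
        have h0 : (k:ℕ) = 0 := by omega
        rw [h0, h2', abs_le]; push_cast
        constructor <;> nlinarith [s_lt i', s_lt i]

lemma init_mem (hr : 0 < r) (k k' : Fin 3) (i i' : Fin r) :
    (extremalArc r ↑k' i').init ∈ (extremalArc r ↑k i).toSet ↔
      ((k = k' ∧ (i':ℕ) ≤ (i:ℕ)) ∨ (k' = k + 1 ∧ r ≤ (i:ℕ) + (i':ℕ) + 1)) := by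
  rw [ext_init, mem_ext]
  have hk3 := k.isLt; have hk3' := k'.isLt
  constructor
  · rintro ⟨n, hn⟩
    set M : ℤ := (k':ℕ) - (k:ℕ) + 3*n with hMdef
    have hM : ((k':ℕ):ℝ)*(r:ℝ) - ((i':ℝ)+1/2) + (n:ℝ)*(3*(r:ℝ)) - ((k:ℕ):ℝ)*(r:ℝ)
        = (M:ℝ)*(r:ℝ) - ((i':ℝ)+1/2) := by push_cast [hMdef]; ring
    rw [hM, abs_le] at hn
    have h1 : (-1 : ℤ) < M := M_lt hr (by push_cast; nlinarith [s_pos i, s_pos i', s_lt i, s_lt i'])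
    have h2 : M < 2 := M_lt hr (by push_cast; nlinarith [s_pos i, s_pos i', s_lt i, s_lt i'])
    rcases (by omega : M = 0 ∨ M = 1) with hM0 | hM0
    · left
      rw [hM0] at hn hMdef
      push_cast at hn
      refine ⟨Fin.ext (by omega), ?_⟩
      have : ((i':ℕ):ℝ) ≤ ((i:ℕ):ℝ) := by linarith [hn.1]
      exact_mod_cast this
    · right
      rw [hM0] at hn hMdef
      push_cast at hn
      refine ⟨Fin.ext (by rw [fin3_add_one_val]; omega), ?_⟩
      have : (r:ℝ) ≤ ((i:ℕ):ℝ) + ((i':ℕ):ℝ) + 1 := by linarith [hn.2]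
      exact_mod_cast this
  · rintro (⟨rfl, hle⟩ | ⟨hk, hle⟩)
    · refine ⟨0, ?_⟩
      have : ((i':ℕ):ℝ) ≤ ((i:ℕ):ℝ) := by exact_mod_cast hle
      rw [abs_le]; push_cast
      constructor <;> nlinarith [s_pos i']
    · have hle' : (r:ℝ) ≤ ((i:ℕ):ℝ) + ((i':ℕ):ℝ) + 1 := by exact_mod_cast hle
      have hkv : (k':ℕ) = ((k:ℕ) + 1) % 3 := by rw [hk, fin3_add_one_val]
      by_cases hc : (k:ℕ) ≤ 1
      · refine ⟨0, ?_⟩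
        have hkk : (k':ℕ) = (k:ℕ) + 1 := by omega
        rw [hkk, abs_le]; push_cast
        constructor <;> nlinarith [s_lt i', s_lt i]
      · refine ⟨1, ?_⟩
        have h2' : (k:ℕ) = 2 := by omega
        have h0 : (k':ℕ) = 0 := by omega
        rw [h0, h2', abs_le]; push_cast
        constructor <;> nlinarith [s_lt i', s_lt i]

lemma not_mem_center (hr : 0 < r) {k k'' : Fin 3} (hne : k'' ≠ k) (i : Fin r) :
    ((((k'':ℕ):ℝ)*(r:ℝ) : ℝ) : AddCircle (3*(r:ℝ))) ∉ (extremalArc r ↑k i).toSet := by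
  rw [mem_ext]
  rintro ⟨n, hn⟩
  set M : ℤ := (k'':ℕ) - (k:ℕ) + 3*n with hMdef
  have hM : ((k'':ℕ):ℝ)*(r:ℝ) + (n:ℝ)*(3*(r:ℝ)) - ((k:ℕ):ℝ)*(r:ℝ) = (M:ℝ)*(r:ℝ) := by
    push_cast [hMdef]; ring
  rw [hM, abs_le] at hn
  have h1 : (-1 : ℤ) < M := M_lt hr (by push_cast; nlinarith [s_lt i])
  have h2 : M < 1 := M_lt hr (by push_cast; nlinarith [s_lt i])
  have hk3 := k.isLt; have hk3' := k''.isLt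
  exact hne (Fin.ext (by omega))

lemma mem_ext_of_pos (hr : 0 < r) {m : ℕ} (hm : m < 3) {d : ℝ} (hd0 : 0 ≤ d) (hdr : d < r)
    (k : Fin 3) (i : Fin r) :
    (((((m:ℝ)*(r:ℝ) + d) : ℝ) : AddCircle (3*(r:ℝ))) ∈ (extremalArc r ↑k i).toSet) ↔
      (((k:ℕ) = m ∧ d ≤ (i:ℝ) + 1/2) ∨ ((k:ℕ) = (m+1) % 3 ∧ (r:ℝ) - d ≤ (i:ℝ) + 1/2)) := by
  rw [mem_ext]
  have hk3 := k.isLt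
  constructor
  · rintro ⟨n, hn⟩
    set M : ℤ := (m:ℤ) - (k:ℕ) + 3*n with hMdef
    have hM : (m:ℝ)*(r:ℝ) + d + (n:ℝ)*(3*(r:ℝ)) - ((k:ℕ):ℝ)*(r:ℝ) = (M:ℝ)*(r:ℝ) + d := by
      push_cast [hMdef]; ring
    rw [hM, abs_le] at hn
    have h1 : (-2 : ℤ) < M := M_lt hr (by push_cast; nlinarith [s_lt i])
    have h2 : M < 1 := M_lt hr (by push_cast; nlinarith [s_lt i])
    rcases (by omega : M = 0 ∨ M = -1) with hM0 | hM0
    · left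
      rw [hM0] at hn hMdef
      push_cast at hn
      exact ⟨by omega, by linarith [hn.2]⟩
    · right
      rw [hM0] at hn hMdef
      push_cast at hn
      exact ⟨by omega, by linarith [hn.1]⟩
  · rintro (⟨hkm, hle⟩ | ⟨hkm, hle⟩)
    · refine ⟨0, ?_⟩
      rw [hkm, abs_le]; push_cast
      constructor <;> nlinarith [s_pos i]
    · by_cases hc : m ≤ 1
      · refine ⟨0, ?_⟩
        have hkk : (k:ℕ) = m + 1 := by omega
        rw [hkk, abs_le]; push_cast
        constructor <;> nlinarith [s_lt i]
      · refine ⟨-1, ?_⟩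
        have h2' : m = 2 := by omega
        have h0 : (k:ℕ) = 0 := by omega
        rw [h0, h2', abs_le]; push_cast
        constructor <;> nlinarith [s_lt i]

lemma ext_a (k : Fin 3) (i : Fin r) :
    (extremalArc r ↑k i).a = ((k:ℕ):ℝ)*(r:ℝ) - ((i:ℝ) + 1/2) := rfl

lemma ext_b (k : Fin 3) (i : Fin r) :
    (extremalArc r ↑k i).b = ((k:ℕ):ℝ)*(r:ℝ) + ((i:ℝ) + 1/2) := rfl

lemma f_inj (hr : 0 < r) :
    Function.Injective (fun ki : Fin 3 × Fin r => extremalArc r ki.1 ki.2) := by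
  rintro ⟨k, i⟩ ⟨k', i'⟩ h
  simp only at h
  have ha := congrArg Arc.a h
  have hb := congrArg Arc.b h
  rw [ext_a, ext_a] at ha
  rw [ext_b, ext_b] at hb
  have hi : ((i:ℕ):ℝ) = ((i':ℕ):ℝ) := by linarith
  have hkr : ((k:ℕ):ℝ)*(r:ℝ) = ((k':ℕ):ℝ)*(r:ℝ) := by linarith
  have hk : ((k:ℕ):ℝ) = ((k':ℕ):ℝ) := mul_right_cancel₀ (rpos hr).ne' hkr
  exact Prod.ext (Fin.ext (by exact_mod_cast hk)) (Fin.ext (by exact_mod_cast hi))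

lemma nat_card_single (hr : 0 < r) (P : Arc (3*(r:ℝ)) → Prop) :
    Nat.card {α : Arc (3*(r:ℝ)) // α ∈ extremalFamily r ∧ P α} =
      ((Finset.univ : Finset (Fin 3 × Fin r)).filter
        (fun ki => P (extremalArc r ki.1 ki.2))).card := by
  classical
  have e : {x // x ∈ (Finset.univ : Finset (Fin 3 × Fin r)).filter
        (fun ki => P (extremalArc r ki.1 ki.2))} ≃
      {α : Arc (3*(r:ℝ)) // α ∈ extremalFamily r ∧ P α} := by
    refine Equiv.ofBijective (fun x => ⟨extremalArc r x.1.1 x.1.2,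
      Finset.mem_image.mpr ⟨x.1, Finset.mem_univ _, rfl⟩, (Finset.mem_filter.mp x.2).2⟩) ⟨?_, ?_⟩
    · rintro ⟨x, hx⟩ ⟨y, hy⟩ hxy
      exact Subtype.ext (f_inj hr (by simpa [Subtype.ext_iff] using hxy))
    · rintro ⟨α, hα, hP⟩
      obtain ⟨x, -, rfl⟩ := Finset.mem_image.mp hα
      exact ⟨⟨x, Finset.mem_filter.mpr ⟨Finset.mem_univ _, hP⟩⟩, rfl⟩
  rw [← Nat.card_congr e, Nat.card_eq_fintype_card, Fintype.card_coe]

lemma nat_card_pair (hr : 0 < r) (Q : Arc (3*(r:ℝ)) → Arc (3*(r:ℝ)) → Prop) :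
    Nat.card {p : Arc (3*(r:ℝ)) × Arc (3*(r:ℝ)) //
        p.1 ∈ extremalFamily r ∧ p.2 ∈ extremalFamily r ∧ Q p.1 p.2} =
      ((Finset.univ : Finset ((Fin 3 × Fin r) × (Fin 3 × Fin r))).filter
        (fun x => Q (extremalArc r x.1.1 x.1.2) (extremalArc r x.2.1 x.2.2))).card := by
  classical
  have e : {x // x ∈ (Finset.univ : Finset ((Fin 3 × Fin r) × (Fin 3 × Fin r))).filter
        (fun x => Q (extremalArc r x.1.1 x.1.2) (extremalArc r x.2.1 x.2.2))} ≃
      {p : Arc (3*(r:ℝ)) × Arc (3*(r:ℝ)) //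
        p.1 ∈ extremalFamily r ∧ p.2 ∈ extremalFamily r ∧ Q p.1 p.2} := by
    refine Equiv.ofBijective (fun x => ⟨(extremalArc r x.1.1.1 x.1.1.2, extremalArc r x.1.2.1 x.1.2.2),
      Finset.mem_image.mpr ⟨x.1.1, Finset.mem_univ _, rfl⟩,
      Finset.mem_image.mpr ⟨x.1.2, Finset.mem_univ _, rfl⟩, (Finset.mem_filter.mp x.2).2⟩) ⟨?_, ?_⟩
    · rintro ⟨⟨x1, x2⟩, hx⟩ ⟨⟨y1, y2⟩, hy⟩ hxy
      simp only [Subtype.mk.injEq, Prod.mk.injEq] at hxy ⊢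
      exact ⟨f_inj hr hxy.1, f_inj hr hxy.2⟩
    · rintro ⟨⟨α, β⟩, hα, hβ, hQ⟩
      obtain ⟨x, -, rfl⟩ := Finset.mem_image.mp hα
      obtain ⟨y, -, rfl⟩ := Finset.mem_image.mp hβ
      exact ⟨⟨(x, y), Finset.mem_filter.mpr ⟨Finset.mem_univ _, hQ⟩⟩, rfl⟩
  rw [← Nat.card_congr e, Nat.card_eq_fintype_card, Fintype.card_coe]

lemma exists_rep (hr : 0 < r) (p : AddCircle (3*(r:ℝ))) :
    ∃ x : ℝ, 0 ≤ x ∧ x < 3*(r:ℝ) ∧ p = ↑x := by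
  have hc : (0:ℝ) < 3*(r:ℝ) := by have := rpos hr; linarith
  obtain ⟨z, rfl⟩ := Quotient.exists_rep p
  refine ⟨z - ⌊z / (3*(r:ℝ))⌋ * (3*(r:ℝ)), Int.sub_floor_div_mul_nonneg z hc,
    Int.sub_floor_div_mul_lt z hc, ?_⟩
  show (↑z : AddCircle (3*(r:ℝ))) = _
  rw [coe_eq]
  exact ⟨⌊z / (3*(r:ℝ))⌋, by ring⟩

lemma rev_sum (i : Fin r) : ((Fin.rev i : ℕ):ℝ) + ((i:ℕ):ℝ) + 1 = (r:ℝ) := by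
  have h := i.isLt
  have : (Fin.rev i : ℕ) + (i:ℕ) + 1 = r := by rw [Fin.val_rev]; omega
  exact_mod_cast this

set_option maxHeartbeats 1000000 in
lemma inter_eq (hr : 0 < r) (k : Fin 3) (i : Fin r) :
    (extremalArc r ↑k i).toSet ∩ (extremalArc r ↑(k+1) (Fin.rev i)).toSet =
      {(extremalArc r ↑k i).term} := by
  have hk3 := k.isLt
  have hrev := rev_sum i
  apply Set.eq_singleton_iff_unique_mem.mpr
  constructor
  · constructor
    · rw [ext_term, mem_ext]
      exact ⟨0, by push_cast; rw [abs_le]; constructor <;> linarith [s_pos i, s_lt i]⟩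
    · rw [ext_term, mem_ext]
      by_cases hc : (k:ℕ) ≤ 1
      · refine ⟨0, ?_⟩
        have h1 : ((k+1 : Fin 3):ℕ) = (k:ℕ)+1 := by rw [fin3_add_one_val]; omega
        rw [h1, abs_le]; push_cast
        constructor <;> linarith [s_lt i, s_pos i, hrev, rpos hr]
      · refine ⟨-1, ?_⟩
        have h2' : (k:ℕ) = 2 := by omega
        have h0 : ((k+1 : Fin 3):ℕ) = 0 := by rw [fin3_add_one_val]; omega
        rw [h0, h2', abs_le]; push_cast
        constructor <;> linarith [s_lt i, s_pos i, hrev, rpos hr]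
  · rintro q ⟨hqA, hqB⟩
    obtain ⟨y, hy, rfl⟩ := hqA
    rw [Set.mem_Icc, ext_a, ext_b] at hy
    rw [mem_ext] at hqB
    obtain ⟨n, hn⟩ := hqB
    rw [abs_le] at hn
    have hy' : y = ((k:ℕ):ℝ)*(r:ℝ) + ((i:ℝ) + 1/2) := by
      by_cases hc : (k:ℕ) ≤ 1
      · have h1 : ((k+1 : Fin 3):ℕ) = (k:ℕ)+1 := by rw [fin3_add_one_val]; omega
        rw [h1] at hn; push_cast at hn
        have hn0 : n = 0 := by
          have b1 : (-1 : ℤ) < 3*n := M_lt hr (by push_cast; linarith [s_lt i, s_pos i, hy.1, hy.2, hrev, rpos hr])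
          have b2 : (3*n : ℤ) < 3 := M_lt hr (by push_cast; linarith [s_lt i, s_pos i, hy.1, hy.2, hrev, rpos hr])
          omega
        rw [hn0] at hn; push_cast at hn
        linarith [hn.1, hn.2, hy.1, hy.2, hrev, rpos hr]
      · have h2' : (k:ℕ) = 2 := by omega
        have h0 : ((k+1 : Fin 3):ℕ) = 0 := by rw [fin3_add_one_val]; omega
        rw [h0] at hn; rw [h2'] at hy; push_cast at hn hy
        have hn1 : n = -1 := by
          have b1 : (-4 : ℤ) < 3*n := M_lt hr (by push_cast; linarith [s_lt i, s_pos i, hy.1, hy.2, hrev, rpos hr])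
          have b2 : (3*n : ℤ) < 0 := M_lt hr (by push_cast; linarith [s_lt i, s_pos i, hy.1, hy.2, hrev, rpos hr])
          omega
        rw [hn1] at hn; push_cast at hn
        rw [h2']; push_cast
        linarith [hn.1, hn.2, hy.1, hy.2, hrev, rpos hr]
    rw [hy', ext_term]

lemma fin3_cases {k k' : Fin 3} (h : k ≠ k') : k' = k + 1 ∨ k = k' + 1 := by
  have : ∀ a b : Fin 3, a ≠ b → (b = a + 1 ∨ a = b + 1) := by decide
  exact this k k' h

lemma fin3_cases' {k k' : Fin 3} (h : k ≠ k') (h2 : ¬ k' = k + 1) : k = k' + 1 := by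
  rcases fin3_cases h with h3 | h3
  · exact absurd h3 h2
  · exact h3

lemma fin3_not_both {k k' : Fin 3} (h1 : k = k' + 1) (h2 : k' = k + 1) : False := by
  have := congrArg Fin.val h1
  have := congrArg Fin.val h2
  rw [fin3_add_one_val] at *
  have := k.isLt; have := k'.isLt
  omega

lemma fin3_ne_add_one (k : Fin 3) : k ≠ k + 1 := by
  intro h
  have := congrArg Fin.val h
  rw [fin3_add_one_val] at this
  have := k.isLt
  omega

lemma shares_iff {c : ℝ} (α β : Arc c) :
    α.SharesEndpoint β ↔
      (α.init = β.init ∨ α.init = β.term ∨ α.term = β.init ∨ α.term = β.term) := by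
  unfold Arc.SharesEndpoint Arc.endpoints
  constructor
  · rintro ⟨q, hqa, hqb⟩
    simp only [Set.mem_insert_iff, Set.mem_singleton_iff] at hqa hqb
    rcases hqa with rfl | rfl <;> rcases hqb with h | h <;> tauto
  · rintro (h | h | h | h)
    · exact ⟨α.init, by simp, by simp [h]⟩
    · exact ⟨α.init, by simp, by simp [h]⟩
    · exact ⟨α.term, by simp, by simp [h]⟩
    · exact ⟨α.term, by simp, by simp [h]⟩

lemma arc_ne (hr : 0 < r) {k k' : Fin 3} {i i' : Fin r} (h : k ≠ k' ∨ i ≠ i') :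
    extremalArc r ↑k i ≠ extremalArc r ↑k' i' := by
  intro heq
  have := f_inj hr (a₁ := (k, i)) (a₂ := (k', i')) heq
  rw [Prod.mk.injEq] at this
  rcases h with h | h
  · exact h this.1
  · exact h this.2

lemma shares_char (hr : 0 < r) (k k' : Fin 3) (i i' : Fin r) :
    (extremalArc r ↑k i ≠ extremalArc r ↑k' i' ∧
      (extremalArc r ↑k i).SharesEndpoint (extremalArc r ↑k' i')) ↔
      (k ≠ k' ∧ (i:ℕ) + (i':ℕ) + 1 = r) := by
  rw [shares_iff]
  constructor
  · rintro ⟨hne, (h | h | h | h)⟩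
    · obtain ⟨rfl, rfl⟩ := (init_eq_init hr).mp h
      exact absurd rfl hne
    · obtain ⟨hk, hsum⟩ := (init_eq_term hr).mp h
      refine ⟨?_, by omega⟩
      rintro rfl
      exact fin3_ne_add_one k hk
    · obtain ⟨hk, hsum⟩ := (init_eq_term hr).mp h.symm
      refine ⟨?_, by omega⟩
      rintro rfl
      exact fin3_ne_add_one k hk
    · obtain ⟨rfl, rfl⟩ := (term_eq_term hr).mp h
      exact absurd rfl hne
  · rintro ⟨hkne, hsum⟩
    refine ⟨arc_ne hr (Or.inl hkne), ?_⟩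
    by_cases hc : k' = k + 1
    · right; right; left
      exact ((init_eq_term hr).mpr ⟨hc, by omega⟩).symm
    · right; left
      exact (init_eq_term hr).mpr ⟨fin3_cases' hkne hc, by omega⟩

lemma crosses_char (hr : 0 < r) (k k' : Fin 3) (i i' : Fin r) :
    (extremalArc r ↑k i).Crosses (extremalArc r ↑k' i') ↔
      (k ≠ k' ∧ r ≤ (i:ℕ) + (i':ℕ)) := by
  unfold Arc.Crosses
  constructor
  · rintro ⟨hnsh, hxor⟩
    by_cases hkk : k = k'
    · exfalso
      subst hkk
      have e1 : ∀ j j' : Fin r, ((extremalArc r ↑k j').init ∈ (extremalArc r ↑k j).toSet ↔ (j':ℕ) ≤ (j:ℕ)) := by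
        intro j j'
        rw [init_mem hr]
        constructor
        · rintro (⟨-, h⟩ | ⟨h, -⟩)
          · exact h
          · exact absurd h (fin3_ne_add_one k)
        · exact fun h => Or.inl ⟨rfl, h⟩
      have e2 : ∀ j j' : Fin r, ((extremalArc r ↑k j').term ∈ (extremalArc r ↑k j).toSet ↔ (j':ℕ) ≤ (j:ℕ)) := by
        intro j j'
        rw [term_mem hr]
        constructor
        · rintro (⟨-, h⟩ | ⟨h, -⟩)
          · exact h
          · exact absurd h (fin3_ne_add_one k)
        · exact fun h => Or.inl ⟨rfl, h⟩
      rcases hxor with hx | hx <;> rw [e1, e2] at hx <;>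
        rcases hx with ⟨h1, h2⟩ | ⟨h1, h2⟩ <;> exact h2 h1
    · refine ⟨hkk, ?_⟩
      by_contra hlt
      push_neg at hlt
      rcases Nat.lt_or_ge ((i:ℕ) + (i':ℕ) + 1) r with hlt2 | hge2
      · -- disjoint: all memberships false
        rcases hxor with hx | hx <;>
        · rw [init_mem hr, term_mem hr] at hx
          rcases hx with ⟨h1, -⟩ | ⟨h1, -⟩ <;>
            rcases h1 with ⟨h1, h2⟩ | ⟨h1, h2⟩ <;>
              first
                | exact hkk h1
                | exact hkk h1.symm
                | omega
      · -- i+i'+1 = r : shares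
        have hsum : (i:ℕ) + (i':ℕ) + 1 = r := by omega
        exact hnsh (((shares_char hr k k' i i').mpr ⟨hkk, hsum⟩).2)
  · rintro ⟨hkk, hge⟩
    have hsum1 : r ≤ (i:ℕ) + (i':ℕ) + 1 := by omega
    constructor
    · intro hsh
      have := (shares_char hr k k' i i').mp ⟨arc_ne hr (Or.inl hkk), hsh⟩
      omega
    · left
      rw [init_mem hr, term_mem hr]
      by_cases hc : k' = k + 1
      · refine Or.inl ⟨Or.inr ⟨hc, hsum1⟩, ?_⟩
        rintro (⟨h1, -⟩ | ⟨h1, -⟩)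
        · exact hkk h1
        · exact fin3_not_both h1 hc
      · have hc2 : k = k' + 1 := fin3_cases' hkk hc
        refine Or.inr ⟨Or.inr ⟨hc2, hsum1⟩, ?_⟩
        rintro (⟨h1, -⟩ | ⟨h1, -⟩)
        · exact hkk h1
        · exact fin3_not_both hc2 h1

open Finset in
lemma card_rev_bij (d : ℝ) :
    ((univ : Finset (Fin r)).filter (fun i : Fin r => (r:ℝ) - d < ((i:ℕ):ℝ)+1/2)).card
      = ((univ : Finset (Fin r)).filter (fun i : Fin r => ((i:ℕ):ℝ)+1/2 < d)).card := by
  classical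
  refine Finset.card_bij' (fun i _ => Fin.rev i) (fun i _ => Fin.rev i) ?_ ?_ ?_ ?_
  · intro a ha
    rw [mem_filter] at ha ⊢
    refine ⟨mem_univ _, ?_⟩
    have h := rev_sum a
    linarith [ha.2]
  · intro a ha
    rw [mem_filter] at ha ⊢
    refine ⟨mem_univ _, ?_⟩
    have h := rev_sum a
    linarith [ha.2]
  · intro a _; exact Fin.rev_rev a
  · intro a _; exact Fin.rev_rev a

open Finset in
lemma count_cover (d : ℝ) (h2 : ∀ i : Fin r, ((i:ℕ):ℝ)+1/2 ≠ (r:ℝ) - d) :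
    ((univ : Finset (Fin r)).filter (fun i : Fin r => d ≤ ((i:ℕ):ℝ)+1/2)).card
      + ((univ : Finset (Fin r)).filter (fun i : Fin r => (r:ℝ) - d ≤ ((i:ℕ):ℝ)+1/2)).card = r := by
  classical
  have hc2 : (univ : Finset (Fin r)).filter (fun i : Fin r => (r:ℝ) - d ≤ ((i:ℕ):ℝ)+1/2)
      = (univ : Finset (Fin r)).filter (fun i : Fin r => (r:ℝ) - d < ((i:ℕ):ℝ)+1/2) := by
    apply Finset.filter_congr
    intro i _
    constructor
    · intro h
      exact lt_of_le_of_ne h (Ne.symm (h2 i))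
    · exact le_of_lt
  rw [hc2, card_rev_bij]
  have hpn := Finset.card_filter_add_card_filter_not
    (s := (univ : Finset (Fin r))) (p := fun i : Fin r => d ≤ ((i:ℕ):ℝ)+1/2)
  have hcong : (univ : Finset (Fin r)).filter (fun i : Fin r => ¬ d ≤ ((i:ℕ):ℝ)+1/2)
      = (univ : Finset (Fin r)).filter (fun i : Fin r => ((i:ℕ):ℝ)+1/2 < d) := by
    apply Finset.filter_congr
    intro i _
    simp only [not_le]
  rw [hcong] at hpn
  simpa using hpn

open Finset in
lemma cover_count_aux (k1 k2 : Fin 3) (hne : k1 ≠ k2) (A B : Fin r → Prop)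
    (hA : ((univ : Finset (Fin r)).filter A).card + ((univ : Finset (Fin r)).filter B).card = r) :
    ((univ : Finset (Fin 3 × Fin r)).filter
        (fun ki : Fin 3 × Fin r => (ki.1 = k1 ∧ A ki.2) ∨ (ki.1 = k2 ∧ B ki.2))).card = r := by
  classical
  have hdecomp : (univ : Finset (Fin 3 × Fin r)).filter
        (fun ki : Fin 3 × Fin r => (ki.1 = k1 ∧ A ki.2) ∨ (ki.1 = k2 ∧ B ki.2))
      = ({k1} ×ˢ ((univ : Finset (Fin r)).filter A)) ∪ ({k2} ×ˢ ((univ : Finset (Fin r)).filter B)) := by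
    ext ⟨k, i⟩
    simp only [mem_filter, mem_univ, true_and, mem_union, mem_product, mem_singleton]
  have hdisj : Disjoint ({k1} ×ˢ ((univ : Finset (Fin r)).filter A))
      (({k2} ×ˢ ((univ : Finset (Fin r)).filter B))) := by
    rw [Finset.disjoint_left]
    rintro ⟨k, i⟩ h1 h2
    rw [mem_product, mem_singleton] at h1 h2
    exact hne (h1.1 ▸ h2.1 ▸ rfl)
  rw [hdecomp, Finset.card_union_of_disjoint hdisj, Finset.card_product, Finset.card_product,
    Finset.card_singleton, Finset.card_singleton, one_mul, one_mul, hA]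

open Finset in
lemma part1 (hr : 0 < r) : ∀ α ∈ extremalFamily r, ∀ β ∈ extremalFamily r,
    α.toSet ∪ β.toSet ≠ Set.univ := by
  intro α hα β hβ h
  obtain ⟨⟨k, i⟩, -, rfl⟩ := Finset.mem_image.mp hα
  obtain ⟨⟨k', i'⟩, -, rfl⟩ := Finset.mem_image.mp hβ
  obtain ⟨k'', h1, h2⟩ : ∃ k'' : Fin 3, k'' ≠ k ∧ k'' ≠ k' := by
    have : ∀ a b : Fin 3, ∃ c, c ≠ a ∧ c ≠ b := by decide
    exact this k k'
  have hmem : ((((k'':ℕ):ℝ)*(r:ℝ) : ℝ) : AddCircle (3*(r:ℝ))) ∈ Set.univ := Set.mem_univ _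
  rw [← h] at hmem
  rcases hmem with hm | hm
  · exact not_mem_center hr h1 i hm
  · exact not_mem_center hr h2 i' hm

open Finset in
lemma part2 (hr : 0 < r) (p : AddCircle (3*(r:ℝ)))
    (hp : ∀ α ∈ extremalFamily r, p ∉ α.endpoints) :
    Nat.card {α : Arc (3*(r:ℝ)) // α ∈ extremalFamily r ∧ p ∈ α.toSet} = r := by
  obtain ⟨x, hx0, hx3, rfl⟩ := exists_rep hr p
  have hrp := rpos hr
  obtain ⟨m, d, hm, hd0, hdr, hxeq⟩ : ∃ (m : ℕ) (d : ℝ), m < 3 ∧ 0 ≤ d ∧ d < r ∧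
      x = (m:ℝ)*(r:ℝ) + d := by
    rcases lt_or_ge x r with h | h
    · exact ⟨0, x, by norm_num, hx0, h, by push_cast; ring⟩
    · rcases lt_or_ge x (2*(r:ℝ)) with h2 | h2
      · exact ⟨1, x - r, by norm_num, by linarith, by linarith, by push_cast; ring⟩
      · exact ⟨2, x - 2*r, by norm_num, by linarith, by linarith, by push_cast; ring⟩
  subst hxeq
  set k1 : Fin 3 := ⟨m, hm⟩ with hk1def
  set k2 : Fin 3 := ⟨(m+1)%3, by omega⟩ with hk2def
  have hk1v : (k1:ℕ) = m := rfl
  have hk2v : (k2:ℕ) = (m+1)%3 := rfl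
  have h2 : ∀ i : Fin r, ((i:ℕ):ℝ)+1/2 ≠ (r:ℝ) - d := by
    intro i heq
    apply hp (extremalArc r ↑k2 i) (Finset.mem_image.mpr ⟨(k2, i), Finset.mem_univ _, rfl⟩)
    show _ ∈ ({(extremalArc r ↑k2 i).init, (extremalArc r ↑k2 i).term} : Set _)
    left
    rw [ext_init, coe_eq]
    refine ⟨(((m+1)/3 : ℕ) : ℤ), ?_⟩
    have hmod : ((m+1) % 3 : ℕ) + 3 * ((m+1)/3 : ℕ) = m + 1 := Nat.mod_add_div _ _
    have hmodR : (((m+1)%3 : ℕ):ℝ) + 3*(((m+1)/3 : ℕ):ℝ) = (m:ℝ) + 1 := by exact_mod_cast hmod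
    have hmul : (((m+1)%3 : ℕ):ℝ) * (r:ℝ) + 3*(((m+1)/3:ℕ):ℝ)*(r:ℝ) = (m:ℝ)*(r:ℝ) + (r:ℝ) := by
      linear_combination (r:ℝ) * hmodR
    rw [hk2v, Int.cast_natCast]
    linarith [heq, hmul]
  have h1 : ∀ i : Fin r, ((i:ℕ):ℝ)+1/2 ≠ d := by
    intro i heq
    apply hp (extremalArc r ↑k1 i) (Finset.mem_image.mpr ⟨(k1, i), Finset.mem_univ _, rfl⟩)
    show _ ∈ ({(extremalArc r ↑k1 i).init, (extremalArc r ↑k1 i).term} : Set _)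
    right
    rw [Set.mem_singleton_iff, ext_term, coe_eq]
    refine ⟨0, ?_⟩
    rw [hk1v]
    push_cast
    linarith [heq]
  rw [nat_card_single hr]
  show ((univ : Finset (Fin 3 × Fin r)).filter
    (fun ki : Fin 3 × Fin r =>
      ((((m:ℝ)*(r:ℝ) + d : ℝ) : AddCircle (3*(r:ℝ))) ∈ (extremalArc r ki.1 ki.2).toSet))).card = r
  have hconv : (univ : Finset (Fin 3 × Fin r)).filter
        (fun ki : Fin 3 × Fin r =>
          ((((m:ℝ)*(r:ℝ) + d : ℝ) : AddCircle (3*(r:ℝ))) ∈ (extremalArc r ki.1 ki.2).toSet))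
      = (univ : Finset (Fin 3 × Fin r)).filter
        (fun ki : Fin 3 × Fin r =>
          (ki.1 = k1 ∧ d ≤ ((ki.2:ℕ):ℝ)+1/2) ∨ (ki.1 = k2 ∧ (r:ℝ) - d ≤ ((ki.2:ℕ):ℝ)+1/2)) := by
    apply Finset.filter_congr
    intro ⟨k, i⟩ _
    rw [mem_ext_of_pos hr hm hd0 hdr k i]
    have e1 : ((k:ℕ) = m) ↔ k = k1 := by
      constructor
      · intro h; exact Fin.ext (h.trans hk1v.symm)
      · rintro rfl; exact hk1v
    have e2 : ((k:ℕ) = (m+1)%3) ↔ k = k2 := by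
      constructor
      · intro h; exact Fin.ext (h.trans hk2v.symm)
      · rintro rfl; exact hk2v
    rw [e1, e2]
  rw [hconv]
  refine cover_count_aux k1 k2 ?_ _ _ (count_cover d h2)
  intro h
  have := congrArg Fin.val h
  rw [hk1v, hk2v] at this
  omega

open Finset in
lemma part3 (hr : 0 < r) (p : AddCircle (3*(r:ℝ)))
    (hp : ∃ α ∈ extremalFamily r, p ∈ α.endpoints) :
    Nat.card {α : Arc (3*(r:ℝ)) // α ∈ extremalFamily r ∧ α.term = p} = 1 ∧
    Nat.card {α : Arc (3*(r:ℝ)) // α ∈ extremalFamily r ∧ α.init = p} = 1 ∧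
    (∀ α ∈ extremalFamily r, ∀ β ∈ extremalFamily r,
      α.term = p → β.init = p → α.toSet ∩ β.toSet = {p}) := by
  obtain ⟨α, hα, hpe⟩ := hp
  obtain ⟨⟨k0, i0⟩, -, rfl⟩ := Finset.mem_image.mp hα
  simp only [Arc.endpoints, Set.mem_insert_iff, Set.mem_singleton_iff] at hpe
  have hnorm : ∃ (k1 : Fin 3) (i1 : Fin r), p = (extremalArc r ↑k1 i1).term := by
    rcases hpe with h | h
    · refine ⟨k0 + 2, Fin.rev i0, ?_⟩
      rw [h]
      apply (init_eq_term hr).mpr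
      constructor
      · have : ∀ a : Fin 3, a = a + 2 + 1 := by decide
        exact this k0
      · have := Fin.val_rev i0
        have := i0.isLt
        omega
    · exact ⟨k0, i0, h⟩
  clear hpe hα
  obtain ⟨k1, i1, rfl⟩ := hnorm
  refine ⟨?_, ?_, ?_⟩
  · rw [nat_card_single hr (fun α => α.term = (extremalArc r ↑k1 i1).term)]
    refine Eq.trans (congrArg Finset.card ?_) (Finset.card_singleton ((k1, i1) : Fin 3 × Fin r))
    ext ⟨k, i⟩
    simp only [mem_filter, mem_univ, true_and, mem_singleton]
    rw [term_eq_term hr]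
    constructor
    · rintro ⟨rfl, rfl⟩; rfl
    · intro h
      rw [Prod.mk.injEq] at h
      exact ⟨h.1, h.2⟩
  · rw [nat_card_single hr (fun α => α.init = (extremalArc r ↑k1 i1).term)]
    refine Eq.trans (congrArg Finset.card ?_) (Finset.card_singleton ((k1 + 1, Fin.rev i1) : Fin 3 × Fin r))
    ext ⟨k, i⟩
    simp only [mem_filter, mem_univ, true_and, mem_singleton]
    rw [init_eq_term hr]
    have hrev := Fin.val_rev i1
    have hlt := i1.isLt
    have hlt2 := i.isLt
    constructor
    · rintro ⟨rfl, hsum⟩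
      rw [Prod.mk.injEq]
      exact ⟨rfl, Fin.ext (by omega)⟩
    · intro h
      rw [Prod.mk.injEq] at h
      obtain ⟨rfl, rfl⟩ := h
      refine ⟨rfl, by omega⟩
  · intro α hα' β hβ' hαt hβi
    obtain ⟨⟨k, i⟩, -, rfl⟩ := Finset.mem_image.mp hα'
    obtain ⟨⟨k', i'⟩, -, rfl⟩ := Finset.mem_image.mp hβ'
    dsimp only at hαt hβi
    obtain ⟨rfl, rfl⟩ := (term_eq_term hr).mp hαt
    obtain ⟨hk', hsum⟩ := (init_eq_term hr).mp hβi
    have hi' : i' = Fin.rev i := by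
      have := Fin.val_rev i
      have := i.isLt
      exact Fin.ext (by omega)
    subst hi'
    subst hk'
    exact inter_eq hr k i

lemma filter_inst {α : Type*} (s : Finset α) (p : α → Prop) (i1 i2 : DecidablePred p) :
    @Finset.filter α p i1 s = @Finset.filter α p i2 s := by
  ext x
  rw [@Finset.mem_filter _ _ i1, @Finset.mem_filter _ _ i2]

open Finset in
lemma card_rect (A : Fin 3 → Fin 3 → Prop) (B : Fin r → Fin r → Prop)
    {instP : DecidablePred (fun x : (Fin 3 × Fin r) × (Fin 3 × Fin r) => A x.1.1 x.2.1 ∧ B x.1.2 x.2.2)}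
    [instA : DecidablePred (fun y : Fin 3 × Fin 3 => A y.1 y.2)]
    [instB : DecidablePred (fun y : Fin r × Fin r => B y.1 y.2)] :
    (@Finset.filter _ (fun x : (Fin 3 × Fin r) × (Fin 3 × Fin r) => A x.1.1 x.2.1 ∧ B x.1.2 x.2.2)
        instP univ).card
      = (@Finset.filter _ (fun y : Fin 3 × Fin 3 => A y.1 y.2) instA univ).card *
        (@Finset.filter _ (fun y : Fin r × Fin r => B y.1 y.2) instB univ).card := by
  classical
  rw [filter_inst _ _ instP _, filter_inst _ _ instA _, filter_inst _ _ instB _]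
  rw [Finset.card_filter, Finset.card_filter, Finset.card_filter]
  have hsplit : ∀ (P Q : Prop) (h1 : Decidable P) (h2 : Decidable Q) (h3 : Decidable (P ∧ Q)),
      (@ite _ (P ∧ Q) h3 (1:ℕ) 0) = (@ite _ P h1 (1:ℕ) 0) * (@ite _ Q h2 (1:ℕ) 0) := by
    intro P Q h1 h2 h3
    by_cases hP : P <;> by_cases hQ : Q <;> simp [hP, hQ]
  let e : ((Fin 3 × Fin 3) × (Fin r × Fin r)) ≃ ((Fin 3 × Fin r) × (Fin 3 × Fin r)) :=
    { toFun := fun y => ((y.1.1, y.2.1), (y.1.2, y.2.2))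
      invFun := fun x => ((x.1.1, x.2.1), (x.1.2, x.2.2))
      left_inv := fun y => rfl
      right_inv := fun x => rfl }
  rw [← Equiv.sum_comp e (fun x : (Fin 3 × Fin r) × (Fin 3 × Fin r) =>
    if A x.1.1 x.2.1 ∧ B x.1.2 x.2.2 then (1:ℕ) else 0)]
  rw [Fintype.sum_prod_type, Finset.sum_mul_sum]
  apply Finset.sum_congr rfl
  intro y1 _
  apply Finset.sum_congr rfl
  intro y2 _
  exact hsplit _ _ _ _ _

open Finset in
lemma k_card : ((univ : Finset (Fin 3 × Fin 3)).filter (fun y => y.1 ≠ y.2)).card = 6 := by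
  decide

open Finset in
lemma k_card' [inst : DecidablePred (fun y : Fin 3 × Fin 3 => y.1 ≠ y.2)] :
    (@Finset.filter _ (fun y : Fin 3 × Fin 3 => y.1 ≠ y.2) inst univ).card = 6 := by
  rw [filter_inst _ _ inst _]
  exact k_card

open Finset in
lemma diag_card :
    ((univ : Finset (Fin r × Fin r)).filter
      (fun y : Fin r × Fin r => (y.1:ℕ) + (y.2:ℕ) + 1 = r)).card = r := by
  have key : ((univ : Finset (Fin r × Fin r)).filter
      (fun y : Fin r × Fin r => (y.1:ℕ) + (y.2:ℕ) + 1 = r)).card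
      = ((univ : Finset (Fin r)).card) := by
    refine Finset.card_bij' (fun a _ => a.1) (fun b _ => (b, Fin.rev b)) ?_ ?_ ?_ ?_
    · intro a _; exact mem_univ _
    · intro b _
      rw [mem_filter]
      refine ⟨mem_univ _, ?_⟩
      show (b:ℕ) + ((Fin.rev b : Fin r):ℕ) + 1 = r
      have := Fin.val_rev b
      have := b.isLt
      omega
    · intro a ha
      rw [mem_filter] at ha
      have h1 := Fin.val_rev a.1
      have h2 := a.1.isLt
      have h3 : Fin.rev a.1 = a.2 := Fin.ext (by omega)
      rw [Prod.ext_iff]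
      exact ⟨rfl, h3⟩
    · intro b _; rfl
  rw [key, card_univ, Fintype.card_fin]

open Finset in
lemma diag_card' [inst : DecidablePred (fun y : Fin r × Fin r => (y.1:ℕ) + (y.2:ℕ) + 1 = r)] :
    (@Finset.filter _ (fun y : Fin r × Fin r => (y.1:ℕ) + (y.2:ℕ) + 1 = r) inst univ).card = r := by
  rw [filter_inst _ _ inst _]
  exact diag_card

open Finset in
lemma cross_count0 :
    2 * ((univ : Finset (Fin r × Fin r)).filter
        (fun y : Fin r × Fin r => r ≤ (y.1:ℕ) + (y.2:ℕ))).card + r = r * r := by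
  classical
  have hpn := Finset.card_filter_add_card_filter_not
    (s := (univ : Finset (Fin r × Fin r))) (p := fun y : Fin r × Fin r => r ≤ (y.1:ℕ) + (y.2:ℕ))
  have hneg : (univ : Finset (Fin r × Fin r)).filter (fun y => ¬ (r ≤ (y.1:ℕ) + (y.2:ℕ)))
      = ((univ : Finset (Fin r × Fin r)).filter (fun y => (y.1:ℕ) + (y.2:ℕ) + 1 = r)) ∪
        ((univ : Finset (Fin r × Fin r)).filter (fun y => (y.1:ℕ) + (y.2:ℕ) + 1 < r)) := by
    rw [← Finset.filter_or]
    apply Finset.filter_congr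
    intro y _
    constructor
    · intro h; omega
    · intro h; omega
  have hdisj : Disjoint ((univ : Finset (Fin r × Fin r)).filter (fun y => (y.1:ℕ) + (y.2:ℕ) + 1 = r))
      ((univ : Finset (Fin r × Fin r)).filter (fun y => (y.1:ℕ) + (y.2:ℕ) + 1 < r)) := by
    rw [Finset.disjoint_left]
    intro y h1 h2
    rw [mem_filter] at h1 h2
    omega
  have hbij : ((univ : Finset (Fin r × Fin r)).filter (fun y => (y.1:ℕ) + (y.2:ℕ) + 1 < r)).card
      = ((univ : Finset (Fin r × Fin r)).filter (fun y => r ≤ (y.1:ℕ) + (y.2:ℕ))).card := by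
    refine Finset.card_bij' (fun a _ => (Fin.rev a.1, Fin.rev a.2))
      (fun a _ => (Fin.rev a.1, Fin.rev a.2)) ?_ ?_ ?_ ?_
    · intro a ha
      rw [mem_filter] at ha ⊢
      refine ⟨mem_univ _, ?_⟩
      show r ≤ ((Fin.rev a.1 : Fin r):ℕ) + ((Fin.rev a.2 : Fin r):ℕ)
      have := Fin.val_rev a.1; have := Fin.val_rev a.2
      have := a.1.isLt; have := a.2.isLt
      omega
    · intro a ha
      rw [mem_filter] at ha ⊢
      refine ⟨mem_univ _, ?_⟩
      show ((Fin.rev a.1 : Fin r):ℕ) + ((Fin.rev a.2 : Fin r):ℕ) + 1 < r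
      have := Fin.val_rev a.1; have := Fin.val_rev a.2
      have := a.1.isLt; have := a.2.isLt
      omega
    · intro a _
      simp [Fin.rev_rev]
    · intro a _
      simp [Fin.rev_rev]
  have hcard : ((univ : Finset (Fin r × Fin r))).card = r * r := by
    simp
  rw [hneg, Finset.card_union_of_disjoint hdisj, hbij, diag_card', hcard] at hpn
  omega

open Finset in
lemma cross_count [inst : DecidablePred (fun y : Fin r × Fin r => r ≤ (y.1:ℕ) + (y.2:ℕ))] :
    2 * (@Finset.filter _ (fun y : Fin r × Fin r => r ≤ (y.1:ℕ) + (y.2:ℕ)) inst univ).card + r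
      = r * r := by
  rw [filter_inst _ _ inst _]
  exact cross_count0

open Finset in
lemma card_family (hr : 0 < r) : (extremalFamily r).card = 3 * r := by
  unfold extremalFamily
  rw [Finset.card_image_of_injective _ (f_inj hr)]
  simp

open Finset in
lemma area_eq (hr : 0 < r) : diskArea (extremalFamily r) = (3/2 : ℝ) * (r:ℝ)^2 := by
  unfold diskArea
  have Hcross : Nat.card {p : Arc (3*(r:ℝ)) × Arc (3*(r:ℝ)) //
      p.1 ∈ extremalFamily r ∧ p.2 ∈ extremalFamily r ∧ p.1.Crosses p.2}
      = 6 * ((univ : Finset (Fin r × Fin r)).filter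
          (fun y : Fin r × Fin r => r ≤ (y.1:ℕ) + (y.2:ℕ))).card := by
    have hconv : Nat.card {p : Arc (3*(r:ℝ)) × Arc (3*(r:ℝ)) //
        p.1 ∈ extremalFamily r ∧ p.2 ∈ extremalFamily r ∧ p.1.Crosses p.2}
        = ((univ : Finset ((Fin 3 × Fin r) × (Fin 3 × Fin r))).filter
          (fun x => (extremalArc r x.1.1 x.1.2).Crosses (extremalArc r x.2.1 x.2.2))).card :=
      (nat_card_pair hr (fun α β => α.Crosses β)).trans
        (congrArg Finset.card (filter_inst _ _ _ _))
    rw [hconv]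
    have h1 : (univ : Finset ((Fin 3 × Fin r) × (Fin 3 × Fin r))).filter
          (fun x => (extremalArc r x.1.1 x.1.2).Crosses (extremalArc r x.2.1 x.2.2))
        = (univ : Finset ((Fin 3 × Fin r) × (Fin 3 × Fin r))).filter
          (fun x => (x.1.1 ≠ x.2.1) ∧ (r ≤ (x.1.2:ℕ) + (x.2.2:ℕ))) := by
      ext x
      simp only [mem_filter, mem_univ, true_and]
      exact crosses_char hr x.1.1 x.2.1 x.1.2 x.2.2
    rw [h1, card_rect (fun a b => a ≠ b) (fun a b => r ≤ (a:ℕ) + (b:ℕ)), k_card']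
  have Hshare : Nat.card {p : Arc (3*(r:ℝ)) × Arc (3*(r:ℝ)) //
      p.1 ∈ extremalFamily r ∧ p.2 ∈ extremalFamily r ∧ p.1 ≠ p.2 ∧ p.1.SharesEndpoint p.2}
      = 6 * r := by
    have hconv : Nat.card {p : Arc (3*(r:ℝ)) × Arc (3*(r:ℝ)) //
        p.1 ∈ extremalFamily r ∧ p.2 ∈ extremalFamily r ∧ p.1 ≠ p.2 ∧ p.1.SharesEndpoint p.2}
        = ((univ : Finset ((Fin 3 × Fin r) × (Fin 3 × Fin r))).filter
          (fun x => (extremalArc r x.1.1 x.1.2) ≠ (extremalArc r x.2.1 x.2.2) ∧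
            (extremalArc r x.1.1 x.1.2).SharesEndpoint (extremalArc r x.2.1 x.2.2))).card :=
      (nat_card_pair hr (fun α β => α ≠ β ∧ α.SharesEndpoint β)).trans
        (congrArg Finset.card (filter_inst _ _ _ _))
    rw [hconv]
    have h1 : (univ : Finset ((Fin 3 × Fin r) × (Fin 3 × Fin r))).filter
          (fun x => (extremalArc r x.1.1 x.1.2) ≠ (extremalArc r x.2.1 x.2.2) ∧
            (extremalArc r x.1.1 x.1.2).SharesEndpoint (extremalArc r x.2.1 x.2.2))
        = (univ : Finset ((Fin 3 × Fin r) × (Fin 3 × Fin r))).filter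
          (fun x => (x.1.1 ≠ x.2.1) ∧ ((x.1.2:ℕ) + (x.2.2:ℕ) + 1 = r)) := by
      ext x
      simp only [mem_filter, mem_univ, true_and]
      exact shares_char hr x.1.1 x.2.1 x.1.2 x.2.2
    rw [h1, card_rect (fun a b => a ≠ b) (fun a b => (a:ℕ) + (b:ℕ) + 1 = r), k_card', diag_card']
  rw [Hcross, Hshare]
  have h2C : 2 * ((univ : Finset (Fin r × Fin r)).filter
      (fun y : Fin r × Fin r => r ≤ (y.1:ℕ) + (y.2:ℕ))).card + r = r * r := cross_count0
  have h2CR : 2 * (((univ : Finset (Fin r × Fin r)).filter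
      (fun y : Fin r × Fin r => r ≤ (y.1:ℕ) + (y.2:ℕ))).card : ℝ) + (r:ℝ) = (r:ℝ) * (r:ℝ) := by
    exact_mod_cast h2C
  have hpow : ((r:ℝ))^2 = (r:ℝ) * (r:ℝ) := sq (r:ℝ)
  push_cast
  linarith [h2CR]

end EA

/-- **The extremal simple discrete disk** (existence part of Proposition 10.1 of the
paper): for every positive integer `r`, the family of the `3r` arcs of the circle
`ℝ/3rℤ` given by the intervals `[k·r - s, k·r + s]` for `k ∈ {0, 1, 2}` and
`s ∈ {1/2, 3/2, …, r - 1/2}` is an `r`-disk family of area exactly `(3/2)·r²`. -/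
theorem extremalFamily_isDiskFamily_area (r : ℕ) (hr : 0 < r) :
    IsDiskFamily r (extremalFamily r) ∧ (extremalFamily r).card = 3 * r ∧
      diskArea (extremalFamily r) = (3 / 2 : ℝ) * (r : ℝ) ^ 2 := by
  refine ⟨⟨?_, EA.part1 hr, fun p hp => EA.part2 hr p hp, fun p hp => EA.part3 hr p hp⟩,
    EA.card_family hr, EA.area_eq hr⟩
  have := EA.rpos (r := r) hr
  linarith
end
end

section
/- Let 𝕀 be an area-minimal r-disk family. Then there do not exist three distinct arcs γ, α, β of 𝕀 such that α and β are both contained in γ and such that α and β either cross or share an endpoint. -/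
noncomputable section

namespace DPF

variable {c : ℝ}

/-- image of a closed interval in the circle -/
def img (c : ℝ) (u v : ℝ) : Set (AddCircle c) :=
  (fun x : ℝ => (x : AddCircle c)) '' Set.Icc u v

lemma coe_eq_coe {x y : ℝ} : (x : AddCircle c) = (y : AddCircle c) ↔ ∃ k : ℤ, y = x + k * c := by
  rw [QuotientAddGroup.eq_iff_sub_mem, AddSubgroup.mem_zmultiples_iff]
  constructor
  · rintro ⟨k, hk⟩
    rw [zsmul_eq_mul] at hk
    exact ⟨-k, by push_cast; linarith⟩
  · rintro ⟨k, hk⟩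
    refine ⟨-k, ?_⟩
    rw [zsmul_eq_mul]
    push_cast
    linarith

lemma mem_img {x u v : ℝ} :
    (x : AddCircle c) ∈ img c u v ↔ ∃ k : ℤ, u ≤ x + k * c ∧ x + k * c ≤ v := by
  constructor
  · rintro ⟨t, ⟨ht1, ht2⟩, ht⟩
    rcases coe_eq_coe.1 ht with ⟨k, hk⟩
    exact ⟨-k, by push_cast; constructor <;> linarith⟩
  · rintro ⟨k, h1, h2⟩
    exact ⟨x + k * c, ⟨h1, h2⟩, by rw [coe_eq_coe]; exact ⟨-k, by push_cast; ring⟩⟩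

lemma mem_img_of {x u v : ℝ} (h1 : u ≤ x) (h2 : x ≤ v) : (x : AddCircle c) ∈ img c u v :=
  ⟨x, ⟨h1, h2⟩, rfl⟩

lemma not_mem_img (hc : 0 < c) {x u v : ℝ} (h1 : v < x) (h2 : x < u + c) :
    (x : AddCircle c) ∉ img c u v := by
  rw [mem_img]
  rintro ⟨k, hk1, hk2⟩
  rcases lt_trichotomy k 0 with h | h | h
  · have hk' : (k : ℝ) ≤ -1 := by exact_mod_cast (show k ≤ -1 by omega)
    nlinarith
  · subst h; simp at hk1 hk2; linarith
  · have hk' : (1 : ℝ) ≤ (k : ℝ) := by exact_mod_cast h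
    nlinarith

lemma coe_ne_coe (hc : 0 < c) {x y : ℝ} (h1 : x < y) (h2 : y < x + c) :
    (x : AddCircle c) ≠ (y : AddCircle c) := by
  rw [Ne, coe_eq_coe]
  rintro ⟨k, hk⟩
  rcases lt_trichotomy k 0 with h | h | h
  · have hk' : (k : ℝ) ≤ -1 := by exact_mod_cast (show k ≤ -1 by omega)
    nlinarith
  · subst h; simp at hk; linarith
  · have hk' : (1 : ℝ) ≤ (k : ℝ) := by exact_mod_cast h
    nlinarith

lemma img_mono {u v u' v' : ℝ} (h1 : u' ≤ u) (h2 : v ≤ v') : img c u v ⊆ img c u' v' :=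
  Set.image_mono (Set.Icc_subset_Icc h1 h2)

lemma img_shift (u v : ℝ) (k : ℤ) : img c (u + k * c) (v + k * c) = img c u v := by
  ext z
  constructor
  · rintro ⟨t, ⟨ht1, ht2⟩, rfl⟩
    exact ⟨t - k * c, ⟨by linarith, by linarith⟩, by
      rw [coe_eq_coe]; exact ⟨k, by ring⟩⟩
  · rintro ⟨t, ⟨ht1, ht2⟩, rfl⟩
    exact ⟨t + k * c, ⟨by linarith, by linarith⟩, by
      rw [coe_eq_coe]; exact ⟨-k, by push_cast; ring⟩⟩

lemma img_univ (hc : 0 < c) {u v : ℝ} (h : u + c ≤ v) : img c u v = Set.univ := by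
  ext z
  simp only [Set.mem_univ, iff_true]
  induction z using QuotientAddGroup.induction_on with
  | H x =>
    rcases existsUnique_add_zsmul_mem_Ico hc x u with ⟨k, ⟨hk1, hk2⟩, -⟩
    rw [zsmul_eq_mul] at hk1 hk2
    exact mem_img.2 ⟨k, ⟨by linarith, by linarith⟩⟩

lemma img_union {u v' v w : ℝ} (h1 : u ≤ v') (h2 : v' ≤ v) (h3 : v ≤ w) :
    img c u w = img c u v ∪ img c v' w := by
  have hIcc : Set.Icc u w = Set.Icc u v ∪ Set.Icc v' w := by
    ext t
    simp only [Set.mem_Icc, Set.mem_union]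
    constructor
    · rintro ⟨ht1, ht2⟩
      rcases le_or_gt t v with h | h
      · exact Or.inl ⟨ht1, h⟩
      · exact Or.inr ⟨by linarith, ht2⟩
    · rintro (⟨h1', h2'⟩ | ⟨h1', h2'⟩) <;> constructor <;> linarith
  unfold img
  rw [hIcc, Set.image_union]

lemma img_inter (hc : 0 < c) {a0 b0 a1 b1 : ℝ} (h1 : a0 ≤ b0) (h2 : b0 ≤ a1) (h3 : a1 ≤ b1)
    (h4 : b1 - a0 < c) : img c a0 a1 ∩ img c b0 b1 = img c b0 a1 := by
  apply Set.Subset.antisymm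
  · rintro z ⟨⟨t, ⟨ht1, ht2⟩, rfl⟩, hz2⟩
    rcases mem_img.1 hz2 with ⟨k, hk1, hk2⟩
    have hk0 : k = 0 := by
      rcases lt_trichotomy k 0 with h | h | h
      · have : (k : ℝ) ≤ -1 := by exact_mod_cast (show k ≤ -1 by omega)
        nlinarith
      · exact h
      · have : (1 : ℝ) ≤ (k : ℝ) := by exact_mod_cast h
        nlinarith
    subst hk0
    simp only [Int.cast_zero, zero_mul, add_zero] at hk1 hk2
    exact mem_img_of hk1 ht2
  · intro z hz
    exact ⟨img_mono h1 le_rfl hz, img_mono le_rfl h3 hz⟩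

/-- two abutting arcs which do not fill the circle meet only at the common endpoint -/
lemma img_inter_pt (hc : 0 < c) {u v w : ℝ} (h1 : u ≤ v) (h2 : v ≤ w) (h3 : w - u < c) :
    img c u v ∩ img c v w = {((v : ℝ) : AddCircle c)} := by
  apply Set.Subset.antisymm
  · rintro z ⟨⟨t, ⟨ht1, ht2⟩, rfl⟩, hz2⟩
    rcases mem_img.1 hz2 with ⟨k, hk1, hk2⟩
    have hk0 : k = 0 := by
      rcases lt_trichotomy k 0 with h | h | h
      · have : (k : ℝ) ≤ -1 := by exact_mod_cast (show k ≤ -1 by omega)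
        nlinarith
      · exact h
      · have : (1 : ℝ) ≤ (k : ℝ) := by exact_mod_cast h
        nlinarith
    subst hk0
    simp only [Int.cast_zero, zero_mul, add_zero] at hk1 hk2
    have : t = v := le_antisymm ht2 hk1
    simp [this]
  · rintro z rfl
    exact ⟨mem_img_of h1 le_rfl, mem_img_of le_rfl h2⟩

lemma rep_exists (hc : 0 < c) (z : AddCircle c) (u : ℝ) :
    ∃ x : ℝ, (x : AddCircle c) = z ∧ u ≤ x ∧ x < u + c := by
  induction z using QuotientAddGroup.induction_on with
  | H y =>
    rcases existsUnique_add_zsmul_mem_Ico hc y u with ⟨k, ⟨hk1, hk2⟩, -⟩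
    refine ⟨y + k • c, ?_, ?_, ?_⟩
    · rw [coe_eq_coe]; exact ⟨-k, by push_cast [zsmul_eq_mul]; ring⟩
    · exact hk1
    · exact hk2

lemma rep_unique (hc : 0 < c) {x y u v : ℝ} (hx1 : u ≤ x) (hx2 : x ≤ v) (hy1 : u ≤ y)
    (hy2 : y ≤ v) (hv : v < u + c) (h : (x : AddCircle c) = (y : AddCircle c)) : x = y := by
  rcases coe_eq_coe.1 h with ⟨k, hk⟩
  have hk0 : k = 0 := by
    rcases lt_trichotomy k 0 with h' | h' | h'
    · have : (k : ℝ) ≤ -1 := by exact_mod_cast (show k ≤ -1 by omega)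
      nlinarith
    · exact h'
    · have : (1 : ℝ) ≤ (k : ℝ) := by exact_mod_cast h'
      nlinarith
  subst hk0
  simpa using hk.symm

end DPF

section Chunk2

namespace DPF

variable {c : ℝ}

lemma mem_img_window (hc : 0 < c) {x u v L : ℝ} (hLu : L ≤ u) (hv : v < L + c)
    (hx1 : L ≤ x) (hx2 : x < L + c) (h : (x : AddCircle c) ∈ img c u v) :
    u ≤ x ∧ x ≤ v := by
  rcases mem_img.1 h with ⟨k, hk1, hk2⟩
  have hk0 : k = 0 := by
    rcases lt_trichotomy k 0 with h' | h' | h'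
    · have : (k : ℝ) ≤ -1 := by exact_mod_cast (show k ≤ -1 by omega)
      nlinarith
    · exact h'
    · have : (1 : ℝ) ≤ (k : ℝ) := by exact_mod_cast h'
      nlinarith
  subst hk0
  simp only [Int.cast_zero, zero_mul, add_zero] at hk1 hk2
  exact ⟨hk1, hk2⟩

lemma arc_toSet (α : Arc c) : α.toSet = img c α.a α.b := rfl

lemma init_mem (α : Arc c) : α.init ∈ α.toSet :=
  ⟨α.a, ⟨le_rfl, by linarith [α.width_pos]⟩, rfl⟩

lemma term_mem (α : Arc c) : α.term ∈ α.toSet :=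
  ⟨α.b, ⟨by linarith [α.width_pos], le_rfl⟩, rfl⟩

lemma shares_iff {x y : Arc c} : x.SharesEndpoint y ↔
    (x.init = y.init ∨ x.init = y.term ∨ x.term = y.init ∨ x.term = y.term) := by
  unfold Arc.SharesEndpoint Arc.endpoints
  rw [Set.inter_nonempty]
  simp only [Set.mem_insert_iff, Set.mem_singleton_iff]
  constructor
  · rintro ⟨z, (rfl | rfl), (h | h)⟩ <;> tauto
  · rintro (h | h | h | h)
    · exact ⟨x.init, Or.inl rfl, Or.inl h⟩
    · exact ⟨x.init, Or.inl rfl, Or.inr h⟩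
    · exact ⟨x.term, Or.inr rfl, Or.inl h⟩
    · exact ⟨x.term, Or.inr rfl, Or.inr h⟩

/-- An arc whose representatives are known. -/
lemma arc_reps (hc : 0 < c) (δ : Arc c) (L : ℝ) :
    ∃ d0 : ℝ, (d0 : AddCircle c) = δ.init ∧ ((d0 + δ.width : ℝ) : AddCircle c) = δ.term ∧
      δ.toSet = img c d0 (d0 + δ.width) ∧ L ≤ d0 ∧ d0 < L + c := by
  rcases rep_exists hc (δ.init : AddCircle c) L with ⟨d0, hd0, hL1, hL2⟩
  rcases coe_eq_coe.1 hd0.symm with ⟨k, hk⟩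
  refine ⟨d0, hd0, ?_, ?_, hL1, hL2⟩
  · show ((d0 + δ.width : ℝ) : AddCircle c) = ((δ.b : ℝ) : AddCircle c)
    rw [coe_eq_coe]
    exact ⟨-k, by push_cast; unfold Arc.width; linarith⟩
  · rw [arc_toSet, ← img_shift δ.a δ.b k,
      show δ.a + (k : ℝ) * c = d0 by linarith,
      show δ.b + (k : ℝ) * c = d0 + δ.width by unfold Arc.width; linarith]

lemma subset_reps (hc : 0 < c) {α γ : Arc c} (h : α.toSet ⊆ γ.toSet) :
    ∃ a0 : ℝ, (a0 : AddCircle c) = α.init ∧ ((a0 + α.width : ℝ) : AddCircle c) = α.term ∧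
      α.toSet = img c a0 (a0 + α.width) ∧ γ.a ≤ a0 ∧ a0 + α.width ≤ γ.b := by
  have hmem := h (init_mem α)
  rw [arc_toSet] at hmem
  rcases mem_img.1 hmem with ⟨k, hk1, hk2⟩
  set a0 := α.a + k * c with ha0
  have hinit : (a0 : AddCircle c) = α.init := by
    show _ = ((α.a : ℝ) : AddCircle c)
    rw [coe_eq_coe]; exact ⟨-k, by push_cast; ring⟩
  have hterm : ((a0 + α.width : ℝ) : AddCircle c) = α.term := by
    show _ = ((α.b : ℝ) : AddCircle c)
    rw [coe_eq_coe]; exact ⟨-k, by push_cast; unfold Arc.width; ring⟩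
  have hset : α.toSet = img c a0 (a0 + α.width) := by
    rw [arc_toSet, ← img_shift α.a α.b k,
      show α.a + (k : ℝ) * c = a0 by rw [ha0],
      show α.b + (k : ℝ) * c = a0 + α.width by rw [ha0]; unfold Arc.width; ring]
  refine ⟨a0, hinit, hterm, hset, hk1, ?_⟩
  by_contra hcon
  push_neg at hcon
  have hgw := γ.width_lt
  unfold Arc.width at hgw
  set t := (γ.b + min (a0 + α.width) (γ.a + c)) / 2 with ht
  have ht1 : γ.b < t := by
    have h1 : γ.b < a0 + α.width := hcon
    have h2 : γ.b < γ.a + c := by linarith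
    have := lt_min h1 h2
    simp only [ht]; linarith [lt_min h1 h2]
  have ht2 : t < a0 + α.width := by
    have := min_le_left (a0 + α.width) (γ.a + c); simp only [ht]; linarith
  have ht3 : t < γ.a + c := by
    have := min_le_right (a0 + α.width) (γ.a + c); simp only [ht]; linarith
  have htin : (t : AddCircle c) ∈ α.toSet := by
    rw [hset]; exact mem_img_of (by linarith) (by linarith)
  have := h htin
  rw [arc_toSet] at this
  rcases mem_img.1 this with ⟨k', hk1', hk2'⟩
  rcases lt_trichotomy k' 0 with h' | h' | h'
  · have : (k' : ℝ) ≤ -1 := by exact_mod_cast (show k' ≤ -1 by omega)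
    nlinarith
  · subst h'; simp at hk1' hk2'; linarith
  · have : (1 : ℝ) ≤ (k' : ℝ) := by exact_mod_cast h'
    nlinarith

end DPF

end Chunk2

section Chunk3

namespace DPF

variable {c : ℝ}

lemma xor_symm (hc : 0 < c) {x δ : Arc c} (hu : x.toSet ∪ δ.toSet ≠ Set.univ)
    (hs : ¬ x.SharesEndpoint δ) :
    (Xor' (δ.init ∈ x.toSet) (δ.term ∈ x.toSet) ↔
      Xor' (x.init ∈ δ.toSet) (x.term ∈ δ.toSet)) := by
  obtain ⟨d0, hd0, hd1, hδset, hw1, hw2⟩ := arc_reps hc δ x.a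
  set x0 := x.a with hx0
  set x1 := x.b with hx1
  set d1 := d0 + δ.width with hdd1
  have hxw : 0 < x1 - x0 := x.width_pos
  have hxw2 : x1 - x0 < c := x.width_lt
  have hdw : 0 < δ.width := δ.width_pos
  have hdw2 : δ.width < c := δ.width_lt
  have hxinit : x.init = ((x0 : ℝ) : AddCircle c) := rfl
  have hxterm : x.term = ((x1 : ℝ) : AddCircle c) := rfl
  -- endpoint distinctness
  have n_ii : ¬(x.init = δ.init) := fun h => hs (shares_iff.2 (Or.inl h))
  have n_it : ¬(x.init = δ.term) := fun h => hs (shares_iff.2 (Or.inr (Or.inl h)))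
  have n_ti : ¬(x.term = δ.init) := fun h => hs (shares_iff.2 (Or.inr (Or.inr (Or.inl h))))
  have n_tt : ¬(x.term = δ.term) := fun h => hs (shares_iff.2 (Or.inr (Or.inr (Or.inr h))))
  have ne1 : d0 ≠ x0 := fun h => n_ii (by rw [hxinit, ← hd0, h])
  have ne2 : d0 ≠ x1 := fun h => n_ti (by rw [hxterm, ← hd0, h])
  have ne3 : d1 ≠ x1 := fun h => n_tt (by rw [hxterm, ← hd1, h])
  have ne4 : d1 ≠ x0 + c := by
    intro h
    apply n_it
    rw [hxinit, ← hd1, coe_eq_coe]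
    exact ⟨1, by push_cast; linarith⟩
  have ne5 : d1 ≠ x1 + c := by
    intro h
    apply n_tt
    rw [hxterm, ← hd1, coe_eq_coe]
    exact ⟨1, by push_cast; linarith⟩
  have hd0x0 : x0 < d0 := lt_of_le_of_ne hw1 (Ne.symm ne1)
  -- membership characterizations
  have p1iff : (δ.init ∈ x.toSet) ↔ d0 < x1 := by
    constructor
    · intro h
      rw [← hd0, arc_toSet] at h
      have := mem_img_window hc (le_refl x0) (by linarith) hw1 hw2 h
      exact lt_of_le_of_ne this.2 ne2
    · intro h
      rw [← hd0, arc_toSet]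
      exact mem_img_of hw1 h.le
  have p2iff : (δ.term ∈ x.toSet) ↔ (d1 < x1 ∨ (x0 + c < d1 ∧ d1 < x1 + c)) := by
    constructor
    · intro h
      rw [← hd1, arc_toSet] at h
      rcases mem_img.1 h with ⟨k, hk1, hk2⟩
      rcases lt_trichotomy k 0 with h' | h' | h'
      · have hk' : (k : ℝ) ≤ -1 := by exact_mod_cast (show k ≤ -1 by omega)
        have hk'' : k = -1 := by
          by_contra hne
          have : (k : ℝ) ≤ -2 := by exact_mod_cast (show k ≤ -2 by omega)
          nlinarith
        subst hk''
        push_cast at hk1 hk2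
        refine Or.inr ⟨lt_of_le_of_ne (by linarith) (fun hh => ne4 (by linarith)), ?_⟩
        have : d1 - c ≤ x1 := by linarith
        exact lt_of_le_of_ne (by linarith) ne5
      · subst h'
        simp only [Int.cast_zero, zero_mul, add_zero] at hk1 hk2
        exact Or.inl (lt_of_le_of_ne hk2 ne3)
      · exfalso
        have hk' : (1 : ℝ) ≤ (k : ℝ) := by exact_mod_cast h'
        nlinarith
    · rintro (h | ⟨h1, h2⟩)
      · rw [← hd1, arc_toSet]
        exact mem_img_of (by linarith) h.le
      · rw [← hd1, arc_toSet]
        have : ((d1 : ℝ) : AddCircle c) = (((d1 - c : ℝ)) : AddCircle c) := by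
          rw [coe_eq_coe]; exact ⟨-1, by push_cast; ring⟩
        rw [this]
        exact mem_img_of (by linarith) (by linarith)
  have m1iff : (x.init ∈ δ.toSet) ↔ x0 + c < d1 := by
    constructor
    · intro h
      rw [hxinit] at h
      rw [hδset] at h
      rcases mem_img.1 h with ⟨k, hk1, hk2⟩
      have hk'' : k = 1 := by
        by_contra hne
        rcases lt_trichotomy k 1 with h' | h' | h'
        · have : (k : ℝ) ≤ 0 := by exact_mod_cast (show k ≤ 0 by omega)
          nlinarith
        · exact hne h'
        · have : (2 : ℝ) ≤ (k : ℝ) := by exact_mod_cast (show 2 ≤ k by omega)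
          nlinarith
      subst hk''
      push_cast at hk2
      exact lt_of_le_of_ne (by linarith) (Ne.symm ne4)
    · intro h
      rw [hxinit, hδset]
      have : (((x0 : ℝ)) : AddCircle c) = (((x0 + c : ℝ)) : AddCircle c) := by
        rw [coe_eq_coe]; exact ⟨1, by push_cast; ring⟩
      rw [this]
      exact mem_img_of (by linarith) h.le
  have m2iff : (x.term ∈ δ.toSet) ↔ ((d0 < x1 ∧ x1 < d1) ∨ x1 + c < d1) := by
    constructor
    · intro h
      rw [hxterm, hδset] at h
      rcases mem_img.1 h with ⟨k, hk1, hk2⟩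
      rcases lt_trichotomy k 0 with h' | h' | h'
      · exfalso
        have : (k : ℝ) ≤ -1 := by exact_mod_cast (show k ≤ -1 by omega)
        nlinarith
      · subst h'
        simp only [Int.cast_zero, zero_mul, add_zero] at hk1 hk2
        exact Or.inl ⟨lt_of_le_of_ne hk1 ne2, lt_of_le_of_ne hk2 (Ne.symm ne3)⟩
      · have hk'' : k = 1 := by
          by_contra hne
          have : (2 : ℝ) ≤ (k : ℝ) := by exact_mod_cast (show 2 ≤ k by omega)
          nlinarith
        subst hk''
        push_cast at hk1 hk2
        exact Or.inr (lt_of_le_of_ne (by linarith) (Ne.symm ne5))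
    · rintro (⟨h1, h2⟩ | h)
      · rw [hxterm, hδset]
        exact mem_img_of h1.le h2.le
      · rw [hxterm, hδset]
        have : (((x1 : ℝ)) : AddCircle c) = (((x1 + c : ℝ)) : AddCircle c) := by
          rw [coe_eq_coe]; exact ⟨1, by push_cast; ring⟩
        rw [this]
        exact mem_img_of (by linarith) h.le
  -- the union is not everything
  have huc : ¬(d0 ≤ x1 ∧ x0 + c ≤ d1) := by
    rintro ⟨h1, h2⟩
    apply hu
    apply Set.eq_univ_of_univ_subset
    rw [← img_univ hc (le_refl (x0 + c))]
    rw [img_union hw1 h1 (by linarith : x1 ≤ x0 + c)]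
    apply Set.union_subset_union
    · rw [arc_toSet]
    · rw [hδset]
      exact img_mono le_rfl h2
  rw [p1iff, p2iff, m1iff, m2iff]
  rcases lt_trichotomy d0 x1 with hA | hA | hA
  · have hB : ¬(x0 + c ≤ d1) := fun h => huc ⟨hA.le, h⟩
    push_neg at hB
    rcases lt_trichotomy d1 x1 with hC | hC | hC
    · have f1 : ¬(x0 + c < d1) := by linarith
      have f2 : ¬(x1 < d1) := by linarith
      have f3 : ¬(x1 + c < d1) := by linarith
      simp [Xor', hA, hC, f1, f2, f3]
    · exact absurd hC ne3
    · have f1 : ¬(d1 < x1) := by linarith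
      have f2 : ¬(x0 + c < d1) := by linarith
      have f3 : ¬(x1 + c < d1) := by linarith
      simp [Xor', hA, hC, f1, f2, f3]
  · exact absurd hA ne2
  · have f0 : ¬(d0 < x1) := by linarith
    have f4 : ¬(d1 < x1) := by nlinarith
    rcases lt_trichotomy d1 (x0 + c) with hC | hC | hC
    · have f1 : ¬(x0 + c < d1) := by linarith
      have f3 : ¬(x1 + c < d1) := by linarith
      simp [Xor', f0, f4, f1, f3]
    · exact absurd hC ne4
    · rcases lt_trichotomy d1 (x1 + c) with hD | hD | hD
      · have f3 : ¬(x1 + c < d1) := by linarith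
        simp [Xor', f0, f4, hC, hD, f3]
      · exact absurd hD ne5
      · have f3 : ¬(d1 < x1 + c) := by linarith
        simp [Xor', f0, f4, hC, hD, f3]

lemma crosses_iff (hc : 0 < c) {x δ : Arc c} (hu : x.toSet ∪ δ.toSet ≠ Set.univ) :
    x.Crosses δ ↔ ¬ x.SharesEndpoint δ ∧ Xor' (x.init ∈ δ.toSet) (x.term ∈ δ.toSet) := by
  unfold Arc.Crosses
  constructor
  · rintro ⟨hns, h | h⟩
    · exact ⟨hns, (xor_symm hc hu hns).1 h⟩
    · exact ⟨hns, h⟩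
  · rintro ⟨hns, h⟩
    exact ⟨hns, Or.inr h⟩

end DPF

end Chunk3

section Chunk4

namespace DPF

variable {c : ℝ}

attribute [local instance] Classical.propDecidable

lemma card_pairs (S : Finset (Arc c)) (R : Arc c → Arc c → Prop) :
    Nat.card {p : Arc c × Arc c // p.1 ∈ S ∧ p.2 ∈ S ∧ R p.1 p.2} =
      ∑ x ∈ S, ∑ y ∈ S, if R x y then 1 else 0 := by
  have h1 : Nat.card {p : Arc c × Arc c // p.1 ∈ S ∧ p.2 ∈ S ∧ R p.1 p.2} =
      ((S ×ˢ S).filter (fun p => R p.1 p.2)).card := by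
    rw [← Nat.card_eq_finsetCard]
    exact Nat.card_congr (Equiv.subtypeEquivRight (fun p => by
      simp [Finset.mem_filter, Finset.mem_product, and_assoc]))
  rw [h1, Finset.card_filter, Finset.sum_product]

/-- contribution of an ordered pair of arcs to (four times) the area -/
def W (x y : Arc c) : ℕ :=
  (if x.Crosses y then 2 else 0) + (if x ≠ y ∧ x.SharesEndpoint y then 1 else 0)

lemma shares_comm {x y : Arc c} : x.SharesEndpoint y ↔ y.SharesEndpoint x := by
  rw [shares_iff, shares_iff]
  constructor <;> rintro (h | h | h | h)
  · exact Or.inl h.symm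
  · exact Or.inr (Or.inr (Or.inl h.symm))
  · exact Or.inr (Or.inl h.symm)
  · exact Or.inr (Or.inr (Or.inr h.symm))
  · exact Or.inl h.symm
  · exact Or.inr (Or.inr (Or.inl h.symm))
  · exact Or.inr (Or.inl h.symm)
  · exact Or.inr (Or.inr (Or.inr h.symm))

lemma crosses_comm {x y : Arc c} : x.Crosses y ↔ y.Crosses x := by
  unfold Arc.Crosses
  constructor
  · rintro ⟨hn, h⟩
    exact ⟨fun hs => hn (shares_comm.1 hs), h.symm⟩
  · rintro ⟨hn, h⟩
    exact ⟨fun hs => hn (shares_comm.1 hs), h.symm⟩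

lemma W_symm (x y : Arc c) : W x y = W y x := by
  unfold W
  congr 1
  · exact if_congr crosses_comm rfl rfl
  · exact if_congr (and_congr ne_comm shares_comm) rfl rfl

lemma shares_self (x : Arc c) : x.SharesEndpoint x := shares_iff.2 (Or.inl rfl)

lemma W_self (x : Arc c) : W x x = 0 := by
  unfold W
  rw [if_neg (fun h => h.1 (shares_self x)), if_neg (fun h => h.1 rfl)]

lemma diskArea_eq (I : Finset (Arc c)) :
    diskArea I = ((∑ x ∈ I, ∑ y ∈ I, W x y : ℕ) : ℝ) / 4 := by
  unfold diskArea
  rw [card_pairs I (fun x y => x.Crosses y),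
    card_pairs I (fun x y => x ≠ y ∧ x.SharesEndpoint y)]
  have key : (∑ x ∈ I, ∑ y ∈ I, W x y) =
      2 * (∑ x ∈ I, ∑ y ∈ I, if x.Crosses y then 1 else 0) +
        (∑ x ∈ I, ∑ y ∈ I, if x ≠ y ∧ x.SharesEndpoint y then 1 else 0) := by
    rw [Finset.mul_sum, ← Finset.sum_add_distrib]
    refine Finset.sum_congr rfl fun x _ => ?_
    rw [Finset.mul_sum, ← Finset.sum_add_distrib]
    refine Finset.sum_congr rfl fun y _ => ?_
    unfold W
    split_ifs <;> norm_num
  rw [key]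
  push_cast
  ring

/-- an `if-then-else` with a frozen classical `Decidable` instance -/
def cif (P : Prop) (a b : ℕ) : ℕ := if P then a else b

lemma cif_pos {P : Prop} (h : P) (a b : ℕ) : cif P a b = a := if_pos h
lemma cif_neg {P : Prop} (h : ¬P) (a b : ℕ) : cif P a b = b := if_neg h

lemma boolKey (P1 P2 Q1 Q2 U1 U2 V1 V2 S1 S2 S3 S4 : Prop)
    (hU1 : U1 ↔ P1 ∨ Q1) (hU2 : U2 ↔ P2 ∨ Q2) (hV1 : V1 ↔ P1 ∧ Q1) (hV2 : V2 ↔ P2 ∧ Q2)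
    (h1 : S1 → P2 ∧ ¬Q2) (h2 : S2 → P2 ∧ Q2) (h3 : S3 → P1 ∧ Q1) (h4 : S4 → Q1 ∧ ¬P1) :
    (cif (¬(S1 ∨ S4) ∧ Xor' U1 U2) 2 0 + cif (S1 ∨ S4) 1 0)
      + (cif (¬(S2 ∨ S3) ∧ Xor' V1 V2) 2 0 + cif (S2 ∨ S3) 1 0)
    ≤ (cif (¬(S1 ∨ S3) ∧ Xor' P1 P2) 2 0 + cif (S1 ∨ S3) 1 0)
      + (cif (¬(S2 ∨ S4) ∧ Xor' Q1 Q2) 2 0 + cif (S2 ∨ S4) 1 0) := by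
  unfold cif
  by_cases hP1 : P1 <;> by_cases hP2 : P2 <;> by_cases hQ1 : Q1 <;> by_cases hQ2 : Q2 <;>
    by_cases hS1 : S1 <;> by_cases hS2 : S2 <;> by_cases hS3 : S3 <;> by_cases hS4 : S4 <;>
    simp_all [Xor']

lemma boolKeyM (P1 P2 Q1 Q2 M1 M2 S1 S4 : Prop)
    (hM1 : M1 ↔ P1 ∨ Q1) (hM2 : M2 ↔ P2 ∨ Q2)
    (h1 : S1 → P2 ∧ ¬Q2) (h4 : S4 → Q1 ∧ ¬P1) (hx1 : ¬(P1 ∧ Q1)) (hx2 : ¬(P2 ∧ Q2)) :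
    cif (¬(S1 ∨ S4) ∧ Xor' M1 M2) 2 0 + cif (S1 ∨ S4) 1 0
    ≤ (cif (¬S1 ∧ Xor' P1 P2) 2 0 + cif S1 1 0)
      + (cif (¬S4 ∧ Xor' Q1 Q2) 2 0 + cif S4 1 0) := by
  unfold cif
  by_cases hP1 : P1 <;> by_cases hP2 : P2 <;> by_cases hQ1 : Q1 <;> by_cases hQ2 : Q2 <;>
    by_cases hS1 : S1 <;> by_cases hS4 : S4 <;>
    simp_all [Xor']

lemma unique_term {r : ℕ} {I : Finset (Arc c)} (hI : IsDiskFamily r I)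
    {x y : Arc c} (hx : x ∈ I) (hy : y ∈ I) (h : x.term = y.term) : x = y := by
  obtain ⟨-, -, -, hiii⟩ := hI
  have hp := (hiii y.term ⟨y, hy, Set.mem_insert_iff.2 (Or.inr rfl)⟩).1
  rw [Nat.card_eq_one_iff_unique] at hp
  have e := @Subsingleton.elim _ hp.1 ⟨x, hx, h⟩ ⟨y, hy, rfl⟩
  exact congrArg Subtype.val e

lemma unique_init {r : ℕ} {I : Finset (Arc c)} (hI : IsDiskFamily r I)
    {x y : Arc c} (hx : x ∈ I) (hy : y ∈ I) (h : x.init = y.init) : x = y := by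
  obtain ⟨-, -, -, hiii⟩ := hI
  have hp := (hiii y.init ⟨y, hy, Set.mem_insert_iff.2 (Or.inl rfl)⟩).2.1
  rw [Nat.card_eq_one_iff_unique] at hp
  have e := @Subsingleton.elim _ hp.1 ⟨x, hx, h⟩ ⟨y, hy, rfl⟩
  exact congrArg Subtype.val e

end DPF

end Chunk4

section Chunk5

namespace DPF

variable {c : ℝ}

attribute [local instance] Classical.propDecidable

lemma ne_univ_mono {s t : Set (AddCircle c)} (hsub : s ⊆ t) (hne : t ≠ Set.univ) :
    s ≠ Set.univ := fun h => hne (Set.univ_subset_iff.1 (h ▸ hsub))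

lemma card_subtype (S : Finset (Arc c)) (P : Arc c → Prop) :
    Nat.card {x : Arc c // x ∈ S ∧ P x} = (S.filter P).card := by
  rw [← Nat.card_eq_finsetCard]
  exact Nat.card_congr (Equiv.subtypeEquivRight (fun x => by simp [Finset.mem_filter]))

lemma card_filter_insert2 (S : Finset (Arc c)) (u v : Arc c) (P : Arc c → Prop)
    (hu : u ∉ S) (hv : v ∉ S) (huv : u ≠ v) :
    ((insert u (insert v S)).filter P).card =
      (S.filter P).card + (if P u then 1 else 0) + (if P v then 1 else 0) := by
  rw [Finset.filter_insert, Finset.filter_insert]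
  by_cases h1 : P u <;> by_cases h2 : P v
  · rw [if_pos h1, if_pos h2,
      Finset.card_insert_of_notMem (by simp [Finset.mem_filter, huv, hu]),
      Finset.card_insert_of_notMem (by simp [Finset.mem_filter, hv])]
    simp [h1, h2]
  · rw [if_pos h1, if_neg h2,
      Finset.card_insert_of_notMem (by simp [Finset.mem_filter, hu])]
    simp [h1, h2]
  · rw [if_neg h1, if_pos h2,
      Finset.card_insert_of_notMem (by simp [Finset.mem_filter, hv])]
    simp [h1, h2]
  · rw [if_neg h1, if_neg h2]
    simp [h1, h2]

lemma card_filter_insert1 (S : Finset (Arc c)) (u : Arc c) (P : Arc c → Prop)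
    (hu : u ∉ S) :
    ((insert u S).filter P).card = (S.filter P).card + (if P u then 1 else 0) := by
  rw [Finset.filter_insert]
  by_cases h1 : P u
  · rw [if_pos h1, Finset.card_insert_of_notMem (by simp [Finset.mem_filter, hu])]
    simp [h1]
  · rw [if_neg h1]
    simp [h1]

lemma sum2_insert2 (S : Finset (Arc c)) (a b : Arc c) (ha : a ∉ S) (hb : b ∉ S)
    (hab : a ≠ b) (f : Arc c → Arc c → ℕ) :
    ∑ x ∈ insert a (insert b S), ∑ y ∈ insert a (insert b S), f x y
      = (∑ x ∈ S, ∑ y ∈ S, f x y) + (∑ x ∈ S, (f x a + f x b + f a x + f b x))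
        + (f a a + f a b + f b a + f b b) := by
  have haT : a ∉ insert b S := by simp [hab, ha]
  rw [Finset.sum_insert haT, Finset.sum_insert hb]
  simp only [Finset.sum_insert haT, Finset.sum_insert hb, Finset.sum_add_distrib]
  ring

lemma sum2_insert1 (S : Finset (Arc c)) (a : Arc c) (ha : a ∉ S) (f : Arc c → Arc c → ℕ) :
    ∑ x ∈ insert a S, ∑ y ∈ insert a S, f x y
      = (∑ x ∈ S, ∑ y ∈ S, f x y) + (∑ x ∈ S, (f x a + f a x)) + f a a := by
  rw [Finset.sum_insert ha]
  simp only [Finset.sum_insert ha, Finset.sum_add_distrib]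
  ring

/-- if an arc starts at a point of `γ` and together with `γ` does not cover the circle,
it does not wrap around past the start of `γ`. -/
lemma wrap_bound_init (hc : 0 < c) {y γ : Arc c} (hne : γ.toSet ∪ y.toSet ≠ Set.univ)
    {b1 : ℝ} (hin : (b1 : AddCircle c) = y.init) (h1 : γ.a ≤ b1) (h2 : b1 ≤ γ.b) :
    y.toSet = img c b1 (b1 + y.width) ∧ b1 + y.width < γ.a + c := by
  rcases coe_eq_coe.1 hin with ⟨k, hk⟩
  have hset : y.toSet = img c b1 (b1 + y.width) := by
    have e1 : y.a = b1 + (k : ℝ) * c := hk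
    have e2 : y.b = (b1 + y.width) + (k : ℝ) * c := by unfold Arc.width; linarith
    rw [arc_toSet, e1, e2, img_shift]
  refine ⟨hset, ?_⟩
  by_contra hcon
  push_neg at hcon
  apply hne
  apply Set.eq_univ_of_univ_subset
  have hγw : γ.b - γ.a < c := γ.width_lt
  rw [← img_univ hc (le_refl (γ.a + c)),
    img_union (show γ.a ≤ b1 from h1) (show b1 ≤ γ.b from h2)
      (show γ.b ≤ γ.a + c by linarith)]
  apply Set.union_subset_union
  · rw [arc_toSet]
  · rw [hset]
    exact img_mono le_rfl hcon

/-- mirror image: an arc ending at a point of `γ` does not wrap past the end of `γ`. -/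
lemma wrap_bound_term (hc : 0 < c) {y γ : Arc c} (hne : γ.toSet ∪ y.toSet ≠ Set.univ)
    {a0 : ℝ} (hin : (a0 : AddCircle c) = y.term) (h1 : γ.a ≤ a0) (h2 : a0 ≤ γ.b) :
    y.toSet = img c (a0 - y.width) a0 ∧ γ.b - c < a0 - y.width := by
  rcases coe_eq_coe.1 hin with ⟨k, hk⟩
  have hset : y.toSet = img c (a0 - y.width) a0 := by
    have e2 : y.b = a0 + (k : ℝ) * c := hk
    have e1 : y.a = (a0 - y.width) + (k : ℝ) * c := by unfold Arc.width; linarith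
    rw [arc_toSet, e1, e2, img_shift]
  refine ⟨hset, ?_⟩
  by_contra hcon
  push_neg at hcon
  apply hne
  apply Set.eq_univ_of_univ_subset
  have hγw : γ.b - γ.a < c := γ.width_lt
  rw [← img_univ hc (show (γ.b - c) + c ≤ γ.b by linarith),
    img_union (show γ.b - c ≤ γ.a by linarith) (show γ.a ≤ a0 from h1)
      (show a0 ≤ γ.b from h2)]
  rw [Set.union_comm (img c (γ.b - c) a0) _]
  apply Set.union_subset_union
  · rw [arc_toSet]
  · rw [hset]
    exact img_mono hcon le_rfl

lemma W_eq_cif {x y : Arc c} (hc : 0 < c) (hu : x.toSet ∪ y.toSet ≠ Set.univ)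
    (hne : x ≠ y) {S : Prop} (hsh : x.SharesEndpoint y ↔ S) :
    W x y = cif (¬S ∧ Xor' (x.init ∈ y.toSet) (x.term ∈ y.toSet)) 2 0 + cif S 1 0 := by
  unfold W
  rcases Classical.em S with hs | hs
  · rw [cif_pos hs,
      cif_neg (show ¬(¬S ∧ Xor' (x.init ∈ y.toSet) (x.term ∈ y.toSet)) from fun h => h.1 hs),
      if_neg (show ¬ x.Crosses y from fun hcr => ((crosses_iff hc hu).1 hcr).1 (hsh.2 hs)),
      if_pos (show x ≠ y ∧ x.SharesEndpoint y from ⟨hne, hsh.2 hs⟩)]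
  · rcases Classical.em (Xor' (x.init ∈ y.toSet) (x.term ∈ y.toSet)) with hx | hx
    · rw [cif_pos (show (¬S ∧ Xor' (x.init ∈ y.toSet) (x.term ∈ y.toSet)) from ⟨hs, hx⟩),
        cif_neg hs,
        if_pos ((crosses_iff hc hu).2 ⟨fun h => hs (hsh.1 h), hx⟩),
        if_neg (show ¬(x ≠ y ∧ x.SharesEndpoint y) from fun h => hs (hsh.1 h.2))]
    · rw [cif_neg (show ¬(¬S ∧ Xor' (x.init ∈ y.toSet) (x.term ∈ y.toSet)) from fun h => hx h.2),
        cif_neg hs,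
        if_neg (show ¬ x.Crosses y from fun h => hx ((crosses_iff hc hu).1 h).2),
        if_neg (show ¬(x ≠ y ∧ x.SharesEndpoint y) from fun h => hs (hsh.1 h.2))]

end DPF

end Chunk5

section Chunk6

namespace DPF

variable {c : ℝ}

attribute [local instance] Classical.propDecidable

lemma count_at_endpoint {r : ℕ} {I : Finset (Arc c)} (hI : IsDiskFamily r I)
    {β : Arc c} (hβ : β ∈ I) {p : ℝ} (hp : (p : AddCircle c) = β.init) :
    Nat.card {x : Arc c // x ∈ I ∧ (p : AddCircle c) ∈ x.toSet} = r + 1 := by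
  obtain ⟨hc, hi, hii, hiii⟩ := hI
  have huniqβ : ∀ x ∈ I, x.init = ((p : ℝ) : AddCircle c) → x = β := fun x hx h =>
    unique_init ⟨hc, hi, hii, hiii⟩ hx hβ (h.trans hp)
  -- pointwise slack
  have pointwise : ∀ x : Arc c, x ∈ I → ∃ s, 0 < s ∧ ∀ h : ℝ, 0 < h → h < s →
      (((p - h : ℝ) : AddCircle c) ∈ x.toSet ↔
        ((p : AddCircle c) ∈ x.toSet ∧ x ≠ β)) := by
    intro x hx
    by_cases hxβ : x = β
    · subst hxβ
      have hwlt : x.width < c := x.width_lt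
      refine ⟨c - x.width, by linarith, fun h h0 hs => ?_⟩
      apply iff_of_false
      · rcases coe_eq_coe.1 hp with ⟨k, hk⟩
        have hxset : x.toSet = img c p (p + x.width) := by
          have e1 : x.a = p + (k : ℝ) * c := hk
          have e2 : x.b = (p + x.width) + (k : ℝ) * c := by unfold Arc.width; linarith
          rw [arc_toSet, e1, e2, img_shift]
        rw [hxset]
        have hrw : ((p - h : ℝ) : AddCircle c) = ((p - h + c : ℝ) : AddCircle c) := by
          rw [coe_eq_coe]; exact ⟨1, by push_cast; ring⟩
        rw [hrw]
        exact not_mem_img hc (by linarith) (by linarith)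
      · rintro ⟨-, hne⟩; exact hne rfl
    · by_cases hpx : (p : AddCircle c) ∈ x.toSet
      · have hpx' := hpx
        rw [arc_toSet] at hpx'
        rcases mem_img.1 hpx' with ⟨k, hk1, hk2⟩
        have hne : x.a ≠ p + k * c := by
          intro he
          apply hxβ
          apply huniqβ x hx
          show ((x.a : ℝ) : AddCircle c) = _
          rw [he, coe_eq_coe]
          exact ⟨-k, by push_cast; ring⟩
        refine ⟨p + k * c - x.a, by cases lt_or_eq_of_le hk1 with
          | inl h => linarith
          | inr h => exact absurd h hne, fun h h0 hs => ?_⟩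
        apply iff_of_true
        · have hrw : ((p - h : ℝ) : AddCircle c) = ((p - h + k * c : ℝ) : AddCircle c) := by
            rw [coe_eq_coe]; exact ⟨k, by ring⟩
          rw [hrw, arc_toSet]
          exact mem_img_of (by linarith) (by linarith)
        · exact ⟨hpx, hxβ⟩
      · set k₀ := ⌊(x.b - p) / c⌋ with hk₀
        have hfl1 : (k₀ : ℝ) * c ≤ x.b - p := by
          rw [← div_mul_cancel₀ (x.b - p) (ne_of_gt hc)]
          exact mul_le_mul_of_nonneg_right (Int.floor_le _) hc.le
        have hfl2 : x.b - p < ((k₀ : ℝ) + 1) * c := by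
          rw [← div_mul_cancel₀ (x.b - p) (ne_of_gt hc)]
          exact mul_lt_mul_of_pos_right (Int.lt_floor_add_one _) hc
        have hax : p + (k₀ : ℝ) * c < x.a := by
          by_contra hcon
          push_neg at hcon
          exact hpx (by rw [arc_toSet]; exact mem_img.2 ⟨k₀, hcon, by linarith⟩)
        refine ⟨p + ((k₀ : ℝ) + 1) * c - x.b, by linarith, fun h h0 hs => ?_⟩
        apply iff_of_false
        · intro hmem
          rw [arc_toSet] at hmem
          rcases mem_img.1 hmem with ⟨k, hka, hkb⟩
          have hgt : (k₀ : ℝ) * c + h < (k : ℝ) * c := by linarith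
          have hkk : k₀ < k := by
            by_contra hcon
            push_neg at hcon
            have : (k : ℝ) ≤ (k₀ : ℝ) := by exact_mod_cast hcon
            nlinarith
          have : ((k₀ : ℝ) + 1) ≤ (k : ℝ) := by exact_mod_cast hkk
          nlinarith
        · rintro ⟨hmem, -⟩; exact hpx hmem
  -- a uniform slack for all arcs of the family
  have global : ∀ S : Finset (Arc c), ∃ s, 0 < s ∧ ∀ x ∈ S, x ∈ I → ∀ h : ℝ, 0 < h → h < s →
      (((p - h : ℝ) : AddCircle c) ∈ x.toSet ↔
        ((p : AddCircle c) ∈ x.toSet ∧ x ≠ β)) := by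
    intro S
    induction S using Finset.induction_on with
    | empty => exact ⟨1, one_pos, by simp⟩
    | @insert a S' hnew ih =>
      obtain ⟨s, hs0, hs⟩ := ih
      by_cases hin : a ∈ I
      · obtain ⟨t, ht0, ht⟩ := pointwise a hin
        refine ⟨min s t, lt_min hs0 ht0, fun x hx hxI h h0 hlt => ?_⟩
        rcases Finset.mem_insert.1 hx with rfl | hx'
        · exact ht h h0 (lt_of_lt_of_le hlt (min_le_right _ _))
        · exact hs x hx' hxI h h0 (lt_of_lt_of_le hlt (min_le_left _ _))
      · refine ⟨s, hs0, fun x hx hxI h h0 hlt => ?_⟩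
        rcases Finset.mem_insert.1 hx with rfl | hx'
        · exact absurd hxI hin
        · exact hs x hx' hxI h h0 hlt
  obtain ⟨s0, hs00, hglob⟩ := global I
  -- endpoints form a finite set
  have hEfin : Set.Finite (⋃ x ∈ (I : Set (Arc c)), x.endpoints) :=
    Set.Finite.biUnion I.finite_toSet (fun x _ => (Set.finite_singleton _).insert _)
  -- choose h avoiding all endpoints
  have hinj : Set.InjOn (fun h : ℝ => ((p - h : ℝ) : AddCircle c))
      (Set.Ioo 0 (min s0 c)) := by
    intro h1 h1m h2 h2m heq
    rcases coe_eq_coe.1 heq with ⟨k, hk⟩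
    rcases h1m with ⟨h1a, h1b⟩
    rcases h2m with ⟨h2a, h2b⟩
    have h1c : h1 < c := lt_of_lt_of_le h1b (min_le_right _ _)
    have h2c : h2 < c := lt_of_lt_of_le h2b (min_le_right _ _)
    have hk0 : k = 0 := by
      rcases lt_trichotomy k 0 with h' | h' | h'
      · have : (k : ℝ) ≤ -1 := by exact_mod_cast (show k ≤ -1 by omega)
        nlinarith
      · exact h'
      · have : (1 : ℝ) ≤ (k : ℝ) := by exact_mod_cast h'
        nlinarith
    subst hk0
    simp only [Int.cast_zero, zero_mul, add_zero] at hk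
    linarith
  have hbadsub : (fun h : ℝ => ((p - h : ℝ) : AddCircle c)) ''
      (Set.Ioo 0 (min s0 c) ∩ (fun h : ℝ => ((p - h : ℝ) : AddCircle c)) ⁻¹'
        (⋃ x ∈ (I : Set (Arc c)), x.endpoints)) ⊆ ⋃ x ∈ (I : Set (Arc c)), x.endpoints := by
    rintro z ⟨h, ⟨-, hpre⟩, rfl⟩
    exact hpre
  have hbadfin : Set.Finite (Set.Ioo 0 (min s0 c) ∩
      (fun h : ℝ => ((p - h : ℝ) : AddCircle c)) ⁻¹' (⋃ x ∈ (I : Set (Arc c)), x.endpoints)) :=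
    Set.Finite.of_finite_image (hEfin.subset hbadsub) (hinj.mono Set.inter_subset_left)
  have hnon : Set.Nonempty (Set.Ioo 0 (min s0 c) \ (Set.Ioo 0 (min s0 c) ∩
      (fun h : ℝ => ((p - h : ℝ) : AddCircle c)) ⁻¹'
        (⋃ x ∈ (I : Set (Arc c)), x.endpoints))) :=
    ((Set.Ioo_infinite (lt_min hs00 hc)).diff hbadfin).nonempty
  obtain ⟨h, hmem, hbad⟩ := hnon
  obtain ⟨hh0, hhs⟩ := hmem
  have hnotE : ((p - h : ℝ) : AddCircle c) ∉ ⋃ x ∈ (I : Set (Arc c)), x.endpoints :=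
    fun hE => hbad ⟨⟨hh0, hhs⟩, hE⟩
  have hq_noend : ∀ x ∈ I, ((p - h : ℝ) : AddCircle c) ∉ x.endpoints := by
    intro x hx hend
    exact hnotE (Set.mem_biUnion hx hend)
  have hcard_q := hii _ hq_noend
  rw [card_subtype] at hcard_q ⊢
  have hfilter : I.filter (fun x => ((p : ℝ) : AddCircle c) ∈ x.toSet) =
      insert β (I.filter (fun x => ((p - h : ℝ) : AddCircle c) ∈ x.toSet)) := by
    ext x
    simp only [Finset.mem_filter, Finset.mem_insert]
    constructor
    · rintro ⟨hxI, hxp⟩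
      by_cases hxβ : x = β
      · exact Or.inl hxβ
      · exact Or.inr ⟨hxI,
          (hglob x hxI hxI h hh0 (lt_of_lt_of_le hhs (min_le_left _ _))).2 ⟨hxp, hxβ⟩⟩
    · rintro (rfl | ⟨hxI, hxq⟩)
      · exact ⟨hβ, by rw [hp]; exact init_mem x⟩
      · exact ⟨hxI,
          ((hglob x hxI hxI h hh0 (lt_of_lt_of_le hhs (min_le_left _ _))).1 hxq).1⟩
  have hβnot : β ∉ I.filter (fun x => ((p - h : ℝ) : AddCircle c) ∈ x.toSet) := by
    simp only [Finset.mem_filter, not_and]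
    intro _ hq
    exact ((hglob β hβ hβ h hh0 (lt_of_lt_of_le hhs (min_le_left _ _))).1 hq).2 rfl
  rw [hfilter, Finset.card_insert_of_notMem hβnot, hcard_q]

end DPF

end Chunk6

section Chunk7

namespace DPF

variable {c : ℝ}

attribute [local instance] Classical.propDecidable

lemma keyCross {r : ℕ} {I : Finset (Arc c)} (hmin : IsAreaMinimal r I)
    {γ α β : Arc c} (hγ : γ ∈ I) (hα : α ∈ I) (hβ : β ∈ I)
    (hγα : γ ≠ α) (hγβ : γ ≠ β) (hαβ : α ≠ β)
    (hsubα : α.toSet ⊆ γ.toSet) (hsubβ : β.toSet ⊆ γ.toSet)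
    (hcr : α.Crosses β)
    (hbi : β.init ∈ α.toSet) (hbt : β.term ∉ α.toSet) : False := by
  obtain ⟨hD, hminle⟩ := hmin
  obtain ⟨hc, hi, hii, hiii⟩ := hD
  have hD' : IsDiskFamily r I := ⟨hc, hi, hii, hiii⟩
  have hns : ¬ α.SharesEndpoint β := hcr.1
  have hγw : γ.b - γ.a < c := γ.width_lt
  have hγw0 : 0 < γ.b - γ.a := γ.width_pos
  obtain ⟨a0, ha0i, ha1t, hαset, hga0, ha1g⟩ := subset_reps hc hsubα
  set a1 := a0 + α.width with ha1def
  obtain ⟨b0, hb0i, hb1t, hβset, hgb0, hb1g⟩ := subset_reps hc hsubβ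
  set b1 := b0 + β.width with hb1def
  have hαw : 0 < α.width := α.width_pos
  have hβw : 0 < β.width := β.width_pos
  have ha0a1 : a0 < a1 := by rw [ha1def]; linarith
  have hb0b1 : b0 < b1 := by rw [hb1def]; linarith
  -- b0 lies in [a0, a1]
  have hbi' : ((b0 : ℝ) : AddCircle c) ∈ img c a0 a1 := by
    rw [← hαset, hb0i]; exact hbi
  obtain ⟨hab0, hb0a1⟩ := mem_img_window hc hga0 (by linarith) hgb0 (by linarith) hbi'
  -- strict inequalities
  have ha0b0 : a0 < b0 := by
    rcases lt_or_eq_of_le hab0 with h | h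
    · exact h
    · exact absurd (shares_iff.2 (Or.inl (by rw [← ha0i, ← hb0i, h]))) hns
  have hb0a1' : b0 < a1 := by
    rcases lt_or_eq_of_le hb0a1 with h | h
    · exact h
    · exact absurd (shares_iff.2 (Or.inr (Or.inr (Or.inl (by rw [← ha1t, ← hb0i, h]))))) hns
  have ha1b1 : a1 < b1 := by
    by_contra hcon
    push_neg at hcon
    apply hbt
    rw [← hb1t, hαset]
    exact mem_img_of (by linarith) hcon
  have hb1c : b1 - a0 < c := by linarith
  -- the two new arcs
  set U : Arc c := ⟨a0, b1, by linarith, by linarith⟩ with hUdef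
  set V : Arc c := ⟨b0, a1, by linarith, by linarith⟩ with hVdef
  have hUset : U.toSet = img c a0 b1 := rfl
  have hVset : V.toSet = img c b0 a1 := rfl
  have hUαβ : U.toSet = α.toSet ∪ β.toSet := by
    rw [hUset, hαset, hβset]
    exact img_union hab0 hb0a1 ha1b1.le
  have hVαβ : V.toSet = α.toSet ∩ β.toSet := by
    rw [hVset, hαset, hβset]
    exact (img_inter hc ha0b0.le hb0a1 ha1b1.le hb1c).symm
  -- distinctness of the four circle points
  have n01 : ((a0 : ℝ) : AddCircle c) ≠ ((b0 : ℝ) : AddCircle c) :=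
    coe_ne_coe hc ha0b0 (by linarith)
  have n02 : ((a0 : ℝ) : AddCircle c) ≠ ((a1 : ℝ) : AddCircle c) :=
    coe_ne_coe hc ha0a1 (by linarith)
  have n03 : ((a0 : ℝ) : AddCircle c) ≠ ((b1 : ℝ) : AddCircle c) :=
    coe_ne_coe hc (by linarith) (by linarith)
  have n12 : ((b0 : ℝ) : AddCircle c) ≠ ((a1 : ℝ) : AddCircle c) :=
    coe_ne_coe hc hb0a1' (by linarith)
  have n13 : ((b0 : ℝ) : AddCircle c) ≠ ((b1 : ℝ) : AddCircle c) :=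
    coe_ne_coe hc hb0b1 (by linarith)
  have n23 : ((a1 : ℝ) : AddCircle c) ≠ ((b1 : ℝ) : AddCircle c) :=
    coe_ne_coe hc ha1b1 (by linarith)
  -- U, V are not already in the family
  have hUI : U ∉ I := by
    intro hUI
    have hUα : U = α := unique_init hD' hUI hα (by rw [← ha0i]; rfl)
    have h1 : ((b1 : ℝ) : AddCircle c) = α.term := by rw [← hUα]; rfl
    rw [← ha1t] at h1
    exact n23 h1.symm
  have hVI : V ∉ I := by
    intro hVI
    have hVβ : V = β := unique_init hD' hVI hβ (by rw [← hb0i]; rfl)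
    have h1 : ((a1 : ℝ) : AddCircle c) = β.term := by rw [← hVβ]; rfl
    rw [← hb1t] at h1
    exact n23 h1
  have hUV : U ≠ V := by
    intro h
    have := congrArg Arc.a h
    simp only [hUdef, hVdef] at this
    linarith
  -- decomposition of the family
  set I' := (I.erase α).erase β with hI'def
  have hβmem' : β ∈ I.erase α := Finset.mem_erase.2 ⟨hαβ.symm, hβ⟩
  have hIdecomp : I = insert α (insert β I') := by
    rw [hI'def, Finset.insert_erase hβmem', Finset.insert_erase hα]
  have hαI' : α ∉ I' := by
    intro h
    exact (Finset.mem_erase.1 (Finset.mem_erase.1 h).2).1 rfl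
  have hβI' : β ∉ I' := fun h => (Finset.mem_erase.1 h).1 rfl
  have hI'I : ∀ x ∈ I', x ∈ I := fun x h =>
    (Finset.mem_erase.1 (Finset.mem_erase.1 h).2).2
  have hI'ne : ∀ x ∈ I', x ≠ α ∧ x ≠ β := fun x h =>
    ⟨(Finset.mem_erase.1 (Finset.mem_erase.1 h).2).1, (Finset.mem_erase.1 h).1⟩
  have hUI' : U ∉ insert V I' := by
    intro h
    rcases Finset.mem_insert.1 h with h | h
    · exact hUV h
    · exact hUI (hI'I _ h)
  have hVI' : V ∉ I' := fun h => hVI (hI'I _ h)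
  set J := insert U (insert V I') with hJdef
  -- membership facts for the four points
  have ha0α : ((a0 : ℝ) : AddCircle c) ∈ α.toSet := by
    rw [hαset]; exact mem_img_of le_rfl (by linarith)
  have ha1α : ((a1 : ℝ) : AddCircle c) ∈ α.toSet := by
    rw [hαset]; exact mem_img_of (by linarith) le_rfl
  have hb0α : ((b0 : ℝ) : AddCircle c) ∈ α.toSet := by
    rw [hαset]; exact mem_img_of hab0 hb0a1
  have hb0β : ((b0 : ℝ) : AddCircle c) ∈ β.toSet := by
    rw [hβset]; exact mem_img_of le_rfl (by linarith)
  have hb1β : ((b1 : ℝ) : AddCircle c) ∈ β.toSet := by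
    rw [hβset]; exact mem_img_of (by linarith) le_rfl
  have ha1β : ((a1 : ℝ) : AddCircle c) ∈ β.toSet := by
    rw [hβset]; exact mem_img_of hb0a1 ha1b1.le
  have ha0β : ((a0 : ℝ) : AddCircle c) ∉ β.toSet := by
    rw [hβset]
    have hrw : ((a0 : ℝ) : AddCircle c) = ((a0 + c : ℝ) : AddCircle c) := by
      rw [coe_eq_coe]; exact ⟨1, by push_cast; ring⟩
    rw [hrw]
    exact not_mem_img hc (by linarith) (by linarith)
  have hb1α : ((b1 : ℝ) : AddCircle c) ∉ α.toSet := by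
    rw [hαset]
    exact not_mem_img hc ha1b1 (by linarith)
  -- subsets of γ
  have hUγ : U.toSet ⊆ γ.toSet := by
    rw [hUαβ]; exact Set.union_subset hsubα hsubβ
  have hVsα : V.toSet ⊆ α.toSet := by rw [hVαβ]; exact Set.inter_subset_left
  have hVsβ : V.toSet ⊆ β.toSet := by rw [hVαβ]; exact Set.inter_subset_right
  have hVγ : V.toSet ⊆ γ.toSet := hVsα.trans hsubα
  have hUi : U.init = ((a0 : ℝ) : AddCircle c) := rfl
  have hUt : U.term = ((b1 : ℝ) : AddCircle c) := rfl
  have hVi : V.init = ((b0 : ℝ) : AddCircle c) := rfl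
  have hVt : V.term = ((a1 : ℝ) : AddCircle c) := rfl
  have hUJ : U ∈ J := by rw [hJdef]; exact Finset.mem_insert_self _ _
  have hVJ : V ∈ J := by
    rw [hJdef]; exact Finset.mem_insert.2 (Or.inr (Finset.mem_insert_self _ _))
  have hI'J : ∀ x ∈ I', x ∈ J := fun x h => by
    rw [hJdef]; exact Finset.mem_insert.2 (Or.inr (Finset.mem_insert.2 (Or.inr h)))
  -- the new family is a disk family
  have hJdisk : IsDiskFamily r J := by
    refine ⟨hc, ?_, ?_, ?_⟩
    · intro x hx y hy
      rw [hJdef] at hx hy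
      have hxc : x.toSet ⊆ γ.toSet ∨ x ∈ I := by
        rcases Finset.mem_insert.1 hx with rfl | hx'
        · exact Or.inl hUγ
        · rcases Finset.mem_insert.1 hx' with rfl | hx''
          · exact Or.inl hVγ
          · exact Or.inr (hI'I _ hx'')
      have hyc : y.toSet ⊆ γ.toSet ∨ y ∈ I := by
        rcases Finset.mem_insert.1 hy with rfl | hy'
        · exact Or.inl hUγ
        · rcases Finset.mem_insert.1 hy' with rfl | hy''
          · exact Or.inl hVγ
          · exact Or.inr (hI'I _ hy'')
      rcases hxc with h1 | h1 <;> rcases hyc with h2 | h2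
      · exact ne_univ_mono (Set.union_subset_union h1 h2) (hi γ hγ γ hγ)
      · exact ne_univ_mono (Set.union_subset_union h1 subset_rfl) (hi γ hγ y h2)
      · exact ne_univ_mono (Set.union_subset_union subset_rfl h2) (hi x h1 γ hγ)
      · exact hi x h1 y h2
    · intro q hq
      have hqI : ∀ x ∈ I, q ∉ x.endpoints := by
        intro x hxI hqe
        by_cases hxα : x = α
        · subst hxα
          rcases Set.mem_insert_iff.1 hqe with he | he
          · exact hq U hUJ (Set.mem_insert_iff.2 (Or.inl (by rw [he, hUi]; exact ha0i.symm)))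
          · rw [Set.mem_singleton_iff] at he
            exact hq V hVJ (Set.mem_insert_iff.2 (Or.inr (Set.mem_singleton_iff.2
              (by rw [he, hVt]; exact ha1t.symm))))
        · by_cases hxβ : x = β
          · subst hxβ
            rcases Set.mem_insert_iff.1 hqe with he | he
            · exact hq V hVJ (Set.mem_insert_iff.2 (Or.inl (by rw [he, hVi]; exact hb0i.symm)))
            · rw [Set.mem_singleton_iff] at he
              exact hq U hUJ (Set.mem_insert_iff.2 (Or.inr (Set.mem_singleton_iff.2
                (by rw [he, hUt]; exact hb1t.symm))))
          · have hxI' : x ∈ I' := by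
              rw [hI'def]
              exact Finset.mem_erase.2 ⟨hxβ, Finset.mem_erase.2 ⟨hxα, hxI⟩⟩
            exact hq x (hI'J x hxI') hqe
      have hcard := hii q hqI
      rw [card_subtype] at hcard ⊢
      rw [hIdecomp, card_filter_insert2 I' α β _ hαI' hβI' hαβ] at hcard
      rw [hJdef, card_filter_insert2 I' U V _ (fun h => hUI (hI'I _ h)) hVI' hUV]
      have hPU : (q ∈ U.toSet) ↔ (q ∈ α.toSet ∨ q ∈ β.toSet) := by
        rw [hUαβ]; exact Set.mem_union _ _ _
      have hPV : (q ∈ V.toSet) ↔ (q ∈ α.toSet ∧ q ∈ β.toSet) := by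
        rw [hVαβ]; exact Set.mem_inter_iff _ _ _
      by_cases h1 : q ∈ α.toSet <;> by_cases h2 : q ∈ β.toSet
      · rw [if_pos h1, if_pos h2] at hcard
        rw [if_pos (hPU.2 (Or.inl h1)), if_pos (hPV.2 ⟨h1, h2⟩)]
        omega
      · rw [if_pos h1, if_neg h2] at hcard
        rw [if_pos (hPU.2 (Or.inl h1)), if_neg (fun h => h2 (hPV.1 h).2)]
        omega
      · rw [if_neg h1, if_pos h2] at hcard
        rw [if_pos (hPU.2 (Or.inr h2)), if_neg (fun h => h1 (hPV.1 h).1)]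
        omega
      · rw [if_neg h1, if_neg h2] at hcard
        rw [if_neg (fun h => (hPU.1 h).elim h1 h2), if_neg (fun h => h1 (hPV.1 h).1)]
        omega
    · intro q hqJ
      have hqI : ∃ x ∈ I, q ∈ x.endpoints := by
        obtain ⟨z, hzJ, hze⟩ := hqJ
        rw [hJdef] at hzJ
        rcases Finset.mem_insert.1 hzJ with rfl | hz'
        · rcases Set.mem_insert_iff.1 hze with he | he
          · exact ⟨α, hα, Set.mem_insert_iff.2 (Or.inl (by rw [he, hUi]; exact ha0i))⟩
          · rw [Set.mem_singleton_iff] at he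
            exact ⟨β, hβ, Set.mem_insert_iff.2 (Or.inr (Set.mem_singleton_iff.2
              (by rw [he, hUt]; exact hb1t)))⟩
        · rcases Finset.mem_insert.1 hz' with rfl | hz''
          · rcases Set.mem_insert_iff.1 hze with he | he
            · exact ⟨β, hβ, Set.mem_insert_iff.2 (Or.inl (by rw [he, hVi]; exact hb0i))⟩
            · rw [Set.mem_singleton_iff] at he
              exact ⟨α, hα, Set.mem_insert_iff.2 (Or.inr (Set.mem_singleton_iff.2
                (by rw [he, hVt]; exact ha1t)))⟩
          · exact ⟨z, hI'I _ hz'', hze⟩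
      obtain ⟨hT1, hIn1, hInter⟩ := hiii q hqI
      rw [Nat.card_eq_one_iff_unique] at hT1 hIn1
      obtain ⟨⟨t, htI, htq⟩⟩ := hT1.2
      obtain ⟨⟨s, hsI, hsq⟩⟩ := hIn1.2
      have htuniq : ∀ x ∈ I, x.term = q → x = t := fun x hx h =>
        unique_term hD' hx htI (h.trans htq.symm)
      have hsuniq : ∀ x ∈ I, x.init = q → x = s := fun x hx h =>
        unique_init hD' hx hsI (h.trans hsq.symm)
      refine ⟨?_, ?_, ?_⟩
      · -- term count
        rw [Nat.card_eq_one_iff_unique]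
        by_cases htα : t = α
        · have hq1 : q = ((a1 : ℝ) : AddCircle c) := by rw [← htq, htα, ← ha1t]
          have huniq : ∀ x, x ∈ J ∧ x.term = q → x = V := by
            rintro x ⟨hxJ, hxt⟩
            rw [hJdef] at hxJ
            rcases Finset.mem_insert.1 hxJ with rfl | hx'
            · exact absurd ((hUt.symm.trans hxt).trans hq1).symm n23
            · rcases Finset.mem_insert.1 hx' with rfl | hx''
              · rfl
              · exact absurd ((htuniq x (hI'I _ hx'') hxt).trans htα) (hI'ne x hx'').1
          exact ⟨⟨fun a b => Subtype.ext ((huniq _ a.2).trans (huniq _ b.2).symm)⟩,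
            ⟨⟨V, hVJ, by rw [hVt, ← hq1]⟩⟩⟩
        · by_cases htβ : t = β
          · have hq1 : q = ((b1 : ℝ) : AddCircle c) := by rw [← htq, htβ, ← hb1t]
            have huniq : ∀ x, x ∈ J ∧ x.term = q → x = U := by
              rintro x ⟨hxJ, hxt⟩
              rw [hJdef] at hxJ
              rcases Finset.mem_insert.1 hxJ with rfl | hx'
              · rfl
              · rcases Finset.mem_insert.1 hx' with rfl | hx''
                · exact absurd ((hVt.symm.trans hxt).trans hq1) n23
                · exact absurd ((htuniq x (hI'I _ hx'') hxt).trans htβ) (hI'ne x hx'').2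
            exact ⟨⟨fun a b => Subtype.ext ((huniq _ a.2).trans (huniq _ b.2).symm)⟩,
              ⟨⟨U, hUJ, by rw [hUt, ← hq1]⟩⟩⟩
          · have htI' : t ∈ I' := by
              rw [hI'def]
              exact Finset.mem_erase.2 ⟨htβ, Finset.mem_erase.2 ⟨htα, htI⟩⟩
            have huniq : ∀ x, x ∈ J ∧ x.term = q → x = t := by
              rintro x ⟨hxJ, hxt⟩
              rw [hJdef] at hxJ
              rcases Finset.mem_insert.1 hxJ with rfl | hx'
              · have hβq : β.term = q := by rw [← hb1t, ← hUt]; exact hxt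
                exact absurd (htuniq β hβ hβq).symm htβ
              · rcases Finset.mem_insert.1 hx' with rfl | hx''
                · have hαq : α.term = q := by rw [← ha1t, ← hVt]; exact hxt
                  exact absurd (htuniq α hα hαq).symm htα
                · exact htuniq x (hI'I _ hx'') hxt
            exact ⟨⟨fun a b => Subtype.ext ((huniq _ a.2).trans (huniq _ b.2).symm)⟩,
              ⟨⟨t, hI'J t htI', htq⟩⟩⟩
      · -- init count
        rw [Nat.card_eq_one_iff_unique]
        by_cases hsα : s = α
        · have hq1 : q = ((a0 : ℝ) : AddCircle c) := by rw [← hsq, hsα, ← ha0i]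
          have huniq : ∀ x, x ∈ J ∧ x.init = q → x = U := by
            rintro x ⟨hxJ, hxi⟩
            rw [hJdef] at hxJ
            rcases Finset.mem_insert.1 hxJ with rfl | hx'
            · rfl
            · rcases Finset.mem_insert.1 hx' with rfl | hx''
              · exact absurd ((hVi.symm.trans hxi).trans hq1).symm n01
              · exact absurd ((hsuniq x (hI'I _ hx'') hxi).trans hsα) (hI'ne x hx'').1
          exact ⟨⟨fun a b => Subtype.ext ((huniq _ a.2).trans (huniq _ b.2).symm)⟩,
            ⟨⟨U, hUJ, by rw [hUi, ← hq1]⟩⟩⟩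
        · by_cases hsβ : s = β
          · have hq1 : q = ((b0 : ℝ) : AddCircle c) := by rw [← hsq, hsβ, ← hb0i]
            have huniq : ∀ x, x ∈ J ∧ x.init = q → x = V := by
              rintro x ⟨hxJ, hxi⟩
              rw [hJdef] at hxJ
              rcases Finset.mem_insert.1 hxJ with rfl | hx'
              · exact absurd ((hUi.symm.trans hxi).trans hq1) n01
              · rcases Finset.mem_insert.1 hx' with rfl | hx''
                · rfl
                · exact absurd ((hsuniq x (hI'I _ hx'') hxi).trans hsβ) (hI'ne x hx'').2
            exact ⟨⟨fun a b => Subtype.ext ((huniq _ a.2).trans (huniq _ b.2).symm)⟩,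
              ⟨⟨V, hVJ, by rw [hVi, ← hq1]⟩⟩⟩
          · have hsI' : s ∈ I' := by
              rw [hI'def]
              exact Finset.mem_erase.2 ⟨hsβ, Finset.mem_erase.2 ⟨hsα, hsI⟩⟩
            have huniq : ∀ x, x ∈ J ∧ x.init = q → x = s := by
              rintro x ⟨hxJ, hxi⟩
              rw [hJdef] at hxJ
              rcases Finset.mem_insert.1 hxJ with rfl | hx'
              · have hαq : α.init = q := by rw [← ha0i, ← hUi]; exact hxi
                exact absurd (hsuniq α hα hαq).symm hsα
              · rcases Finset.mem_insert.1 hx' with rfl | hx''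
                · have hβq : β.init = q := by rw [← hb0i, ← hVi]; exact hxi
                  exact absurd (hsuniq β hβ hβq).symm hsβ
                · exact hsuniq x (hI'I _ hx'') hxi
            exact ⟨⟨fun a b => Subtype.ext ((huniq _ a.2).trans (huniq _ b.2).symm)⟩,
              ⟨⟨s, hI'J s hsI', hsq⟩⟩⟩
      · -- intersections
        intro x hxJ y hyJ hxt hyi
        rw [hJdef] at hxJ hyJ
        rcases Finset.mem_insert.1 hxJ with rfl | hx'
        · -- x = U
          have hqb1 : q = ((b1 : ℝ) : AddCircle c) := (hUt.symm.trans hxt).symm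
          rcases Finset.mem_insert.1 hyJ with rfl | hy'
          · exact absurd ((hUi.symm.trans hyi).trans hqb1) n03
          · rcases Finset.mem_insert.1 hy' with rfl | hy''
            · exact absurd ((hVi.symm.trans hyi).trans hqb1) n13
            · have hyI := hI'I _ hy''
              have hyw : 0 < y.width := y.width_pos
              obtain ⟨hyset, hybound⟩ := wrap_bound_init hc (hi γ hγ y hyI)
                (hqb1.symm.trans hyi.symm) (by linarith) hb1g
              rw [hUset, hyset,
                img_inter_pt hc (by linarith : a0 ≤ b1)
                  (by linarith : b1 ≤ b1 + y.width)
                  (by linarith : b1 + y.width - a0 < c), hqb1]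
        · rcases Finset.mem_insert.1 hx' with rfl | hx''
          · -- x = V
            have hqa1 : q = ((a1 : ℝ) : AddCircle c) := (hVt.symm.trans hxt).symm
            rcases Finset.mem_insert.1 hyJ with rfl | hy'
            · exact absurd ((hUi.symm.trans hyi).trans hqa1) n02
            · rcases Finset.mem_insert.1 hy' with rfl | hy''
              · exact absurd ((hVi.symm.trans hyi).trans hqa1) n12
              · have hαq : α.term = q := by rw [← ha1t]; exact hqa1.symm
                have hαy := hInter α hα y (hI'I _ hy'') hαq hyi
                refine Set.Subset.antisymm ?_ ?_
                · rw [← hαy]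
                  exact Set.inter_subset_inter hVsα subset_rfl
                · rw [Set.singleton_subset_iff]
                  exact ⟨by rw [← hxt]; exact term_mem V, by rw [← hyi]; exact init_mem y⟩
          · -- x ∈ I'
            have hxI := hI'I _ hx''
            rcases Finset.mem_insert.1 hyJ with rfl | hy'
            · -- y = U
              have hqa0 : q = ((a0 : ℝ) : AddCircle c) := (hUi.symm.trans hyi).symm
              have hxw : 0 < x.width := x.width_pos
              obtain ⟨hxset, hxbound⟩ := wrap_bound_term hc (hi γ hγ x hxI)
                (hqa0.symm.trans hxt.symm) hga0 (by linarith)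
              rw [hxset, hUset,
                img_inter_pt hc (by linarith : a0 - x.width ≤ a0)
                  (by linarith : a0 ≤ b1)
                  (by linarith : b1 - (a0 - x.width) < c), hqa0]
            · rcases Finset.mem_insert.1 hy' with rfl | hy''
              · -- y = V
                have hqb0 : q = ((b0 : ℝ) : AddCircle c) := (hVi.symm.trans hyi).symm
                have hβq : β.init = q := by rw [← hb0i]; exact hqb0.symm
                have hxβ2 := hInter x hxI β hβ hxt hβq
                refine Set.Subset.antisymm ?_ ?_
                · rw [← hxβ2]
                  exact Set.inter_subset_inter subset_rfl hVsβ
                · rw [Set.singleton_subset_iff]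
                  exact ⟨by rw [← hxt]; exact term_mem x, by rw [← hyi]; exact init_mem V⟩
              · exact hInter x hxI y (hI'I _ hy'') hxt hyi
  -- area comparison
  have hbool : ∀ x ∈ I', W x U + W x V ≤ W x α + W x β := by
    intro x hx
    have hxI := hI'I x hx
    obtain ⟨hxα, hxβ⟩ := hI'ne x hx
    have hxU : x ≠ U := fun h => hUI (h ▸ hxI)
    have hxV : x ≠ V := fun h => hVI (h ▸ hxI)
    have huα : x.toSet ∪ α.toSet ≠ Set.univ :=
      ne_univ_mono (Set.union_subset_union subset_rfl hsubα) (hi x hxI γ hγ)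
    have huβ : x.toSet ∪ β.toSet ≠ Set.univ :=
      ne_univ_mono (Set.union_subset_union subset_rfl hsubβ) (hi x hxI γ hγ)
    have huU : x.toSet ∪ U.toSet ≠ Set.univ :=
      ne_univ_mono (Set.union_subset_union subset_rfl hUγ) (hi x hxI γ hγ)
    have huV : x.toSet ∪ V.toSet ≠ Set.univ :=
      ne_univ_mono (Set.union_subset_union subset_rfl hVγ) (hi x hxI γ hγ)
    have hshα : x.SharesEndpoint α ↔
        (x.term = ((a0 : ℝ) : AddCircle c) ∨ x.init = ((a1 : ℝ) : AddCircle c)) := by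
      rw [shares_iff]
      constructor
      · rintro (h | h | h | h)
        · exact absurd (unique_init hD' hxI hα h) hxα
        · exact Or.inr (by rw [h, ← ha1t])
        · exact Or.inl (by rw [h, ← ha0i])
        · exact absurd (unique_term hD' hxI hα h) hxα
      · rintro (h | h)
        · exact Or.inr (Or.inr (Or.inl (by rw [h, ← ha0i])))
        · exact Or.inr (Or.inl (by rw [h, ← ha1t]))
    have hshβ : x.SharesEndpoint β ↔
        (x.term = ((b0 : ℝ) : AddCircle c) ∨ x.init = ((b1 : ℝ) : AddCircle c)) := by
      rw [shares_iff]
      constructor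
      · rintro (h | h | h | h)
        · exact absurd (unique_init hD' hxI hβ h) hxβ
        · exact Or.inr (by rw [h, ← hb1t])
        · exact Or.inl (by rw [h, ← hb0i])
        · exact absurd (unique_term hD' hxI hβ h) hxβ
      · rintro (h | h)
        · exact Or.inr (Or.inr (Or.inl (by rw [h, ← hb0i])))
        · exact Or.inr (Or.inl (by rw [h, ← hb1t]))
    have hshU : x.SharesEndpoint U ↔
        (x.term = ((a0 : ℝ) : AddCircle c) ∨ x.init = ((b1 : ℝ) : AddCircle c)) := by
      rw [shares_iff]
      constructor
      · rintro (h | h | h | h)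
        · rw [hUi] at h
          exact absurd (unique_init hD' hxI hα (h.trans ha0i)) hxα
        · rw [hUt] at h
          exact Or.inr h
        · rw [hUi] at h
          exact Or.inl h
        · rw [hUt] at h
          exact absurd (unique_term hD' hxI hβ (h.trans hb1t)) hxβ
      · rintro (h | h)
        · exact Or.inr (Or.inr (Or.inl (by rw [h]; exact hUi.symm)))
        · exact Or.inr (Or.inl (by rw [h]; exact hUt.symm))
    have hshV : x.SharesEndpoint V ↔
        (x.term = ((b0 : ℝ) : AddCircle c) ∨ x.init = ((a1 : ℝ) : AddCircle c)) := by
      rw [shares_iff]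
      constructor
      · rintro (h | h | h | h)
        · rw [hVi] at h
          exact absurd (unique_init hD' hxI hβ (h.trans hb0i)) hxβ
        · rw [hVt] at h
          exact Or.inr h
        · rw [hVi] at h
          exact Or.inl h
        · rw [hVt] at h
          exact absurd (unique_term hD' hxI hα (h.trans ha1t)) hxα
      · rintro (h | h)
        · exact Or.inr (Or.inr (Or.inl (by rw [h]; exact hVi.symm)))
        · exact Or.inr (Or.inl (by rw [h]; exact hVt.symm))
    have hWxα : W x α =
        cif (¬(x.term = ((a0 : ℝ) : AddCircle c) ∨ x.init = ((a1 : ℝ) : AddCircle c)) ∧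
            Xor' (x.init ∈ α.toSet) (x.term ∈ α.toSet)) 2 0 +
          cif (x.term = ((a0 : ℝ) : AddCircle c) ∨ x.init = ((a1 : ℝ) : AddCircle c)) 1 0 :=
      W_eq_cif hc huα hxα hshα
    have hWxβ : W x β =
        cif (¬(x.term = ((b0 : ℝ) : AddCircle c) ∨ x.init = ((b1 : ℝ) : AddCircle c)) ∧
            Xor' (x.init ∈ β.toSet) (x.term ∈ β.toSet)) 2 0 +
          cif (x.term = ((b0 : ℝ) : AddCircle c) ∨ x.init = ((b1 : ℝ) : AddCircle c)) 1 0 :=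
      W_eq_cif hc huβ hxβ hshβ
    have hWxU : W x U =
        cif (¬(x.term = ((a0 : ℝ) : AddCircle c) ∨ x.init = ((b1 : ℝ) : AddCircle c)) ∧
            Xor' (x.init ∈ U.toSet) (x.term ∈ U.toSet)) 2 0 +
          cif (x.term = ((a0 : ℝ) : AddCircle c) ∨ x.init = ((b1 : ℝ) : AddCircle c)) 1 0 :=
      W_eq_cif hc huU hxU hshU
    have hWxV : W x V =
        cif (¬(x.term = ((b0 : ℝ) : AddCircle c) ∨ x.init = ((a1 : ℝ) : AddCircle c)) ∧
            Xor' (x.init ∈ V.toSet) (x.term ∈ V.toSet)) 2 0 +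
          cif (x.term = ((b0 : ℝ) : AddCircle c) ∨ x.init = ((a1 : ℝ) : AddCircle c)) 1 0 :=
      W_eq_cif hc huV hxV hshV
    rw [hWxα, hWxβ, hWxU, hWxV]
    exact boolKey (x.init ∈ α.toSet) (x.term ∈ α.toSet) (x.init ∈ β.toSet)
      (x.term ∈ β.toSet) (x.init ∈ U.toSet) (x.term ∈ U.toSet) (x.init ∈ V.toSet)
      (x.term ∈ V.toSet) (x.term = ((a0 : ℝ) : AddCircle c))
      (x.term = ((b0 : ℝ) : AddCircle c)) (x.init = ((a1 : ℝ) : AddCircle c))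
      (x.init = ((b1 : ℝ) : AddCircle c))
      (by rw [hUαβ]; exact Set.mem_union _ _ _)
      (by rw [hUαβ]; exact Set.mem_union _ _ _)
      (by rw [hVαβ]; exact Set.mem_inter_iff _ _ _)
      (by rw [hVαβ]; exact Set.mem_inter_iff _ _ _)
      (fun h => ⟨by rw [h]; exact ha0α, by rw [h]; exact ha0β⟩)
      (fun h => ⟨by rw [h]; exact hb0α, by rw [h]; exact hb0β⟩)
      (fun h => ⟨by rw [h]; exact ha1α, by rw [h]; exact ha1β⟩)
      (fun h => ⟨by rw [h]; exact hb1β, by rw [h]; exact hb1α⟩)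
  have hWαβpos : 1 ≤ W α β := by
    unfold W
    rw [if_pos hcr]
    omega
  have hWUV : W U V = 0 := by
    have hshUV : ¬ U.SharesEndpoint V := by
      rw [shares_iff]
      rintro (h | h | h | h)
      · exact n01 h
      · exact n02 h
      · exact n13 (h.symm) |>.elim
      · exact n23 (h.symm) |>.elim
    have hncr : ¬ U.Crosses V := by
      rintro ⟨-, hx | hx⟩
      · have h1 : V.init ∈ U.toSet := by
          show ((b0 : ℝ) : AddCircle c) ∈ U.toSet
          rw [hUset]; exact mem_img_of hab0 (by linarith)
        have h2 : V.term ∈ U.toSet := by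
          show ((a1 : ℝ) : AddCircle c) ∈ U.toSet
          rw [hUset]; exact mem_img_of (by linarith) (by linarith)
        simp [Xor', h1, h2] at hx
      · have h1 : U.init ∉ V.toSet := by
          show ((a0 : ℝ) : AddCircle c) ∉ V.toSet
          rw [hVset]
          have hrw : ((a0 : ℝ) : AddCircle c) = ((a0 + c : ℝ) : AddCircle c) := by
            rw [coe_eq_coe]; exact ⟨1, by push_cast; ring⟩
          rw [hrw]
          exact not_mem_img hc (by linarith) (by linarith)
        have h2 : U.term ∉ V.toSet := by
          show ((b1 : ℝ) : AddCircle c) ∉ V.toSet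
          rw [hVset]
          exact not_mem_img hc (by linarith) (by linarith)
        simp [Xor', h1, h2] at hx
    unfold W
    rw [if_neg hncr, if_neg (fun h => hshUV h.2)]
  have hsumJ := sum2_insert2 I' U V (fun h => hUI (hI'I _ h)) hVI' hUV W
  have hsumI := sum2_insert2 I' α β hαI' hβI' hαβ W
  have hterms : ∀ x ∈ I', W x U + W x V + W U x + W V x ≤ W x α + W x β + W α x + W β x := by
    intro x hx
    have h1 := hbool x hx
    rw [W_symm U x, W_symm V x, W_symm α x, W_symm β x]
    omega
  have hsums : ∑ x ∈ I', (W x U + W x V + W U x + W V x)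
      ≤ ∑ x ∈ I', (W x α + W x β + W α x + W β x) := Finset.sum_le_sum hterms
  have hkey : (∑ x ∈ J, ∑ y ∈ J, W x y) + 2 ≤ ∑ x ∈ I, ∑ y ∈ I, W x y := by
    rw [hIdecomp, hJdef, hsumJ, hsumI]
    rw [W_self, W_self, W_self, W_self, hWUV, W_symm V U, hWUV]
    have hWβα : W β α = W α β := W_symm β α
    omega
  have harea : diskArea J + 1 / 2 ≤ diskArea I := by
    rw [diskArea_eq J, diskArea_eq I]
    have hcast : ((∑ x ∈ J, ∑ y ∈ J, W x y : ℕ) : ℝ) + 2 ≤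
        ((∑ x ∈ I, ∑ y ∈ I, W x y : ℕ) : ℝ) := by exact_mod_cast hkey
    linarith
  have hge := hminle c J hJdisk
  linarith

end DPF

end Chunk7

section Chunk8

namespace DPF

variable {c : ℝ}

attribute [local instance] Classical.propDecidable

lemma keyAdj {r : ℕ} {I : Finset (Arc c)} (hmin : IsAreaMinimal r I)
    {γ α β : Arc c} (hγ : γ ∈ I) (hα : α ∈ I) (hβ : β ∈ I)
    (hγα : γ ≠ α) (hγβ : γ ≠ β) (hαβ : α ≠ β)
    (hsubα : α.toSet ⊆ γ.toSet) (hsubβ : β.toSet ⊆ γ.toSet)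
    (hshαβ : α.SharesEndpoint β)
    (hat : α.term = β.init) : False := by
  obtain ⟨hD, hminle⟩ := hmin
  obtain ⟨hc, hi, hii, hiii⟩ := hD
  have hD' : IsDiskFamily r I := ⟨hc, hi, hii, hiii⟩
  have hγw : γ.b - γ.a < c := γ.width_lt
  have hγw0 : 0 < γ.b - γ.a := γ.width_pos
  obtain ⟨a0, ha0i, ha1t, hαset, hga0, ha1g⟩ := subset_reps hc hsubα
  set a1 := a0 + α.width with ha1def
  obtain ⟨b0, hb0i, hb1t, hβset, hgb0, hb1g⟩ := subset_reps hc hsubβ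
  have hαw : 0 < α.width := α.width_pos
  have hβw : 0 < β.width := β.width_pos
  have hb0a1 : b0 = a1 :=
    rep_unique hc hgb0 (by linarith) (by linarith) ha1g (by linarith)
      ((hb0i.trans hat.symm).trans ha1t.symm)
  subst hb0a1
  set b1 := a1 + β.width with hb1def
  have ha0a1 : a0 < a1 := by rw [ha1def]; linarith
  have ha1b1 : a1 < b1 := by rw [hb1def]; linarith
  have hb1c : b1 - a0 < c := by linarith
  -- rename for clarity: the common endpoint is p := a1 (= a1)
  -- the merged arc
  set M : Arc c := ⟨a0, b1, by linarith, by linarith⟩ with hMdef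
  have hMset : M.toSet = img c a0 b1 := rfl
  have hMi : M.init = ((a0 : ℝ) : AddCircle c) := rfl
  have hMt : M.term = ((b1 : ℝ) : AddCircle c) := rfl
  have hMαβ : M.toSet = α.toSet ∪ β.toSet := by
    rw [hMset, hαset, hβset]
    exact img_union ha0a1.le le_rfl ha1b1.le
  have hαβinter : α.toSet ∩ β.toSet = {((a1 : ℝ) : AddCircle c)} := by
    have h := (hiii α.term ⟨α, hα, Set.mem_insert_iff.2 (Or.inr rfl)⟩).2.2
      α hα β hβ rfl hat.symm
    rw [← ha1t] at h
    exact h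
  -- distinctness of points
  have n01 : ((a0 : ℝ) : AddCircle c) ≠ ((a1 : ℝ) : AddCircle c) :=
    coe_ne_coe hc ha0a1 (by linarith)
  have n12 : ((a1 : ℝ) : AddCircle c) ≠ ((b1 : ℝ) : AddCircle c) :=
    coe_ne_coe hc ha1b1 (by linarith)
  have n02 : ((a0 : ℝ) : AddCircle c) ≠ ((b1 : ℝ) : AddCircle c) :=
    coe_ne_coe hc (by linarith) (by linarith)
  -- membership facts
  have ha0α : ((a0 : ℝ) : AddCircle c) ∈ α.toSet := by
    rw [hαset]; exact mem_img_of le_rfl (by linarith)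
  have ha1α : ((a1 : ℝ) : AddCircle c) ∈ α.toSet := by
    rw [hαset]; exact mem_img_of (by linarith) le_rfl
  have ha1β : ((a1 : ℝ) : AddCircle c) ∈ β.toSet := by
    rw [hβset]; exact mem_img_of le_rfl (by linarith)
  have hb1β : ((b1 : ℝ) : AddCircle c) ∈ β.toSet := by
    rw [hβset]; exact mem_img_of (by linarith) le_rfl
  have ha0β : ((a0 : ℝ) : AddCircle c) ∉ β.toSet := by
    rw [hβset]
    have hrw : ((a0 : ℝ) : AddCircle c) = ((a0 + c : ℝ) : AddCircle c) := by
      rw [coe_eq_coe]; exact ⟨1, by push_cast; ring⟩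
    rw [hrw]
    exact not_mem_img hc (by linarith) (by linarith)
  have hb1α : ((b1 : ℝ) : AddCircle c) ∉ α.toSet := by
    rw [hαset]
    exact not_mem_img hc ha1b1 (by linarith)
  -- M not in the family
  have hMI : M ∉ I := by
    intro hMI
    have hMα : M = α := unique_init hD' hMI hα (by rw [hMi]; exact ha0i)
    have h1 : ((b1 : ℝ) : AddCircle c) = α.term := by rw [← hMα]; rfl
    rw [← ha1t] at h1
    exact n12 h1.symm
  -- decomposition
  set I' := (I.erase α).erase β with hI'def
  have hβmem' : β ∈ I.erase α := Finset.mem_erase.2 ⟨hαβ.symm, hβ⟩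
  have hIdecomp : I = insert α (insert β I') := by
    rw [hI'def, Finset.insert_erase hβmem', Finset.insert_erase hα]
  have hαI' : α ∉ I' := by
    intro h
    exact (Finset.mem_erase.1 (Finset.mem_erase.1 h).2).1 rfl
  have hβI' : β ∉ I' := fun h => (Finset.mem_erase.1 h).1 rfl
  have hI'I : ∀ x ∈ I', x ∈ I := fun x h =>
    (Finset.mem_erase.1 (Finset.mem_erase.1 h).2).2
  have hI'ne : ∀ x ∈ I', x ≠ α ∧ x ≠ β := fun x h =>
    ⟨(Finset.mem_erase.1 (Finset.mem_erase.1 h).2).1, (Finset.mem_erase.1 h).1⟩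
  have hMI' : M ∉ I' := fun h => hMI (hI'I _ h)
  set J := insert M I' with hJdef
  have hMJ : M ∈ J := by rw [hJdef]; exact Finset.mem_insert_self _ _
  have hI'J : ∀ x ∈ I', x ∈ J := fun x h => by
    rw [hJdef]; exact Finset.mem_insert.2 (Or.inr h)
  have hMγ : M.toSet ⊆ γ.toSet := by
    rw [hMαβ]; exact Set.union_subset hsubα hsubβ
  -- J is a disk family
  have hJdisk : IsDiskFamily r J := by
    refine ⟨hc, ?_, ?_, ?_⟩
    · intro x hx y hy
      rw [hJdef] at hx hy
      have hxc : x.toSet ⊆ γ.toSet ∨ x ∈ I := by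
        rcases Finset.mem_insert.1 hx with rfl | hx'
        · exact Or.inl hMγ
        · exact Or.inr (hI'I _ hx')
      have hyc : y.toSet ⊆ γ.toSet ∨ y ∈ I := by
        rcases Finset.mem_insert.1 hy with rfl | hy'
        · exact Or.inl hMγ
        · exact Or.inr (hI'I _ hy')
      rcases hxc with h1 | h1 <;> rcases hyc with h2 | h2
      · exact ne_univ_mono (Set.union_subset_union h1 h2) (hi γ hγ γ hγ)
      · exact ne_univ_mono (Set.union_subset_union h1 subset_rfl) (hi γ hγ y h2)
      · exact ne_univ_mono (Set.union_subset_union subset_rfl h2) (hi x h1 γ hγ)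
      · exact hi x h1 y h2
    · intro q hq
      by_cases hq1 : q = ((a1 : ℝ) : AddCircle c)
      · subst hq1
        have hcount := count_at_endpoint hD' hβ hb0i
        rw [card_subtype] at hcount ⊢
        rw [hIdecomp, card_filter_insert2 I' α β _ hαI' hβI' hαβ] at hcount
        rw [if_pos ha1α, if_pos ha1β] at hcount
        rw [hJdef, card_filter_insert1 I' M _ hMI',
          if_pos (show ((a1 : ℝ) : AddCircle c) ∈ M.toSet by
            rw [hMαβ]; exact Set.mem_union_left _ ha1α)]
        omega
      · have hqI : ∀ x ∈ I, q ∉ x.endpoints := by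
          intro x hxI hqe
          by_cases hxα : x = α
          · subst hxα
            rcases Set.mem_insert_iff.1 hqe with he | he
            · exact hq M hMJ (Set.mem_insert_iff.2 (Or.inl (by rw [he, hMi]; exact ha0i.symm)))
            · rw [Set.mem_singleton_iff] at he
              exact hq1 (by rw [he, ← ha1t])
          · by_cases hxβ : x = β
            · subst hxβ
              rcases Set.mem_insert_iff.1 hqe with he | he
              · exact hq1 (by rw [he, ← hb0i])
              · rw [Set.mem_singleton_iff] at he
                exact hq M hMJ (Set.mem_insert_iff.2 (Or.inr (Set.mem_singleton_iff.2
                  (by rw [he, hMt]; exact hb1t.symm))))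
            · have hxI' : x ∈ I' := by
                rw [hI'def]
                exact Finset.mem_erase.2 ⟨hxβ, Finset.mem_erase.2 ⟨hxα, hxI⟩⟩
              exact hq x (hI'J x hxI') hqe
        have hcard := hii q hqI
        rw [card_subtype] at hcard ⊢
        rw [hIdecomp, card_filter_insert2 I' α β _ hαI' hβI' hαβ] at hcard
        rw [hJdef, card_filter_insert1 I' M _ hMI']
        have hPM : (q ∈ M.toSet) ↔ (q ∈ α.toSet ∨ q ∈ β.toSet) := by
          rw [hMαβ]; exact Set.mem_union _ _ _
        by_cases h1 : q ∈ α.toSet <;> by_cases h2 : q ∈ β.toSet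
        · exfalso
          apply hq1
          have : q ∈ α.toSet ∩ β.toSet := ⟨h1, h2⟩
          rw [hαβinter] at this
          exact this
        · rw [if_pos h1, if_neg h2] at hcard
          rw [if_pos (hPM.2 (Or.inl h1))]
          omega
        · rw [if_neg h1, if_pos h2] at hcard
          rw [if_pos (hPM.2 (Or.inr h2))]
          omega
        · rw [if_neg h1, if_neg h2] at hcard
          rw [if_neg (fun h => (hPM.1 h).elim h1 h2)]
          omega
    · intro q hqJ
      have hqne : q ≠ ((a1 : ℝ) : AddCircle c) := by
        intro hq1
        obtain ⟨z, hzJ, hze⟩ := hqJ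
        rw [hJdef] at hzJ
        rcases Finset.mem_insert.1 hzJ with rfl | hz'
        · rcases Set.mem_insert_iff.1 hze with he | he
          · exact n01 ((hMi.symm.trans he.symm).trans hq1)
          · rw [Set.mem_singleton_iff] at he
            exact n12 ((hq1.symm.trans he).trans hMt)
        · obtain ⟨hzα, hzβ⟩ := hI'ne z hz'
          rcases Set.mem_insert_iff.1 hze with he | he
          · exact hzβ (unique_init hD' (hI'I _ hz') hβ
              ((he.symm.trans hq1).trans hb0i))
          · rw [Set.mem_singleton_iff] at he
            exact hzα (unique_term hD' (hI'I _ hz') hα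
              ((he.symm.trans hq1).trans ha1t))
      have hqI : ∃ x ∈ I, q ∈ x.endpoints := by
        obtain ⟨z, hzJ, hze⟩ := hqJ
        rw [hJdef] at hzJ
        rcases Finset.mem_insert.1 hzJ with rfl | hz'
        · rcases Set.mem_insert_iff.1 hze with he | he
          · exact ⟨α, hα, Set.mem_insert_iff.2 (Or.inl (by rw [he, hMi]; exact ha0i))⟩
          · rw [Set.mem_singleton_iff] at he
            exact ⟨β, hβ, Set.mem_insert_iff.2 (Or.inr (Set.mem_singleton_iff.2
              (by rw [he, hMt]; exact hb1t)))⟩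
        · exact ⟨z, hI'I _ hz', hze⟩
      obtain ⟨hT1, hIn1, hInter⟩ := hiii q hqI
      rw [Nat.card_eq_one_iff_unique] at hT1 hIn1
      obtain ⟨⟨t, htI, htq⟩⟩ := hT1.2
      obtain ⟨⟨s, hsI, hsq⟩⟩ := hIn1.2
      have htuniq : ∀ x ∈ I, x.term = q → x = t := fun x hx h =>
        unique_term hD' hx htI (h.trans htq.symm)
      have hsuniq : ∀ x ∈ I, x.init = q → x = s := fun x hx h =>
        unique_init hD' hx hsI (h.trans hsq.symm)
      have htα : t ≠ α := by
        intro h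
        exact hqne (by rw [← htq, h, ← ha1t])
      have hsβ : s ≠ β := by
        intro h
        exact hqne (by rw [← hsq, h, ← hb0i])
      refine ⟨?_, ?_, ?_⟩
      · rw [Nat.card_eq_one_iff_unique]
        by_cases htβ : t = β
        · have hq1 : q = ((b1 : ℝ) : AddCircle c) := by rw [← htq, htβ, ← hb1t]
          have huniq : ∀ x, x ∈ J ∧ x.term = q → x = M := by
            rintro x ⟨hxJ, hxt⟩
            rw [hJdef] at hxJ
            rcases Finset.mem_insert.1 hxJ with rfl | hx'
            · rfl
            · exact absurd ((htuniq x (hI'I _ hx') hxt).trans htβ) (hI'ne x hx').2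
          exact ⟨⟨fun a b => Subtype.ext ((huniq _ a.2).trans (huniq _ b.2).symm)⟩,
            ⟨⟨M, hMJ, by rw [hMt, ← hq1]⟩⟩⟩
        · have htI' : t ∈ I' := by
            rw [hI'def]
            exact Finset.mem_erase.2 ⟨htβ, Finset.mem_erase.2 ⟨htα, htI⟩⟩
          have huniq : ∀ x, x ∈ J ∧ x.term = q → x = t := by
            rintro x ⟨hxJ, hxt⟩
            rw [hJdef] at hxJ
            rcases Finset.mem_insert.1 hxJ with rfl | hx'
            · have hβq : β.term = q := by rw [← hb1t, ← hMt]; exact hxt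
              exact absurd (htuniq β hβ hβq).symm htβ
            · exact htuniq x (hI'I _ hx') hxt
          exact ⟨⟨fun a b => Subtype.ext ((huniq _ a.2).trans (huniq _ b.2).symm)⟩,
            ⟨⟨t, hI'J t htI', htq⟩⟩⟩
      · rw [Nat.card_eq_one_iff_unique]
        by_cases hsα : s = α
        · have hq1 : q = ((a0 : ℝ) : AddCircle c) := by rw [← hsq, hsα, ← ha0i]
          have huniq : ∀ x, x ∈ J ∧ x.init = q → x = M := by
            rintro x ⟨hxJ, hxi⟩
            rw [hJdef] at hxJ
            rcases Finset.mem_insert.1 hxJ with rfl | hx'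
            · rfl
            · exact absurd ((hsuniq x (hI'I _ hx') hxi).trans hsα) (hI'ne x hx').1
          exact ⟨⟨fun a b => Subtype.ext ((huniq _ a.2).trans (huniq _ b.2).symm)⟩,
            ⟨⟨M, hMJ, by rw [hMi, ← hq1]⟩⟩⟩
        · have hsI' : s ∈ I' := by
            rw [hI'def]
            exact Finset.mem_erase.2 ⟨hsβ, Finset.mem_erase.2 ⟨hsα, hsI⟩⟩
          have huniq : ∀ x, x ∈ J ∧ x.init = q → x = s := by
            rintro x ⟨hxJ, hxi⟩
            rw [hJdef] at hxJ
            rcases Finset.mem_insert.1 hxJ with rfl | hx'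
            · have hαq : α.init = q := by rw [← ha0i, ← hMi]; exact hxi
              exact absurd (hsuniq α hα hαq).symm hsα
            · exact hsuniq x (hI'I _ hx') hxi
          exact ⟨⟨fun a b => Subtype.ext ((huniq _ a.2).trans (huniq _ b.2).symm)⟩,
            ⟨⟨s, hI'J s hsI', hsq⟩⟩⟩
      · intro x hxJ y hyJ hxt hyi
        rw [hJdef] at hxJ hyJ
        rcases Finset.mem_insert.1 hxJ with rfl | hx'
        · have hqb1 : q = ((b1 : ℝ) : AddCircle c) := (hMt.symm.trans hxt).symm
          rcases Finset.mem_insert.1 hyJ with rfl | hy'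
          · exact absurd ((hMi.symm.trans hyi).trans hqb1) n02
          · have hyI := hI'I _ hy'
            have hyw : 0 < y.width := y.width_pos
            obtain ⟨hyset, hybound⟩ := wrap_bound_init hc (hi γ hγ y hyI)
              (hqb1.symm.trans hyi.symm) (by linarith) hb1g
            rw [hMset, hyset,
              img_inter_pt hc (by linarith : a0 ≤ b1)
                (by linarith : b1 ≤ b1 + y.width)
                (by linarith : b1 + y.width - a0 < c), hqb1]
        · have hxI := hI'I _ hx'
          rcases Finset.mem_insert.1 hyJ with rfl | hy'
          · have hqa0 : q = ((a0 : ℝ) : AddCircle c) := (hMi.symm.trans hyi).symm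
            have hxw : 0 < x.width := x.width_pos
            obtain ⟨hxset, hxbound⟩ := wrap_bound_term hc (hi γ hγ x hxI)
              (hqa0.symm.trans hxt.symm) hga0 (by linarith)
            rw [hxset, hMset,
              img_inter_pt hc (by linarith : a0 - x.width ≤ a0)
                (by linarith : a0 ≤ b1)
                (by linarith : b1 - (a0 - x.width) < c), hqa0]
          · exact hInter x hxI y (hI'I _ hy') hxt hyi
  -- area comparison
  have hbool : ∀ x ∈ I', W x M ≤ W x α + W x β := by
    intro x hx
    have hxI := hI'I x hx
    obtain ⟨hxα, hxβ⟩ := hI'ne x hx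
    have hxM : x ≠ M := fun h => hMI (h ▸ hxI)
    have huα : x.toSet ∪ α.toSet ≠ Set.univ :=
      ne_univ_mono (Set.union_subset_union subset_rfl hsubα) (hi x hxI γ hγ)
    have huβ : x.toSet ∪ β.toSet ≠ Set.univ :=
      ne_univ_mono (Set.union_subset_union subset_rfl hsubβ) (hi x hxI γ hγ)
    have huM : x.toSet ∪ M.toSet ≠ Set.univ :=
      ne_univ_mono (Set.union_subset_union subset_rfl hMγ) (hi x hxI γ hγ)
    have hshαx : x.SharesEndpoint α ↔ (x.term = ((a0 : ℝ) : AddCircle c)) := by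
      rw [shares_iff]
      constructor
      · rintro (h | h | h | h)
        · exact absurd (unique_init hD' hxI hα h) hxα
        · exact absurd (unique_init hD' hxI hβ (by rw [h, hat])) hxβ
        · rw [h, ← ha0i]
        · exact absurd (unique_term hD' hxI hα h) hxα
      · intro h
        exact Or.inr (Or.inr (Or.inl (by rw [h, ← ha0i])))
    have hshβx : x.SharesEndpoint β ↔ (x.init = ((b1 : ℝ) : AddCircle c)) := by
      rw [shares_iff]
      constructor
      · rintro (h | h | h | h)
        · exact absurd (unique_init hD' hxI hβ h) hxβ
        · rw [h, ← hb1t]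
        · exact absurd (unique_term hD' hxI hα (by rw [h, ← hat])) hxα
        · exact absurd (unique_term hD' hxI hβ h) hxβ
      · intro h
        exact Or.inr (Or.inl (by rw [h, ← hb1t]))
    have hshMx : x.SharesEndpoint M ↔
        (x.term = ((a0 : ℝ) : AddCircle c) ∨ x.init = ((b1 : ℝ) : AddCircle c)) := by
      rw [shares_iff]
      constructor
      · rintro (h | h | h | h)
        · rw [hMi] at h
          exact absurd (unique_init hD' hxI hα (h.trans ha0i)) hxα
        · rw [hMt] at h
          exact Or.inr h
        · rw [hMi] at h
          exact Or.inl h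
        · rw [hMt] at h
          exact absurd (unique_term hD' hxI hβ (h.trans hb1t)) hxβ
      · rintro (h | h)
        · exact Or.inr (Or.inr (Or.inl (by rw [h]; exact hMi.symm)))
        · exact Or.inr (Or.inl (by rw [h]; exact hMt.symm))
    have hWxα : W x α = cif (¬(x.term = ((a0 : ℝ) : AddCircle c)) ∧
        Xor' (x.init ∈ α.toSet) (x.term ∈ α.toSet)) 2 0 +
        cif (x.term = ((a0 : ℝ) : AddCircle c)) 1 0 :=
      W_eq_cif hc huα hxα hshαx
    have hWxβ : W x β = cif (¬(x.init = ((b1 : ℝ) : AddCircle c)) ∧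
        Xor' (x.init ∈ β.toSet) (x.term ∈ β.toSet)) 2 0 +
        cif (x.init = ((b1 : ℝ) : AddCircle c)) 1 0 :=
      W_eq_cif hc huβ hxβ hshβx
    have hWxM : W x M = cif (¬(x.term = ((a0 : ℝ) : AddCircle c) ∨
        x.init = ((b1 : ℝ) : AddCircle c)) ∧
        Xor' (x.init ∈ M.toSet) (x.term ∈ M.toSet)) 2 0 +
        cif (x.term = ((a0 : ℝ) : AddCircle c) ∨ x.init = ((b1 : ℝ) : AddCircle c)) 1 0 :=
      W_eq_cif hc huM hxM hshMx
    rw [hWxα, hWxβ, hWxM]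
    refine boolKeyM (x.init ∈ α.toSet) (x.term ∈ α.toSet) (x.init ∈ β.toSet)
      (x.term ∈ β.toSet) (x.init ∈ M.toSet) (x.term ∈ M.toSet)
      (x.term = ((a0 : ℝ) : AddCircle c)) (x.init = ((b1 : ℝ) : AddCircle c))
      (by rw [hMαβ]; exact Set.mem_union _ _ _)
      (by rw [hMαβ]; exact Set.mem_union _ _ _)
      (fun h => ⟨by rw [h]; exact ha0α, by rw [h]; exact ha0β⟩)
      (fun h => ⟨by rw [h]; exact hb1β, by rw [h]; exact hb1α⟩)
      ?_ ?_
    · rintro ⟨h1, h2⟩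
      have hm : x.init ∈ α.toSet ∩ β.toSet := ⟨h1, h2⟩
      rw [hαβinter] at hm
      exact hxβ (unique_init hD' hxI hβ (hm.trans hb0i))
    · rintro ⟨h1, h2⟩
      have hm : x.term ∈ α.toSet ∩ β.toSet := ⟨h1, h2⟩
      rw [hαβinter] at hm
      exact hxα (unique_term hD' hxI hα (by rw [hm, ← ha1t]))
  have hWαβ1 : 1 ≤ W α β := by
    unfold W
    rw [if_pos (show α ≠ β ∧ α.SharesEndpoint β from ⟨hαβ, hshαβ⟩)]
    omega
  have hsumJ := sum2_insert1 I' M hMI' W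
  have hsumI := sum2_insert2 I' α β hαI' hβI' hαβ W
  have hterms : ∀ x ∈ I', W x M + W M x ≤ W x α + W x β + (W α x + W β x) := by
    intro x hx
    have h1 := hbool x hx
    rw [W_symm M x, W_symm α x, W_symm β x]
    omega
  have hsums : ∑ x ∈ I', (W x M + W M x)
      ≤ ∑ x ∈ I', (W x α + W x β + (W α x + W β x)) := Finset.sum_le_sum hterms
  have hsums' : ∑ x ∈ I', (W x α + W x β + (W α x + W β x))
      = ∑ x ∈ I', (W x α + W x β + W α x + W β x) := by
    refine Finset.sum_congr rfl fun x _ => ?_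
    omega
  have hkey : (∑ x ∈ J, ∑ y ∈ J, W x y) + 2 ≤ ∑ x ∈ I, ∑ y ∈ I, W x y := by
    rw [hIdecomp, hJdef, hsumJ, hsumI]
    rw [hsums'] at hsums
    rw [W_self, W_self, W_self]
    have hWβα : W β α = W α β := W_symm β α
    omega
  have harea : diskArea J + 1 / 2 ≤ diskArea I := by
    rw [diskArea_eq J, diskArea_eq I]
    have hcast : ((∑ x ∈ J, ∑ y ∈ J, W x y : ℕ) : ℝ) + 2 ≤
        ((∑ x ∈ I, ∑ y ∈ I, W x y : ℕ) : ℝ) := by exact_mod_cast hkey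
    linarith
  have hge := hminle c J hJdisk
  linarith

end DPF

end Chunk8

attribute [local instance] Classical.propDecidable

/-- **Lemma 7.1 of the paper**: in an area-minimal `r`-disk family, there do not exist
three distinct arcs `γ, α, β` of the family such that `α` and `β` are both contained in
`γ` and such that `α` and `β` either cross or share an endpoint. -/
theorem no_arc_covers_two_intersecting_arcs (r : ℕ) (hr : 0 < r) {c : ℝ}
    (I : Finset (Arc c)) (hI : IsAreaMinimal r I) :
    ¬ ∃ γ ∈ I, ∃ α ∈ I, ∃ β ∈ I, γ ≠ α ∧ γ ≠ β ∧ α ≠ β ∧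
        α.toSet ⊆ γ.toSet ∧ β.toSet ⊆ γ.toSet ∧
        (α.Crosses β ∨ α.SharesEndpoint β) := by
  rintro ⟨γ, hγ, α, hα, β, hβ, hγα, hγβ, hαβ, hsα, hsβ, hint⟩
  have hD' := hI.1
  obtain ⟨hc, hi, hii, hiii⟩ := hI.1
  rcases hint with hcr | hsh
  · have hns := hcr.1
    have hγne : γ.toSet ≠ Set.univ := by
      have h := hi γ hγ γ hγ
      rwa [Set.union_self] at h
    have hu : α.toSet ∪ β.toSet ≠ Set.univ :=
      DPF.ne_univ_mono (Set.union_subset hsα hsβ) hγne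
    obtain ⟨-, hxor⟩ := (DPF.crosses_iff hc hu).1 hcr
    rcases hxor with ⟨h1, h2⟩ | ⟨h1, h2⟩
    · exact DPF.keyCross hI hγ hβ hα hγβ hγα hαβ.symm hsβ hsα
        (DPF.crosses_comm.1 hcr) h1 h2
    · have hxor2 : Xor' (β.init ∈ α.toSet) (β.term ∈ α.toSet) :=
        (DPF.xor_symm hc hu hns).2 (Or.inr ⟨h1, h2⟩)
      rcases hxor2 with ⟨g1, g2⟩ | ⟨g1, g2⟩
      · exact DPF.keyCross hI hγ hα hβ hγα hγβ hαβ hsα hsβ hcr g1 g2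
      · obtain ⟨a0, ha0i, ha1t, hαset, hga0, ha1g⟩ := DPF.subset_reps hc hsα
        obtain ⟨b0, hb0i, hb1t, hβset, hgb0, hb1g⟩ := DPF.subset_reps hc hsβ
        have hγw : γ.b - γ.a < c := γ.width_lt
        have hαw : 0 < α.width := α.width_pos
        have hβw : 0 < β.width := β.width_pos
        have hm1 : ((b0 + β.width : ℝ) : AddCircle c) ∈ DPF.img c a0 (a0 + α.width) := by
          rw [← hαset, hb1t]; exact g1
        obtain ⟨hx1, hx2⟩ := DPF.mem_img_window hc hga0 (by linarith) (by linarith)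
          (by linarith) hm1
        have hm2 : ((a0 + α.width : ℝ) : AddCircle c) ∈ DPF.img c b0 (b0 + β.width) := by
          rw [← hβset, ha1t]; exact h1
        obtain ⟨hy1, hy2⟩ := DPF.mem_img_window hc hgb0 (by linarith) (by linarith)
          (by linarith) hm2
        exact hns (DPF.shares_iff.2 (Or.inr (Or.inr (Or.inr
          (by rw [← ha1t, ← hb1t, le_antisymm hy2 hx2])))))
  · rcases DPF.shares_iff.1 hsh with h | h | h | h
    · exact hαβ (DPF.unique_init hD' hα hβ h)
    · exact DPF.keyAdj hI hγ hβ hα hγβ hγα hαβ.symm hsβ hsα (DPF.shares_comm.1 hsh) h.symm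
    · exact DPF.keyAdj hI hγ hα hβ hγα hγβ hαβ hsα hsβ hsh h
    · exact hαβ (DPF.unique_term hD' hα hβ h)

end
end
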